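/- arXiv:1311.7252 — 3 statements merged into one kernel-verified Lean document; each statement's English description precedes it below -/
import Mathlib

section
/- Let G be a finite group, τ an involutory anti-automorphism of G, and ρ a finite-dimensional complex representation of G with decomposition into irreducibles ρ = ρ₁ ⊕ ⋯ ⊕ ρ_n (the summands need not be pairwise inequivalent). Then dim Hom_G^Skew(ρ^τ, ρ) = 0 if and only if for every j ∈ {1,…,n} one of the following holds: (i) C_τ(ρ_j) = 1 and ρ_j is not equivalent to ρ_k for all k ≠ j; or (ii) C_τ(ρ_j) = 0 and ρ_j^τ is not equivalent to ρ_k for all k ≠ j. -/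
open Module

namespace CST

variable {G : Type*} [Group G]

/-- The `τ`-conjugate representation `ρ^τ` on the dual space, `ρ^τ(g) = ρ(τ(g))^T`. -/
def tauConj {k V : Type*} [CommRing k] [AddCommGroup V] [Module k V]
    (ρ : Representation k G V) (τ : G → G)
    (hmul : ∀ a b : G, τ (a * b) = τ b * τ a) :
    Representation k G (Module.Dual k V) where
  toFun g := (ρ (τ g)).dualMap
  map_one' := by
    have h0 : τ 1 = τ 1 * τ 1 := by simpa using hmul 1 1
    have h2 : τ 1 * 1 = τ 1 * τ 1 := by rw [mul_one]; exact h0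
    have h1 : τ 1 = 1 := (mul_left_cancel h2).symm
    ext φ v
    simp [h1]
  map_mul' g h := by
    ext φ v
    simp [hmul, LinearMap.dualMap_apply, Module.End.mul_apply, map_mul]

/-- The space of intertwining operators between two representations. -/
def repHom {k V W : Type*} [CommRing k] [AddCommGroup V] [Module k V]
    [AddCommGroup W] [Module k W]
    (ρ : Representation k G V) (σ : Representation k G W) :
    Submodule k (V →ₗ[k] W) where
  carrier := {A | ∀ g : G, A ∘ₗ ρ g = σ g ∘ₗ A}
  zero_mem' := by intro g; ext v; simp
  add_mem' := by
    intro A B hA hB g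
    ext v
    have h1 := LinearMap.congr_fun (hA g) v
    have h2 := LinearMap.congr_fun (hB g) v
    simp only [LinearMap.comp_apply, LinearMap.add_apply] at *
    simp [h1, h2]
  smul_mem' := by
    intro c A hA g
    ext v
    have h1 := LinearMap.congr_fun (hA g) v
    simp only [LinearMap.comp_apply, LinearMap.smul_apply] at *
    simp [h1]

/-- Symmetric operators `A : V' → V` (identifying `V` with its bidual):
`φ(Aψ) = ψ(Aφ)`. -/
def symSub (k V : Type*) [CommRing k] [AddCommGroup V] [Module k V] :
    Submodule k (Module.Dual k V →ₗ[k] V) where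
  carrier := {A | ∀ φ ψ : Module.Dual k V, φ (A ψ) = ψ (A φ)}
  zero_mem' := by intro φ ψ; simp
  add_mem' := by
    intro A B hA hB φ ψ
    simp [hA φ ψ, hB φ ψ]
  smul_mem' := by
    intro c A hA φ ψ
    simp [hA φ ψ]

/-- Antisymmetric operators `A : V' → V`: `φ(Aψ) = -ψ(Aφ)`. -/
def skewSub (k V : Type*) [CommRing k] [AddCommGroup V] [Module k V] :
    Submodule k (Module.Dual k V →ₗ[k] V) where
  carrier := {A | ∀ φ ψ : Module.Dual k V, φ (A ψ) = -ψ (A φ)}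
  zero_mem' := by intro φ ψ; simp
  add_mem' := by
    intro A B hA hB φ ψ
    simp [hA φ ψ, hB φ ψ]; ring
  smul_mem' := by
    intro c A hA φ ψ
    simp [hA φ ψ]

/-- The `τ`-Frobenius–Schur number
`C_τ(ρ) = dim Hom_G^Sym(ρ^τ, ρ) - dim Hom_G^Skew(ρ^τ, ρ)`. -/
noncomputable def FSnum {V : Type*} [AddCommGroup V] [Module ℂ V]
    (ρ : Representation ℂ G V) (τ : G → G)
    (hmul : ∀ a b : G, τ (a * b) = τ b * τ a) : ℤ :=
  (Module.finrank ℂ ↥(repHom (tauConj ρ τ hmul) ρ ⊓ symSub ℂ V) : ℤ)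
    - (Module.finrank ℂ ↥(repHom (tauConj ρ τ hmul) ρ ⊓ skewSub ℂ V) : ℤ)

/-- Equivalence of representations. -/
def RepEquiv {k V W : Type*} [CommRing k] [AddCommGroup V] [Module k V]
    [AddCommGroup W] [Module k W]
    (ρ : Representation k G V) (σ : Representation k G W) : Prop :=
  ∃ e : V ≃ₗ[k] W, ∀ (g : G) (v : V), e (ρ g v) = σ g (e v)

/-- Irreducibility of a representation. -/
def IsIrreducible {k V : Type*} [CommRing k] [AddCommGroup V] [Module k V]
    (ρ : Representation k G V) : Prop :=
  Nontrivial V ∧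
    ∀ U : Submodule k V, (∀ (g : G), ∀ v ∈ U, ρ g v ∈ U) → U = ⊥ ∨ U = ⊤

/-- The subrepresentation on an invariant submodule. -/
def subRep {k V : Type*} [CommRing k] [AddCommGroup V] [Module k V]
    (ρ : Representation k G V) (U : Submodule k V)
    (hU : ∀ (g : G), ∀ v ∈ U, ρ g v ∈ U) : Representation k G U where
  toFun g := (ρ g).restrict (hU g)
  map_one' := by
    ext v
    simp [LinearMap.restrict_apply]
  map_mul' g h := by
    ext v
    simp [LinearMap.restrict_apply]

/-- A representation is multiplicity-free: in any decomposition into irreducible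
subrepresentations, the summands are pairwise non-equivalent. -/
def MultFree {k V : Type*} [CommRing k] [AddCommGroup V] [Module k V]
    (ρ : Representation k G V) : Prop :=
  ∀ (m : ℕ) (U : Fin m → Submodule k V)
    (hU : ∀ i, ∀ (g : G), ∀ v ∈ U i, ρ g v ∈ U i),
    DirectSum.IsInternal U →
    (∀ i, IsIrreducible (subRep ρ (U i) (hU i))) →
    ∀ i j, i ≠ j → ¬ RepEquiv (subRep ρ (U i) (hU i)) (subRep ρ (U j) (hU j))

/-- A representation of `G` is real if it admits a basis in which all matrix
coefficients are real valued. -/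
def IsRealRep {V : Type*} [AddCommGroup V] [Module ℂ V]
    (ρ : Representation ℂ G V) : Prop :=
  ∃ (n : ℕ) (b : Basis (Fin n) ℂ V),
    ∀ (g : G) (i j : Fin n), ((LinearMap.toMatrix b b (ρ g)) i j).im = 0

/-- Direct sum of two representations. -/
def prodRep {k V W : Type*} [CommRing k] [AddCommGroup V] [Module k V]
    [AddCommGroup W] [Module k W]
    (σ : Representation k G V) (ρ : Representation k G W) :
    Representation k G (V × W) where
  toFun g := (σ g).prodMap (ρ g)
  map_one' := by
    apply LinearMap.ext
    intro x
    simp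
  map_mul' g h := by
    apply LinearMap.ext
    intro x
    simp [Module.End.mul_apply]

/-- Induced representation carrier:
`Ind_K^G V = {F : G → V | F(gk) = σ(k⁻¹) F(g)}`. -/
def indCarrier {k V : Type*} [CommRing k] [AddCommGroup V] [Module k V]
    (K : Subgroup G) (σ : Representation k K V) : Submodule k (G → V) where
  carrier := {F | ∀ (g : G) (x : K), F (g * x) = σ x⁻¹ (F g)}
  zero_mem' := by intro g x; simp
  add_mem' := by intro F₁ F₂ h₁ h₂ g x; simp [h₁ g x, h₂ g x]
  smul_mem' := by intro c F h g x; simp [h g x]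

/-- The induced representation `Ind_K^G σ`, acting by `(g₀ · F)(g) = F(g₀⁻¹ g)`. -/
def indRep {k V : Type*} [CommRing k] [AddCommGroup V] [Module k V]
    (K : Subgroup G) (σ : Representation k K V) :
    Representation k G (indCarrier K σ) where
  toFun g₀ :=
    { toFun := fun F => ⟨fun g => F.1 (g₀⁻¹ * g), by
        intro g x
        have h := F.2 (g₀⁻¹ * g) x
        simpa [mul_assoc] using h⟩
      map_add' := fun F₁ F₂ => rfl
      map_smul' := fun c F => rfl }
  map_one' := by
    apply LinearMap.ext
    intro F
    apply Subtype.ext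
    funext g
    simp
  map_mul' g h := by
    apply LinearMap.ext
    intro F
    apply Subtype.ext
    funext x
    simp [mul_assoc, mul_inv_rev]

/-- The permutation representation of `G` on `L(X)`. -/
def permRep (G X : Type*) [Group G] [MulAction G X] :
    Representation ℂ G (X → ℂ) where
  toFun g :=
    { toFun := fun f x => f (g⁻¹ • x)
      map_add' := fun f₁ f₂ => rfl
      map_smul' := fun c f => rfl }
  map_one' := by
    ext f x
    simp
  map_mul' g h := by
    ext f x
    simp [mul_smul]

/-- The twisted action `(π^τ × π)(g)(x₁,x₂) = (π(τ(g⁻¹)) x₁, π(g) x₂)` on `X × X`. -/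
def twistAct {X : Type*} [MulAction G X] (τ : G → G) (g : G) (p : X × X) :
    X × X := (τ g⁻¹ • p.1, g • p.2)

/-- Orbits of the twisted action on `X × X`. -/
def IsTwistOrbit {X : Type*} [MulAction G X] (τ : G → G)
    (O : Set (X × X)) : Prop :=
  ∃ p : X × X, O = {q | ∃ g : G, q = twistAct τ g p}

/-- Orbits of the diagonal action of `G` on `X × X`. -/
def IsDiagOrbit (G : Type*) {X : Type*} [Group G] [MulAction G X]
    (O : Set (X × X)) : Prop :=
  ∃ p : X × X, O = {q | ∃ g : G, q = (g • p.1, g • p.2)}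

/-- `G` is `τ`-simply reducible: the tensor product of any two irreducible
representations is multiplicity-free, and every irreducible representation is
equivalent to its `τ`-conjugate. -/
def TauSimplyReducible (G : Type*) [Group G] (τ : G → G)
    (hmul : ∀ a b : G, τ (a * b) = τ b * τ a) : Prop :=
  (∀ (V W : Type) [AddCommGroup V] [Module ℂ V] [FiniteDimensional ℂ V]
      [AddCommGroup W] [Module ℂ W] [FiniteDimensional ℂ W]
      (ρ₁ : Representation ℂ G V) (ρ₂ : Representation ℂ G W),
      IsIrreducible ρ₁ → IsIrreducible ρ₂ → MultFree (ρ₁.tprod ρ₂)) ∧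
  (∀ (V : Type) [AddCommGroup V] [Module ℂ V] [FiniteDimensional ℂ V]
      (ρ : Representation ℂ G V), IsIrreducible ρ → RepEquiv (tauConj ρ τ hmul) ρ)

/-- The double coset of `s` with respect to the diagonal subgroup of `G × G × G`. -/
def diagCoset3 (G : Type*) [Group G] (s : G × G × G) : Set (G × G × G) :=
  {x | ∃ a b : G, x = (a, a, a) * s * (b, b, b)}

/-- The character of a representation. -/
noncomputable def repChar {V : Type*} [AddCommGroup V] [Module ℂ V]
    (σ : Representation ℂ G V) (g : G) : ℂ :=
  LinearMap.trace ℂ V (σ g)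

end CST

section Aux

open CST Module

namespace CSTAux

variable {G : Type*} [Group G]

section Transpose

variable {V W X : Type*} [AddCommGroup V] [Module ℂ V] [AddCommGroup W] [Module ℂ W]

lemma dual_inj {v w : V} (h : ∀ φ : Dual ℂ V, φ v = φ w) : v = w := by
  rw [← sub_eq_zero]
  apply (Module.forall_dual_apply_eq_zero_iff ℂ (v - w)).mp
  intro φ
  rw [map_sub, h, sub_self]

/-- The transpose of a map `Dual V → W`, as a map `Dual W → V`. -/
noncomputable def trL [FiniteDimensional ℂ V] (B : Dual ℂ V →ₗ[ℂ] W) :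
    Dual ℂ W →ₗ[ℂ] V :=
  ((Module.evalEquiv ℂ V).symm.toLinearMap).comp B.dualMap

lemma trL_pair [FiniteDimensional ℂ V] (B : Dual ℂ V →ₗ[ℂ] W)
    (φ : Dual ℂ V) (ψ : Dual ℂ W) : φ (trL B ψ) = ψ (B φ) := by
  simp [trL]

lemma trL_eq [FiniteDimensional ℂ V] {B : Dual ℂ V →ₗ[ℂ] W} {C : Dual ℂ W →ₗ[ℂ] V}
    (h : ∀ (φ : Dual ℂ V) (ψ : Dual ℂ W), φ (C ψ) = ψ (B φ)) : trL B = C := by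
  ext ψ
  exact dual_inj fun φ => by rw [trL_pair, h]

lemma trL_trL [FiniteDimensional ℂ V] [FiniteDimensional ℂ W] (B : Dual ℂ V →ₗ[ℂ] W) :
    trL (trL B) = B :=
  trL_eq fun φ ψ => (trL_pair B ψ φ).symm

lemma trL_smul [FiniteDimensional ℂ V] (c : ℂ) (B : Dual ℂ V →ₗ[ℂ] W) :
    trL (c • B) = c • trL B :=
  trL_eq fun φ ψ => by
    simp only [LinearMap.smul_apply, map_smul, smul_eq_mul]
    rw [trL_pair]

lemma trL_neg [FiniteDimensional ℂ V] (B : Dual ℂ V →ₗ[ℂ] W) :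
    trL (-B) = - trL B :=
  trL_eq fun φ ψ => by
    simp only [LinearMap.neg_apply, map_neg]
    rw [trL_pair]

lemma trL_sub [FiniteDimensional ℂ V] (B B' : Dual ℂ V →ₗ[ℂ] W) :
    trL (B - B') = trL B - trL B' :=
  trL_eq fun φ ψ => by
    simp only [LinearMap.sub_apply, map_sub]
    rw [trL_pair, trL_pair]

end Transpose

section Membership

variable {V W : Type*} [AddCommGroup V] [Module ℂ V] [AddCommGroup W] [Module ℂ W]

lemma mem_repHom {ρ : Representation ℂ G V} {σ : Representation ℂ G W} {A : V →ₗ[ℂ] W} :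
    A ∈ repHom ρ σ ↔ ∀ g : G, A ∘ₗ ρ g = σ g ∘ₗ A := Iff.rfl

lemma repHom_apply {ρ : Representation ℂ G V} {σ : Representation ℂ G W} {A : V →ₗ[ℂ] W}
    (hA : A ∈ repHom ρ σ) (g : G) (v : V) : A (ρ g v) = σ g (A v) :=
  LinearMap.congr_fun (hA g) v

lemma tauConj_apply (ρ : Representation ℂ G V) (τ : G → G)
    (hmul : ∀ a b : G, τ (a * b) = τ b * τ a) (g : G) (φ : Dual ℂ V) (v : V) :
    tauConj ρ τ hmul g φ v = φ (ρ (τ g) v) := rfl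

lemma mem_symSub_iff [FiniteDimensional ℂ V] {A : Dual ℂ V →ₗ[ℂ] V} :
    A ∈ symSub ℂ V ↔ trL A = A := by
  constructor
  · intro h
    exact trL_eq fun φ ψ => (h ψ φ).symm
  · intro h φ ψ
    rw [← h, trL_pair, h]

lemma mem_skewSub_iff [FiniteDimensional ℂ V] {A : Dual ℂ V →ₗ[ℂ] V} :
    A ∈ skewSub ℂ V ↔ trL A = -A := by
  constructor
  · intro h
    refine trL_eq fun φ ψ => ?_
    have := h ψ φ
    simp only [LinearMap.neg_apply, map_neg]
    rw [this]
  · intro h φ ψ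
    have : φ (trL A ψ) = ψ (A φ) := trL_pair A φ ψ
    rw [h] at this
    simp only [LinearMap.neg_apply, map_neg] at this
    rw [← this, neg_neg]

lemma trL_mem_repHom [FiniteDimensional ℂ V] [FiniteDimensional ℂ W]
    {τ : G → G} {hmul : ∀ a b : G, τ (a * b) = τ b * τ a} (hinv : ∀ g, τ (τ g) = g)
    {ρ₁ : Representation ℂ G V} {ρ₂ : Representation ℂ G W}
    {B : Dual ℂ V →ₗ[ℂ] W} (hB : B ∈ repHom (tauConj ρ₁ τ hmul) ρ₂) :
    trL B ∈ repHom (tauConj ρ₂ τ hmul) ρ₁ := by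
  intro g
  ext ψ
  refine dual_inj fun φ => ?_
  have h1 : φ (trL B (tauConj ρ₂ τ hmul g ψ)) = (tauConj ρ₂ τ hmul g ψ) (B φ) :=
    trL_pair B φ _
  have h2 : B (tauConj ρ₁ τ hmul (τ g) φ) = ρ₂ (τ g) (B φ) := repHom_apply hB (τ g) φ
  have h3 : (tauConj ρ₁ τ hmul (τ g) φ) (trL B ψ) = ψ (B (tauConj ρ₁ τ hmul (τ g) φ)) :=
    trL_pair B _ ψ
  calc φ ((trL B ∘ₗ tauConj ρ₂ τ hmul g) ψ)
      = (tauConj ρ₂ τ hmul g ψ) (B φ) := h1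
    _ = ψ (ρ₂ (τ g) (B φ)) := rfl
    _ = ψ (B (tauConj ρ₁ τ hmul (τ g) φ)) := by rw [h2]
    _ = (tauConj ρ₁ τ hmul (τ g) φ) (trL B ψ) := h3.symm
    _ = φ (ρ₁ (τ (τ g)) (trL B ψ)) := rfl
    _ = φ ((ρ₁ g ∘ₗ trL B) ψ) := by rw [hinv]; rfl

lemma symSub_inf_skewSub_eq_bot [FiniteDimensional ℂ V] :
    symSub ℂ V ⊓ skewSub ℂ V = ⊥ := by
  rw [eq_bot_iff]
  intro A hA
  rw [Submodule.mem_bot]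
  have h1 : trL A = A := mem_symSub_iff.mp hA.1
  have h2 : trL A = -A := mem_skewSub_iff.mp hA.2
  have h3 : A = -A := by
    calc A = trL A := h1.symm
      _ = -A := h2
  have h4 : (2 : ℂ) • A = 0 := by
    rw [two_smul]
    nth_rewrite 2 [h3]
    abel
  rcases smul_eq_zero.mp h4 with h | h
  · norm_num at h
  · exact h

end Membership

section Schur

variable {V W : Type*} [AddCommGroup V] [Module ℂ V] [AddCommGroup W] [Module ℂ W]
variable {ρ : Representation ℂ G V} {σ : Representation ℂ G W}

lemma schur_bijective (hρ : IsIrreducible ρ) (hσ : IsIrreducible σ)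
    {A : V →ₗ[ℂ] W} (hA : A ∈ repHom ρ σ) (h0 : A ≠ 0) : Function.Bijective A := by
  have hker : ∀ (g : G), ∀ v ∈ LinearMap.ker A, ρ g v ∈ LinearMap.ker A := by
    intro g v hv
    rw [LinearMap.mem_ker] at hv ⊢
    rw [repHom_apply hA, hv, map_zero]
  have hran : ∀ (g : G), ∀ w ∈ LinearMap.range A, σ g w ∈ LinearMap.range A := by
    rintro g w ⟨v, rfl⟩
    exact ⟨ρ g v, repHom_apply hA g v⟩
  rcases hρ.2 _ hker with h | h
  · rcases hσ.2 _ hran with h' | h'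
    · exact absurd (LinearMap.range_eq_bot.mp h') h0
    · exact ⟨LinearMap.ker_eq_bot.mp h, LinearMap.range_eq_top.mp h'⟩
  · exact absurd (LinearMap.ker_eq_top.mp h) h0

lemma schur_equiv (hρ : IsIrreducible ρ) (hσ : IsIrreducible σ)
    {A : V →ₗ[ℂ] W} (hA : A ∈ repHom ρ σ) (h0 : A ≠ 0) : RepEquiv ρ σ := by
  refine ⟨LinearEquiv.ofBijective A (schur_bijective hρ hσ hA h0), fun g v => ?_⟩
  exact repHom_apply hA g v

lemma id_mem_repHom : LinearMap.id ∈ repHom ρ ρ := fun g => by ext v; rfl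

lemma schur_scalar [FiniteDimensional ℂ V] (hρ : IsIrreducible ρ) (hσ : IsIrreducible σ)
    {A B : V →ₗ[ℂ] W} (hA : A ∈ repHom ρ σ) (hB : B ∈ repHom ρ σ) (hB0 : B ≠ 0) :
    ∃ c : ℂ, A = c • B := by
  haveI : Nontrivial V := hρ.1
  set e := LinearEquiv.ofBijective B (schur_bijective hρ hσ hB hB0) with he
  have hesymm : ∀ (g : G) (w : W), e.symm (σ g w) = ρ g (e.symm w) := by
    intro g w
    apply e.injective
    rw [e.apply_symm_apply]
    have : e (ρ g (e.symm w)) = σ g (e (e.symm w)) := repHom_apply hB g (e.symm w)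
    rw [this, e.apply_symm_apply]
  set C : V →ₗ[ℂ] V := e.symm.toLinearMap ∘ₗ A with hC
  have hCmem : C ∈ repHom ρ ρ := by
    intro g
    ext v
    show e.symm (A (ρ g v)) = ρ g (e.symm (A v))
    rw [repHom_apply hA, hesymm]
  obtain ⟨μ, hμ⟩ := Module.End.exists_eigenvalue (C : Module.End ℂ V)
  obtain ⟨x, hx⟩ := hμ.exists_hasEigenvector
  set D : V →ₗ[ℂ] V := C - μ • LinearMap.id with hD
  have hDmem : D ∈ repHom ρ ρ :=
    sub_mem hCmem (Submodule.smul_mem _ μ id_mem_repHom)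
  have hDker : ∀ (g : G), ∀ v ∈ LinearMap.ker D, ρ g v ∈ LinearMap.ker D := by
    intro g v hv
    rw [LinearMap.mem_ker] at hv ⊢
    rw [repHom_apply hDmem, hv, map_zero]
  have hxD : x ∈ LinearMap.ker D := by
    rw [LinearMap.mem_ker, hD]
    simp only [LinearMap.sub_apply, LinearMap.smul_apply, LinearMap.id_apply]
    rw [hx.apply_eq_smul, sub_self]
  have hDzero : D = 0 := by
    rcases hρ.2 _ hDker with h | h
    · exfalso
      rw [h, Submodule.mem_bot] at hxD
      exact hx.2 hxD
    · exact LinearMap.ker_eq_top.mp h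
  have hCid : C = μ • LinearMap.id := by
    have := sub_eq_zero.mp hDzero
    exact this
  refine ⟨μ, ?_⟩
  ext v
  have h1 : e.symm (A v) = μ • v := by
    have := LinearMap.congr_fun hCid v
    simpa [hC] using this
  have : A v = e (μ • v) := by rw [← h1, e.apply_symm_apply]
  rw [this]
  simp [he]

lemma repHom_eq_bot_of_not_equiv (hρ : IsIrreducible ρ) (hσ : IsIrreducible σ)
    (h : ¬ RepEquiv ρ σ) : repHom ρ σ = ⊥ := by
  rw [eq_bot_iff]
  intro A hA
  rw [Submodule.mem_bot]
  by_contra h0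
  exact h (schur_equiv hρ hσ hA h0)

lemma repHom_ne_bot_of_equiv (hnt : Nontrivial V) (h : RepEquiv ρ σ) :
    repHom ρ σ ≠ ⊥ := by
  obtain ⟨e, he⟩ := h
  have hmem : (e : V →ₗ[ℂ] W) ∈ repHom ρ σ := by
    intro g
    ext v
    exact he g v
  obtain ⟨x, hx⟩ := exists_ne (0 : V)
  intro hbot
  rw [eq_bot_iff] at hbot
  have := hbot hmem
  rw [Submodule.mem_bot] at this
  apply hx
  have hex : e x = 0 := by
    have h' := LinearMap.congr_fun this x
    simpa using h'
  simpa using e.map_eq_zero_iff.mp hex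

lemma finrank_repHom_le_one [FiniteDimensional ℂ V] [FiniteDimensional ℂ W]
    (hρ : IsIrreducible ρ) (hσ : IsIrreducible σ) :
    finrank ℂ (repHom ρ σ) ≤ 1 := by
  by_cases h : repHom ρ σ = ⊥
  · rw [h, finrank_bot]
    norm_num
  · obtain ⟨B, hB, hB0⟩ := Submodule.ne_bot_iff _ |>.mp h
    have hle : repHom ρ σ ≤ ℂ ∙ B := by
      intro A hA
      obtain ⟨c, rfl⟩ := schur_scalar hρ hσ hA hB hB0
      exact Submodule.smul_mem _ _ (Submodule.mem_span_singleton_self B)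
    calc finrank ℂ (repHom ρ σ) ≤ finrank ℂ (ℂ ∙ B) := Submodule.finrank_mono hle
      _ = 1 := finrank_span_singleton hB0

lemma RepEquiv.symm' (h : RepEquiv ρ σ) : RepEquiv σ ρ := by
  obtain ⟨e, he⟩ := h
  refine ⟨e.symm, fun g w => ?_⟩
  apply e.injective
  rw [e.apply_symm_apply, he, e.apply_symm_apply]

lemma RepEquiv.trans' {X : Type*} [AddCommGroup X] [Module ℂ X]
    {π : Representation ℂ G X} (h1 : RepEquiv ρ σ) (h2 : RepEquiv σ π) :
    RepEquiv ρ π := by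
  obtain ⟨e, he⟩ := h1
  obtain ⟨f, hf⟩ := h2
  exact ⟨e.trans f, fun g v => by simp [LinearEquiv.trans_apply, he, hf]⟩

lemma dual_nontrivial [FiniteDimensional ℂ V] (hnt : Nontrivial V) :
    Nontrivial (Dual ℂ V) := by
  haveI := hnt
  have h1 : 0 < finrank ℂ V := finrank_pos
  exact Module.nontrivial_of_finrank_pos (R := ℂ)
    (by rw [Subspace.dual_finrank_eq]; exact h1)

lemma tauConj_irreducible [FiniteDimensional ℂ V]
    {τ : G → G} {hmul : ∀ a b : G, τ (a * b) = τ b * τ a} (hinv : ∀ g, τ (τ g) = g)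
    (h : IsIrreducible ρ) : IsIrreducible (tauConj ρ τ hmul) := by
  obtain ⟨hnt, hsub⟩ := h
  refine ⟨dual_nontrivial hnt, ?_⟩
  intro Wsub hW
  have hco : ∀ (g : G), ∀ v ∈ Wsub.dualCoannihilator, ρ g v ∈ Wsub.dualCoannihilator := by
    intro g v hv
    rw [Submodule.mem_dualCoannihilator] at hv ⊢
    intro φ hφ
    have hmem : tauConj ρ τ hmul (τ g) φ ∈ Wsub := hW (τ g) φ hφ
    have := hv _ hmem
    rw [tauConj_apply, hinv] at this
    exact this
  rcases hsub _ hco with h | h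
  · right
    have hfr := Subspace.finrank_add_finrank_dualCoannihilator_eq Wsub
    rw [h, finrank_bot, add_zero] at hfr
    apply Submodule.eq_top_of_finrank_eq
    rw [hfr, Subspace.dual_finrank_eq]
  · left
    rw [eq_bot_iff]
    intro φ hφ
    rw [Submodule.mem_bot]
    ext v
    have hv : v ∈ Wsub.dualCoannihilator := by rw [h]; trivial
    rw [Submodule.mem_dualCoannihilator] at hv
    exact hv φ hφ

end Schur

section Diag

variable {W : Type*} [AddCommGroup W] [Module ℂ W] [FiniteDimensional ℂ W]
variable {τ : G → G} {hmul : ∀ a b : G, τ (a * b) = τ b * τ a}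
variable {σ : Representation ℂ G W}

lemma diag_sum_le_one (hinv : ∀ g, τ (τ g) = g) (hσ : IsIrreducible σ) :
    finrank ℂ ↥(repHom (tauConj σ τ hmul) σ ⊓ symSub ℂ W) +
      finrank ℂ ↥(repHom (tauConj σ τ hmul) σ ⊓ skewSub ℂ W) ≤ 1 := by
  have hH1 : finrank ℂ ↥(repHom (tauConj σ τ hmul) σ) ≤ 1 :=
    finrank_repHom_le_one (tauConj_irreducible hinv hσ) hσ
  set Hm := repHom (tauConj σ τ hmul) σ with hHm
  set X := Hm ⊓ symSub ℂ W with hX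
  set Y := Hm ⊓ skewSub ℂ W with hY
  have hXY : X ⊓ Y = ⊥ := by
    rw [eq_bot_iff]
    intro A hA
    have h2 : A ∈ symSub ℂ W ⊓ skewSub ℂ W := ⟨hA.1.2, hA.2.2⟩
    rw [symSub_inf_skewSub_eq_bot] at h2
    exact h2
  have hsum := Submodule.finrank_sup_add_finrank_inf_eq X Y
  rw [hXY, finrank_bot, add_zero] at hsum
  rw [← hsum]
  calc finrank ℂ ↥(X ⊔ Y) ≤ finrank ℂ ↥Hm :=
        Submodule.finrank_mono (sup_le inf_le_left inf_le_left)
    _ ≤ 1 := hH1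

lemma FSnum_skew_bot (hinv : ∀ g, τ (τ g) = g) (hσ : IsIrreducible σ)
    (hskew : repHom (tauConj σ τ hmul) σ ⊓ skewSub ℂ W = ⊥) :
    (FSnum σ τ hmul = 1 ∧ RepEquiv (tauConj σ τ hmul) σ) ∨
      (FSnum σ τ hmul = 0 ∧ repHom (tauConj σ τ hmul) σ = ⊥) := by
  by_cases hbot : repHom (tauConj σ τ hmul) σ = ⊥
  · right
    refine ⟨?_, hbot⟩
    have h1 : repHom (tauConj σ τ hmul) σ ⊓ symSub ℂ W = ⊥ := by
      rw [hbot]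
      exact bot_inf_eq _
    unfold FSnum
    rw [h1, hskew, finrank_bot]
    norm_num
  · left
    obtain ⟨B, hB, hB0⟩ := Submodule.ne_bot_iff _ |>.mp hbot
    have htr : trL B ∈ repHom (tauConj σ τ hmul) σ := trL_mem_repHom hinv hB
    obtain ⟨c, hc⟩ := schur_scalar (tauConj_irreducible hinv hσ) hσ htr hB hB0
    have hcc : B = (c * c) • B := by
      have h2 := trL_trL B
      rw [hc, trL_smul, hc, smul_smul] at h2
      exact h2.symm
    have hc2 : c = 1 ∨ c = -1 := by
      apply mul_self_eq_one_iff.mp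
      by_contra hne
      have h3 : (c * c - 1) • B = 0 := by
        rw [sub_smul, one_smul, ← hcc, sub_self]
      rcases smul_eq_zero.mp h3 with h | h
      · exact hne (by linear_combination h)
      · exact hB0 h
    rcases hc2 with h1 | h1
    · have hBsym : B ∈ symSub ℂ W := mem_symSub_iff.mpr (by rw [hc, h1, one_smul])
      have hXmem : B ∈ repHom (tauConj σ τ hmul) σ ⊓ symSub ℂ W := ⟨hB, hBsym⟩
      have hfx : finrank ℂ ↥(repHom (tauConj σ τ hmul) σ ⊓ symSub ℂ W) = 1 := by
        have hge : 1 ≤ finrank ℂ ↥(repHom (tauConj σ τ hmul) σ ⊓ symSub ℂ W) := by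
          have hle' : (ℂ ∙ B) ≤ repHom (tauConj σ τ hmul) σ ⊓ symSub ℂ W := by
            rw [Submodule.span_singleton_le_iff_mem]
            exact hXmem
          calc 1 = finrank ℂ ↥(ℂ ∙ B) := (finrank_span_singleton hB0).symm
            _ ≤ _ := Submodule.finrank_mono hle'
        have hle := diag_sum_le_one (hmul := hmul) (σ := σ) hinv hσ
        omega
      refine ⟨?_, schur_equiv (tauConj_irreducible hinv hσ) hσ hB hB0⟩
      unfold FSnum
      rw [hfx, hskew, finrank_bot]
      norm_num
    · exfalso
      have hBskew : B ∈ skewSub ℂ W := mem_skewSub_iff.mpr (by rw [hc, h1, neg_one_smul])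
      have hBm : B ∈ repHom (tauConj σ τ hmul) σ ⊓ skewSub ℂ W := ⟨hB, hBskew⟩
      rw [hskew, Submodule.mem_bot] at hBm
      exact hB0 hBm

lemma skew_bot_of_FSnum (hinv : ∀ g, τ (τ g) = g) (hσ : IsIrreducible σ)
    (hFS : FSnum σ τ hmul = 1 ∨ FSnum σ τ hmul = 0) :
    repHom (tauConj σ τ hmul) σ ⊓ skewSub ℂ W = ⊥ := by
  have hle := diag_sum_le_one (hmul := hmul) (σ := σ) hinv hσ
  have h0 : finrank ℂ ↥(repHom (tauConj σ τ hmul) σ ⊓ skewSub ℂ W) = 0 := by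
    unfold FSnum at hFS
    rcases hFS with h | h <;> omega
  exact Submodule.finrank_eq_zero.mp h0

lemma FSnum_one_equiv (hinv : ∀ g, τ (τ g) = g) (hσ : IsIrreducible σ)
    (hFS : FSnum σ τ hmul = 1) : RepEquiv (tauConj σ τ hmul) σ := by
  have hskew := skew_bot_of_FSnum hinv hσ (Or.inl hFS)
  rcases FSnum_skew_bot hinv hσ hskew with h | h
  · exact h.2
  · exfalso
    have := h.1
    rw [hFS] at this
    norm_num at this

end Diag

section Decomp

variable {V : Type*} [AddCommGroup V] [Module ℂ V]
variable {n : ℕ} {U : Fin n → Submodule ℂ V}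

/-- Projection onto the `j`-th summand of an internal direct sum. -/
noncomputable def qMap (hint : DirectSum.IsInternal U) (j : Fin n) : V →ₗ[ℂ] U j :=
  (DirectSum.component ℂ (Fin n) (fun i => ↥(U i)) j) ∘ₗ
    (LinearEquiv.ofBijective (DirectSum.coeLinearMap U) hint).symm.toLinearMap

lemma qMap_same (hint : DirectSum.IsInternal U) (j : Fin n) (u : U j) :
    qMap hint j (u : V) = u :=
  hint.ofBijective_coeLinearMap_same u

lemma qMap_ne (hint : DirectSum.IsInternal U) {i j : Fin n} (h : i ≠ j) (u : U i) :
    qMap hint j (u : V) = 0 :=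
  hint.ofBijective_coeLinearMap_of_ne h u

lemma sum_qMap (hint : DirectSum.IsInternal U) (v : V) :
    ∑ j, ((qMap hint j v : V)) = v := by
  classical
  set e := LinearEquiv.ofBijective (DirectSum.coeLinearMap U) hint with he
  have h1 : ∑ j, DirectSum.of (fun i => ↥(U i)) j (e.symm v j) = e.symm v :=
    DirectSum.sum_univ_of (e.symm v)
  have h2 := congrArg e h1
  rw [map_sum, e.apply_symm_apply] at h2
  have h3 : ∀ j, e (DirectSum.of (fun i => ↥(U i)) j (e.symm v j)) = ((qMap hint j v : V)) := by
    intro j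
    show DirectSum.coeLinearMap U (DirectSum.of _ j _) = _
    rw [DirectSum.coeLinearMap_of]
    rfl
  rw [Finset.sum_congr rfl (fun j _ => h3 j)] at h2
  exact h2

variable {G : Type*} [Group G]

lemma qMap_comm (hint : DirectSum.IsInternal U) (ρ : Representation ℂ G V)
    (hU : ∀ j, ∀ (g : G), ∀ v ∈ U j, ρ g v ∈ U j) (j : Fin n) (g : G) (v : V) :
    ((qMap hint j (ρ g v) : V)) = ρ g ((qMap hint j v : V)) := by
  classical
  have hv : ρ g v = ∑ i, ρ g ((qMap hint i v : V)) := by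
    rw [← map_sum, sum_qMap]
  have hterm : ∀ i, qMap hint j (ρ g ((qMap hint i v : V))) =
      if i = j then ⟨ρ g ((qMap hint j v : V)), hU j g _ (qMap hint j v).2⟩ else 0 := by
    intro i
    by_cases hij : i = j
    · subst hij
      rw [if_pos rfl]
      exact qMap_same hint i ⟨_, hU i g _ (qMap hint i v).2⟩
    · rw [if_neg hij]
      exact qMap_ne hint hij ⟨_, hU i g _ (qMap hint i v).2⟩
  have h4 : qMap hint j (ρ g v) = ∑ i, qMap hint j (ρ g ((qMap hint i v : V))) := by
    rw [hv, map_sum]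
  rw [h4, Finset.sum_congr rfl (fun i _ => hterm i), Finset.sum_ite_eq' Finset.univ j]
  rw [if_pos (Finset.mem_univ j)]

lemma qMap_rep (hint : DirectSum.IsInternal U) (ρ : Representation ℂ G V)
    (hU : ∀ j, ∀ (g : G), ∀ v ∈ U j, ρ g v ∈ U j) (j : Fin n) (g : G) (v : V) :
    qMap hint j (ρ g v) = (subRep ρ (U j) (hU j)) g (qMap hint j v) :=
  Subtype.ext (qMap_comm hint ρ hU j g v)

/-- Extension of dual functionals along the projection. -/
noncomputable def eMap (hint : DirectSum.IsInternal U) (j : Fin n) :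
    Dual ℂ (U j) →ₗ[ℂ] Dual ℂ V := (qMap hint j).dualMap

/-- Restriction of dual functionals. -/
def rMap (U : Fin n → Submodule ℂ V) (j : Fin n) :
    Dual ℂ V →ₗ[ℂ] Dual ℂ (U j) := (U j).subtype.dualMap

lemma rMap_eMap (hint : DirectSum.IsInternal U) (j : Fin n) (ψ : Dual ℂ (U j)) :
    rMap U j (eMap hint j ψ) = ψ := by
  apply LinearMap.ext
  intro u
  show ψ (qMap hint j (u : V)) = ψ u
  rw [qMap_same]

lemma block_mem (hint : DirectSum.IsInternal U) (ρ : Representation ℂ G V)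
    (hU : ∀ j, ∀ (g : G), ∀ v ∈ U j, ρ g v ∈ U j)
    {τ : G → G} {hmul : ∀ a b : G, τ (a * b) = τ b * τ a}
    {A : Dual ℂ V →ₗ[ℂ] V} (hA : A ∈ repHom (tauConj ρ τ hmul) ρ) (j k : Fin n) :
    qMap hint j ∘ₗ A ∘ₗ eMap hint k ∈
      repHom (tauConj (subRep ρ (U k) (hU k)) τ hmul) (subRep ρ (U j) (hU j)) := by
  intro g
  apply LinearMap.ext
  intro ψ
  have h1 : eMap hint k (tauConj (subRep ρ (U k) (hU k)) τ hmul g ψ) =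
      tauConj ρ τ hmul g (eMap hint k ψ) := by
    apply LinearMap.ext
    intro v
    show ψ ((subRep ρ (U k) (hU k)) (τ g) (qMap hint k v)) = ψ (qMap hint k (ρ (τ g) v))
    rw [qMap_rep hint ρ hU k (τ g) v]
  show qMap hint j (A (eMap hint k (tauConj (subRep ρ (U k) (hU k)) τ hmul g ψ))) =
    (subRep ρ (U j) (hU j)) g (qMap hint j (A (eMap hint k ψ)))
  rw [h1, repHom_apply hA g, qMap_rep hint ρ hU j g]

lemma lift_mem (ρ : Representation ℂ G V)
    (hU : ∀ j, ∀ (g : G), ∀ v ∈ U j, ρ g v ∈ U j)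
    {τ : G → G} {hmul : ∀ a b : G, τ (a * b) = τ b * τ a} {j k : Fin n}
    {B : Dual ℂ (U k) →ₗ[ℂ] (U j)}
    (hB : B ∈ repHom (tauConj (subRep ρ (U k) (hU k)) τ hmul) (subRep ρ (U j) (hU j))) :
    (U j).subtype ∘ₗ B ∘ₗ rMap U k ∈ repHom (tauConj ρ τ hmul) ρ := by
  intro g
  apply LinearMap.ext
  intro φ
  have h1 : rMap U k (tauConj ρ τ hmul g φ) =
      tauConj (subRep ρ (U k) (hU k)) τ hmul g (rMap U k φ) := by
    apply LinearMap.ext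
    intro u
    rfl
  show ((B (rMap U k (tauConj ρ τ hmul g φ))) : V) = ρ g ((B (rMap U k φ)) : V)
  rw [h1, repHom_apply hB g]
  rfl

lemma reconstruct (hint : DirectSum.IsInternal U) (A : Dual ℂ V →ₗ[ℂ] V) :
    A = ∑ j, ∑ k, (U j).subtype ∘ₗ (qMap hint j ∘ₗ A ∘ₗ eMap hint k) ∘ₗ rMap U k := by
  apply LinearMap.ext
  intro φ
  have hφ : ∑ k, eMap hint k (rMap U k φ) = φ := by
    apply LinearMap.ext
    intro v
    rw [LinearMap.coe_sum, Finset.sum_apply]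
    have : ∀ k, eMap hint k (rMap U k φ) v = φ ((qMap hint k v : V)) := fun k => rfl
    rw [Finset.sum_congr rfl (fun k _ => this k), ← map_sum, sum_qMap]
  rw [LinearMap.sum_apply]
  have hrow : ∀ j, (∑ k, (U j).subtype ∘ₗ (qMap hint j ∘ₗ A ∘ₗ eMap hint k) ∘ₗ rMap U k) φ
      = ((qMap hint j (A φ) : V)) := by
    intro j
    rw [LinearMap.sum_apply]
    have h1 : ∀ k, ((U j).subtype ∘ₗ (qMap hint j ∘ₗ A ∘ₗ eMap hint k) ∘ₗ rMap U k) φ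
        = ((qMap hint j (A (eMap hint k (rMap U k φ))) : V)) := fun k => rfl
    rw [Finset.sum_congr rfl (fun k _ => h1 k)]
    have h2 : ∑ k, ((qMap hint j (A (eMap hint k (rMap U k φ))) : V))
        = ((qMap hint j (A (∑ k, eMap hint k (rMap U k φ))) : V)) := by
      rw [map_sum, map_sum]
      exact (Submodule.coe_sum _ _ _).symm
    rw [h2, hφ]
  rw [Finset.sum_congr rfl (fun j _ => hrow j), sum_qMap]

lemma extract_eq (hint : DirectSum.IsInternal U) {j k : Fin n}
    (B : Dual ℂ (U k) →ₗ[ℂ] (U j)) :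
    qMap hint j ∘ₗ ((U j).subtype ∘ₗ B ∘ₗ rMap U k) ∘ₗ eMap hint k = B := by
  apply LinearMap.ext
  intro ψ
  show qMap hint j ((B (rMap U k (eMap hint k ψ)) : V)) = B ψ
  rw [rMap_eMap, qMap_same]

lemma extract_zero (hint : DirectSum.IsInternal U) {i j k k' : Fin n} (hij : j ≠ i)
    (B : Dual ℂ (U k) →ₗ[ℂ] (U j)) :
    qMap hint i ∘ₗ ((U j).subtype ∘ₗ B ∘ₗ rMap U k) ∘ₗ eMap hint k' = 0 := by
  apply LinearMap.ext
  intro ψ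
  show qMap hint i ((B (rMap U k (eMap hint k' ψ)) : V)) = 0
  rw [qMap_ne hint hij]

lemma trL_lift [FiniteDimensional ℂ V] (hint : DirectSum.IsInternal U) {j k : Fin n}
    (B : Dual ℂ (U k) →ₗ[ℂ] (U j)) :
    trL ((U j).subtype ∘ₗ B ∘ₗ rMap U k) = (U k).subtype ∘ₗ trL B ∘ₗ rMap U j := by
  refine trL_eq fun φ ψ => ?_
  show φ ((trL B (rMap U j ψ) : V)) = ψ ((B (rMap U k φ) : V))
  have h1 : φ ((trL B (rMap U j ψ) : V)) = (rMap U k φ) (trL B (rMap U j ψ)) := rfl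
  rw [h1, trL_pair]
  rfl

lemma trL_block [FiniteDimensional ℂ V] (hint : DirectSum.IsInternal U)
    (A : Dual ℂ V →ₗ[ℂ] V) (j k : Fin n) :
    trL (qMap hint j ∘ₗ A ∘ₗ eMap hint k) = qMap hint k ∘ₗ trL A ∘ₗ eMap hint j := by
  refine trL_eq fun φ ψ => ?_
  show φ (qMap hint k (trL A (eMap hint j ψ))) = ψ (qMap hint j (A (eMap hint k φ)))
  have h1 : φ (qMap hint k (trL A (eMap hint j ψ))) =
      (eMap hint k φ) (trL A (eMap hint j ψ)) := rfl
  rw [h1, trL_pair]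
  rfl

end Decomp

end CSTAux

end Aux


open CST CSTAux in
/-- If `ρ = ρ₁ ⊕ ⋯ ⊕ ρ_n` is a decomposition into irreducibles, then
`dim Hom_G^Skew(ρ^τ, ρ) = 0` iff for every `j` either `C_τ(ρ_j) = 1` and `ρ_j ≁ ρ_k`
for all `k ≠ j`, or `C_τ(ρ_j) = 0` and `ρ_j^τ ≁ ρ_k` for all `k ≠ j`. -/
theorem skew_dim_zero_iff
    {G : Type*} [Group G] [Fintype G]
    {V : Type*} [AddCommGroup V] [Module ℂ V] [FiniteDimensional ℂ V]
    (τ : G → G) (hmul : ∀ a b : G, τ (a * b) = τ b * τ a)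
    (hinv : ∀ g : G, τ (τ g) = g)
    (ρ : Representation ℂ G V) (n : ℕ) (U : Fin n → Submodule ℂ V)
    (hU : ∀ j, ∀ (g : G), ∀ v ∈ U j, ρ g v ∈ U j)
    (hint : DirectSum.IsInternal U)
    (hirr : ∀ j, CST.IsIrreducible (CST.subRep ρ (U j) (hU j))) :
    Module.finrank ℂ
        ↥(CST.repHom (CST.tauConj ρ τ hmul) ρ ⊓ CST.skewSub ℂ V) = 0 ↔
      ∀ j,
        (CST.FSnum (CST.subRep ρ (U j) (hU j)) τ hmul = 1 ∧
          ∀ k, k ≠ j →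
            ¬ CST.RepEquiv (CST.subRep ρ (U j) (hU j)) (CST.subRep ρ (U k) (hU k))) ∨
        (CST.FSnum (CST.subRep ρ (U j) (hU j)) τ hmul = 0 ∧
          ∀ k, k ≠ j →
            ¬ CST.RepEquiv (CST.tauConj (CST.subRep ρ (U j) (hU j)) τ hmul)
                (CST.subRep ρ (U k) (hU k))) := by
  classical
  rw [Submodule.finrank_eq_zero]
  constructor
  · intro hbot j
    haveI hntj : Nontrivial ↥(U j) := (hirr j).1
    have hcross : ∀ k, k ≠ j →
        ¬ RepEquiv (tauConj (subRep ρ (U j) (hU j)) τ hmul) (subRep ρ (U k) (hU k)) := by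
      intro k hkj hEq
      have hnt : Nontrivial (Dual ℂ ↥(U j)) := dual_nontrivial (hirr j).1
      obtain ⟨B, hB, hB0⟩ := Submodule.ne_bot_iff _ |>.mp (repHom_ne_bot_of_equiv hnt hEq)
      have htrB := trL_mem_repHom hinv hB
      set A := (U k).subtype ∘ₗ B ∘ₗ rMap U j - (U j).subtype ∘ₗ trL B ∘ₗ rMap U k with hA
      have hAH : A ∈ repHom (tauConj ρ τ hmul) ρ :=
        sub_mem (lift_mem ρ hU hB) (lift_mem ρ hU htrB)
      have hAskew : trL A = -A := by
        rw [hA, trL_sub, trL_lift hint, trL_lift hint, trL_trL, neg_sub]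
      have hA0 : A = 0 := by
        have hm : A ∈ repHom (tauConj ρ τ hmul) ρ ⊓ skewSub ℂ V :=
          ⟨hAH, mem_skewSub_iff.mpr hAskew⟩
        rw [hbot, Submodule.mem_bot] at hm
        exact hm
      have hext : qMap hint k ∘ₗ A ∘ₗ eMap hint j = B := by
        rw [hA]
        have hsub : qMap hint k ∘ₗ
            ((U k).subtype ∘ₗ B ∘ₗ rMap U j - (U j).subtype ∘ₗ trL B ∘ₗ rMap U k) ∘ₗ eMap hint j
            = qMap hint k ∘ₗ ((U k).subtype ∘ₗ B ∘ₗ rMap U j) ∘ₗ eMap hint j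
              - qMap hint k ∘ₗ ((U j).subtype ∘ₗ trL B ∘ₗ rMap U k) ∘ₗ eMap hint j := by
          rw [LinearMap.sub_comp, LinearMap.comp_sub]
        rw [hsub, extract_eq hint, extract_zero hint (Ne.symm hkj), sub_zero]
      rw [hA0] at hext
      apply hB0
      rw [← hext]
      ext ψ
      simp
    have hskewj : repHom (tauConj (subRep ρ (U j) (hU j)) τ hmul) (subRep ρ (U j) (hU j))
        ⊓ skewSub ℂ ↥(U j) = ⊥ := by
      rw [eq_bot_iff]
      intro B hBm
      rw [Submodule.mem_bot]
      by_contra hB0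
      have hBH : B ∈ repHom (tauConj (subRep ρ (U j) (hU j)) τ hmul)
          (subRep ρ (U j) (hU j)) := hBm.1
      have hBskew : trL B = -B := mem_skewSub_iff.mp hBm.2
      set A := (U j).subtype ∘ₗ B ∘ₗ rMap U j with hA
      have hAH : A ∈ repHom (tauConj ρ τ hmul) ρ := lift_mem ρ hU hBH
      have hAskew : trL A = -A := by
        rw [hA, trL_lift hint, hBskew]
        ext φ
        simp
      have hA0 : A = 0 := by
        have hm : A ∈ repHom (tauConj ρ τ hmul) ρ ⊓ skewSub ℂ V :=
          ⟨hAH, mem_skewSub_iff.mpr hAskew⟩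
        rw [hbot, Submodule.mem_bot] at hm
        exact hm
      have hext := extract_eq hint (j := j) (k := j) B
      rw [← hA, hA0] at hext
      apply hB0
      rw [← hext]
      ext ψ
      simp
    rcases FSnum_skew_bot hinv (hirr j) hskewj with ⟨hFS, hEq⟩ | ⟨hFS, _⟩
    · left
      refine ⟨hFS, fun k hkj hEquiv => hcross k hkj ?_⟩
      exact RepEquiv.trans' hEq hEquiv
    · right
      exact ⟨hFS, hcross⟩
  · intro hcond
    rw [eq_bot_iff]
    intro A hA
    rw [Submodule.mem_bot]
    have hAH : A ∈ repHom (tauConj ρ τ hmul) ρ := hA.1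
    have hAskew : trL A = -A := mem_skewSub_iff.mp hA.2
    rw [reconstruct hint A]
    apply Finset.sum_eq_zero
    intro j _
    apply Finset.sum_eq_zero
    intro k _
    have hblock : qMap hint j ∘ₗ A ∘ₗ eMap hint k = 0 := by
      by_cases hjk : j = k
      · subst hjk
        have hmem : qMap hint j ∘ₗ A ∘ₗ eMap hint j ∈
            repHom (tauConj (subRep ρ (U j) (hU j)) τ hmul) (subRep ρ (U j) (hU j))
              ⊓ skewSub ℂ ↥(U j) := by
          refine ⟨block_mem hint ρ hU hAH j j, mem_skewSub_iff.mpr ?_⟩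
          rw [trL_block hint, hAskew]
          ext ψ
          simp
        have hFS : FSnum (subRep ρ (U j) (hU j)) τ hmul = 1 ∨
            FSnum (subRep ρ (U j) (hU j)) τ hmul = 0 := by
          rcases hcond j with ⟨h, _⟩ | ⟨h, _⟩
          · exact Or.inl h
          · exact Or.inr h
        rw [skew_bot_of_FSnum hinv (hirr j) hFS, Submodule.mem_bot] at hmem
        exact hmem
      · have hmem := block_mem hint ρ hU hAH j k
        have hnoteq : ¬ RepEquiv (tauConj (subRep ρ (U k) (hU k)) τ hmul)
            (subRep ρ (U j) (hU j)) := by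
          rcases hcond k with ⟨hFS, hne⟩ | ⟨hFS, hne⟩
          · intro hEq
            have hEqk := FSnum_one_equiv hinv (hirr k) hFS
            exact hne j hjk (RepEquiv.trans' (RepEquiv.symm' hEqk) hEq)
          · exact hne j hjk
        rw [repHom_eq_bot_of_not_equiv (tauConj_irreducible hinv (hirr k)) (hirr j) hnoteq,
          Submodule.mem_bot] at hmem
        exact hmem
    rw [hblock]
    ext φ
    simp
end

section
/- Let G be a finite group acting transitively on a finite set X via π : G → Sym(X), and let τ be an involutory anti-automorphism of G. Define the action π^τ by π^τ(g)x = π(τ(g⁻¹))x, and let G act on X × X by (π^τ × π)(g)(x₁,x₂) = (π^τ(g)x₁, π(g)x₂). Call an orbit of this action τ-symmetric if it is invariant under the flip (x₁,x₂) ↦ (x₂,x₁) and τ-antisymmetric otherwise, and let m₁ (resp. m₂) be the number of τ-symmetric (resp. τ-antisymmetric) orbits. Then dim Hom_G^Sym(λ_π^τ, λ_π) = m₁ + m₂/2 and dim Hom_G^Skew(λ_π^τ, λ_π) = m₂/2. -/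
open Module

namespace CSTAux

open CST Module

variable {G X : Type*} [Group G] [MulAction G X]

section TauFacts

variable (τ : G → G)

lemma tau_one (hmul : ∀ a b : G, τ (a * b) = τ b * τ a) : τ 1 = 1 := by
  have h0 : τ 1 = τ 1 * τ 1 := by simpa using hmul 1 1
  have h2 : τ 1 * 1 = τ 1 * τ 1 := by rw [mul_one]; exact h0
  exact (mul_left_cancel h2).symm

lemma tau_inv (hmul : ∀ a b : G, τ (a * b) = τ b * τ a) (g : G) :
    τ g⁻¹ = (τ g)⁻¹ := by
  have h : τ g⁻¹ * τ g = 1 := by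
    rw [← hmul]; simp [tau_one τ hmul]
  exact eq_inv_of_mul_eq_one_left h

lemma twist_one (hmul : ∀ a b : G, τ (a * b) = τ b * τ a) (p : X × X) :
    twistAct τ (1 : G) p = p := by
  simp [twistAct, tau_one τ hmul]

lemma twist_mul (hmul : ∀ a b : G, τ (a * b) = τ b * τ a) (g h : G) (p : X × X) :
    twistAct τ (g * h) p = twistAct τ g (twistAct τ h p) := by
  simp [twistAct, mul_inv_rev, hmul, mul_smul]

lemma swap_twist (hmul : ∀ a b : G, τ (a * b) = τ b * τ a)
    (hinv : ∀ g : G, τ (τ g) = g) (g : G) (p : X × X) :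
    Prod.swap (twistAct τ g p) = twistAct τ (τ g⁻¹) (Prod.swap p) := by
  have h1 : (τ g⁻¹)⁻¹ = τ g := by rw [← tau_inv τ hmul, inv_inv]
  show (g • p.2, τ g⁻¹ • p.1) = (τ (τ g⁻¹)⁻¹ • p.2, τ g⁻¹ • p.1)
  rw [h1, hinv]

/-- The setoid of orbits of the twisted action. -/
def tsetoid (hmul : ∀ a b : G, τ (a * b) = τ b * τ a) : Setoid (X × X) where
  r p q := ∃ g : G, q = twistAct τ g p
  iseqv :=
    { refl := fun p => ⟨1, (twist_one τ hmul p).symm⟩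
      symm := by
        rintro p q ⟨g, rfl⟩
        exact ⟨g⁻¹, by rw [← twist_mul τ hmul, inv_mul_cancel, twist_one τ hmul]⟩
      trans := by
        rintro p q r ⟨g, rfl⟩ ⟨h, rfl⟩
        exact ⟨h * g, (twist_mul τ hmul h g p).symm⟩ }

end TauFacts

section Orbits

variable (τ : G → G) (hmul : ∀ a b : G, τ (a * b) = τ b * τ a)
  (hinv : ∀ g : G, τ (τ g) = g)

/-- The involution induced by `Prod.swap` on the quotient. -/
def sbar : Quotient (tsetoid (X := X) τ hmul) → Quotient (tsetoid (X := X) τ hmul) :=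
  Quotient.lift (fun p => Quotient.mk (tsetoid τ hmul) p.swap)
    (fun p q hpq => Quotient.sound (by
      obtain ⟨g, rfl⟩ := hpq
      exact ⟨τ g⁻¹, swap_twist τ hmul hinv g p⟩))

lemma sbar_mk (p : X × X) :
    sbar τ hmul hinv (Quotient.mk (tsetoid τ hmul) p) =
      Quotient.mk (tsetoid τ hmul) p.swap := rfl

lemma sbar_sbar (c : Quotient (tsetoid (X := X) τ hmul)) :
    sbar τ hmul hinv (sbar τ hmul hinv c) = c := by
  induction c using Quotient.ind with
  | _ p => rw [sbar_mk, sbar_mk, Prod.swap_swap]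

/-- The orbit corresponding to a quotient class, as a fiber. -/
def orb (c : Quotient (tsetoid (X := X) τ hmul)) : Set (X × X) :=
  {q | Quotient.mk (tsetoid τ hmul) q = c}

lemma orb_inj : Function.Injective (orb (X := X) τ hmul) := by
  intro c d h
  obtain ⟨p, rfl⟩ := Quotient.exists_rep c
  have hp : p ∈ orb τ hmul (Quotient.mk (tsetoid τ hmul) p) := rfl
  rw [h] at hp
  exact hp

lemma orb_mk (p : X × X) :
    orb τ hmul (Quotient.mk (tsetoid τ hmul) p) = {q | ∃ g : G, q = twistAct τ g p} := by
  ext q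
  simp only [orb, Set.mem_setOf_eq]
  constructor
  · intro h
    exact (tsetoid τ hmul).iseqv.symm (Quotient.exact h)
  · intro h
    exact (Quotient.sound h).symm

lemma isTwistOrbit_iff (O : Set (X × X)) :
    IsTwistOrbit τ O ↔ ∃ c, O = orb (X := X) τ hmul c := by
  constructor
  · rintro ⟨p, rfl⟩
    exact ⟨Quotient.mk (tsetoid τ hmul) p, (orb_mk τ hmul p).symm⟩
  · rintro ⟨c, rfl⟩
    obtain ⟨p, rfl⟩ := Quotient.exists_rep c
    exact ⟨p, orb_mk τ hmul p⟩

lemma swap_orb (c : Quotient (tsetoid (X := X) τ hmul)) :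
    Prod.swap '' orb τ hmul c = orb τ hmul (sbar τ hmul hinv c) := by
  ext q
  simp only [Set.mem_image, orb, Set.mem_setOf_eq]
  constructor
  · rintro ⟨r, hr, rfl⟩
    rw [← hr, sbar_mk]
  · intro h
    refine ⟨q.swap, ?_, Prod.swap_swap q⟩
    have h2 := congrArg (sbar τ hmul hinv) h
    rw [sbar_mk, sbar_sbar] at h2
    exact h2

lemma set_sym_orbits :
    {O : Set (X × X) | IsTwistOrbit τ O ∧ Prod.swap '' O = O} =
      orb (X := X) τ hmul '' {c | sbar τ hmul hinv c = c} := by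
  ext O
  constructor
  · rintro ⟨hO, hsw⟩
    obtain ⟨c, rfl⟩ := (isTwistOrbit_iff τ hmul O).mp hO
    refine ⟨c, ?_, rfl⟩
    apply orb_inj τ hmul
    rw [← swap_orb τ hmul hinv]
    exact hsw
  · rintro ⟨c, hc, rfl⟩
    exact ⟨(isTwistOrbit_iff τ hmul _).mpr ⟨c, rfl⟩, by rw [swap_orb τ hmul hinv, hc]⟩

lemma set_skew_orbits :
    {O : Set (X × X) | IsTwistOrbit τ O ∧ Prod.swap '' O ≠ O} =
      orb (X := X) τ hmul '' {c | sbar τ hmul hinv c ≠ c} := by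
  ext O
  constructor
  · rintro ⟨hO, hsw⟩
    obtain ⟨c, rfl⟩ := (isTwistOrbit_iff τ hmul O).mp hO
    refine ⟨c, fun hc => hsw ?_, rfl⟩
    rw [swap_orb τ hmul hinv, hc]
  · rintro ⟨c, hc, rfl⟩
    refine ⟨(isTwistOrbit_iff τ hmul _).mpr ⟨c, rfl⟩, fun h => hc ?_⟩
    rw [swap_orb τ hmul hinv] at h
    exact orb_inj τ hmul h

end Orbits

section Kernels

variable [Fintype X] [DecidableEq X]

lemma single_eq_smul (x : X) (c : ℂ) : Pi.single x c = c • (Pi.single x 1 : X → ℂ) := by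
  funext z
  by_cases h : z = x <;> simp [Pi.single_apply, h]

lemma dual_apply_expand (φ : Module.Dual ℂ (X → ℂ)) (f : X → ℂ) :
    φ f = ∑ x, φ (Pi.single x 1) * f x := by
  conv_lhs => rw [← Finset.univ_sum_single f]
  rw [map_sum]
  refine Finset.sum_congr rfl fun x _ => ?_
  rw [single_eq_smul, map_smul, smul_eq_mul, mul_comm]

lemma dual_expand (φ : Module.Dual ℂ (X → ℂ)) :
    φ = ∑ x, φ (Pi.single x 1) • (LinearMap.proj x : (X → ℂ) →ₗ[ℂ] ℂ) := by
  apply LinearMap.ext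
  intro f
  rw [dual_apply_expand φ f]
  simp [LinearMap.sum_apply]

/-- The linear equivalence between operators `L(X)' → L(X)` and kernel functions on
`X × X`. -/
noncomputable def Phi : (Module.Dual ℂ (X → ℂ) →ₗ[ℂ] (X → ℂ)) ≃ₗ[ℂ] ((X × X) → ℂ) :=
  LinearEquiv.ofLinear
    { toFun := fun A p => A (LinearMap.proj p.1) p.2
      map_add' := fun A B => rfl
      map_smul' := fun c A => rfl }
    { toFun := fun L =>
        { toFun := fun φ y => ∑ x, φ (Pi.single x 1) * L (x, y)
          map_add' := fun φ ψ => by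
            funext y
            simp [add_mul, Finset.sum_add_distrib]
          map_smul' := fun c φ => by
            funext y
            simp [Finset.mul_sum, mul_assoc] }
      map_add' := fun L M => by
        ext φ y
        simp [mul_add, Finset.sum_add_distrib]
      map_smul' := fun c L => by
        ext φ y
        simp [Finset.mul_sum, mul_left_comm] }
    (by
      apply LinearMap.ext; intro L
      funext p
      simp only [LinearMap.comp_apply, LinearMap.coe_mk, AddHom.coe_mk, LinearMap.id_apply,
        LinearMap.proj_apply]
      simp [Pi.single_apply, ite_mul, Finset.sum_ite_eq])
    (by
      apply LinearMap.ext; intro A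
      apply LinearMap.ext; intro φ
      funext y
      simp only [LinearMap.coe_mk, AddHom.coe_mk, LinearMap.comp_apply, LinearMap.id_apply]
      conv_rhs => rw [dual_expand φ, map_sum]
      simp [Finset.sum_apply])

lemma Phi_apply (A : Module.Dual ℂ (X → ℂ) →ₗ[ℂ] (X → ℂ)) (p : X × X) :
    Phi A p = A (LinearMap.proj p.1) p.2 := rfl

lemma expand_A (A : Module.Dual ℂ (X → ℂ) →ₗ[ℂ] (X → ℂ))
    (χ : Module.Dual ℂ (X → ℂ)) (y : X) :
    A χ y = ∑ x, χ (Pi.single x 1) * A (LinearMap.proj x) y := by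
  conv_lhs => rw [dual_expand χ, map_sum]
  simp [Finset.sum_apply]

end Kernels

section Submods

variable (G)
variable [Fintype X] [DecidableEq X]

/-- Twist-invariant kernel functions. -/
noncomputable def Winv (τ : G → G) : Submodule ℂ ((X × X) → ℂ) where
  carrier := {L | ∀ (g : G) (p : X × X), L (twistAct τ g p) = L p}
  zero_mem' := fun g p => rfl
  add_mem' := by
    intro A B hA hB g p
    simp [hA g p, hB g p]
  smul_mem' := by
    intro c A hA g p
    simp [hA g p]

variable {G}

/-- Swap-symmetric kernel functions. -/
noncomputable def Wsw : Submodule ℂ ((X × X) → ℂ) where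
  carrier := {L | ∀ p : X × X, L p.swap = L p}
  zero_mem' := fun p => rfl
  add_mem' := by
    intro A B hA hB p
    simp [hA p, hB p]
  smul_mem' := by
    intro c A hA p
    simp [hA p]

/-- Swap-antisymmetric kernel functions. -/
noncomputable def Wsk : Submodule ℂ ((X × X) → ℂ) where
  carrier := {L | ∀ p : X × X, L p.swap = -L p}
  zero_mem' := fun p => by simp
  add_mem' := by
    intro A B hA hB p
    simp [hA p, hB p]
    ring
  smul_mem' := by
    intro c A hA p
    simp [hA p]

variable (τ : G → G) (hmul : ∀ a b : G, τ (a * b) = τ b * τ a)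

lemma tauConj_permRep_proj (g : G) (x : X) :
    tauConj (permRep G X) τ hmul g (LinearMap.proj x) = LinearMap.proj ((τ g)⁻¹ • x) := by
  rfl

lemma mem_repHom_iff (A : Module.Dual ℂ (X → ℂ) →ₗ[ℂ] (X → ℂ)) :
    A ∈ repHom (tauConj (permRep G X) τ hmul) (permRep G X) ↔
      Phi A ∈ Winv G (X := X) τ := by
  constructor
  · intro h g p
    obtain ⟨x, y⟩ := p
    have h1 := LinearMap.congr_fun (h g) (LinearMap.proj x)
    simp only [LinearMap.comp_apply] at h1
    rw [tauConj_permRep_proj τ hmul] at h1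
    have h2 := congr_fun h1 (g • y)
    show A (LinearMap.proj (τ g⁻¹ • x)) (g • y) = A (LinearMap.proj x) y
    rw [tau_inv τ hmul, h2]
    show A (LinearMap.proj x) (g⁻¹ • g • y) = A (LinearMap.proj x) y
    rw [inv_smul_smul]
  · intro h g
    apply LinearMap.ext
    intro φ
    rw [dual_expand φ]
    simp only [LinearMap.comp_apply, map_sum, map_smul]
    refine Finset.sum_congr rfl fun x _ => ?_
    congr 1
    rw [tauConj_permRep_proj τ hmul]
    funext y
    have h3 := h g (x, g⁻¹ • y)
    show A (LinearMap.proj ((τ g)⁻¹ • x)) y = A (LinearMap.proj x) (g⁻¹ • y)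
    have h4 : twistAct τ g (x, g⁻¹ • y) = ((τ g)⁻¹ • x, y) := by
      show (τ g⁻¹ • x, g • g⁻¹ • y) = _
      rw [tau_inv τ hmul, smul_inv_smul]
    rw [h4] at h3
    exact h3

lemma mem_symSub_iff_s8 (A : Module.Dual ℂ (X → ℂ) →ₗ[ℂ] (X → ℂ)) :
    A ∈ symSub ℂ (X → ℂ) ↔ Phi A ∈ Wsw (X := X) := by
  constructor
  · intro h p
    exact h (LinearMap.proj p.1) (LinearMap.proj p.2)
  · intro h φ ψ
    have key : ∀ x y : X, A (LinearMap.proj y) x = A (LinearMap.proj x) y :=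
      fun x y => h (x, y)
    calc φ (A ψ)
        = ∑ x, φ (Pi.single x 1) * A ψ x := dual_apply_expand φ (A ψ)
      _ = ∑ x, ∑ y, ψ (Pi.single y 1) * (φ (Pi.single x 1) * A (LinearMap.proj x) y) := by
          refine Finset.sum_congr rfl fun x _ => ?_
          rw [expand_A A ψ x, Finset.mul_sum]
          refine Finset.sum_congr rfl fun y _ => ?_
          rw [key x y]; ring
      _ = ∑ y, ∑ x, ψ (Pi.single y 1) * (φ (Pi.single x 1) * A (LinearMap.proj x) y) :=
          Finset.sum_comm
      _ = ψ (A φ) := by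
          rw [dual_apply_expand ψ (A φ)]
          refine Finset.sum_congr rfl fun y _ => ?_
          rw [expand_A A φ y, Finset.mul_sum]

lemma mem_skewSub_iff_s8 (A : Module.Dual ℂ (X → ℂ) →ₗ[ℂ] (X → ℂ)) :
    A ∈ skewSub ℂ (X → ℂ) ↔ Phi A ∈ Wsk (X := X) := by
  constructor
  · intro h p
    exact h (LinearMap.proj p.1) (LinearMap.proj p.2)
  · intro h φ ψ
    have key : ∀ x y : X, A (LinearMap.proj y) x = -A (LinearMap.proj x) y :=
      fun x y => h (x, y)
    calc φ (A ψ)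
        = ∑ x, φ (Pi.single x 1) * A ψ x := dual_apply_expand φ (A ψ)
      _ = ∑ x, ∑ y, -(ψ (Pi.single y 1) * (φ (Pi.single x 1) * A (LinearMap.proj x) y)) := by
          refine Finset.sum_congr rfl fun x _ => ?_
          rw [expand_A A ψ x, Finset.mul_sum]
          refine Finset.sum_congr rfl fun y _ => ?_
          rw [key x y]; ring
      _ = ∑ y, ∑ x, -(ψ (Pi.single y 1) * (φ (Pi.single x 1) * A (LinearMap.proj x) y)) :=
          Finset.sum_comm
      _ = -ψ (A φ) := by
          rw [dual_apply_expand ψ (A φ)]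
          rw [← Finset.sum_neg_distrib]
          refine Finset.sum_congr rfl fun y _ => ?_
          rw [expand_A A φ y, Finset.mul_sum, ← Finset.sum_neg_distrib]

lemma map_inf_sym :
    Submodule.map (Phi (X := X)).toLinearMap
        (repHom (tauConj (permRep G X) τ hmul) (permRep G X) ⊓ symSub ℂ (X → ℂ)) =
      Winv G (X := X) τ ⊓ Wsw := by
  apply le_antisymm
  · rintro L hL
    obtain ⟨A, hA, rfl⟩ := Submodule.mem_map.mp hL
    obtain ⟨h1, h2⟩ := Submodule.mem_inf.mp hA
    exact Submodule.mem_inf.mpr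
      ⟨(mem_repHom_iff τ hmul A).mp h1, (mem_symSub_iff_s8 A).mp h2⟩
  · intro L hL
    obtain ⟨h1, h2⟩ := Submodule.mem_inf.mp hL
    refine Submodule.mem_map.mpr ⟨Phi.symm L, ?_, Phi.apply_symm_apply L⟩
    have hPhi : Phi ((Phi (X := X)).symm L) = L := Phi.apply_symm_apply L
    refine Submodule.mem_inf.mpr ⟨?_, ?_⟩
    · rw [mem_repHom_iff τ hmul, hPhi]; exact h1
    · rw [mem_symSub_iff_s8, hPhi]; exact h2

lemma map_inf_skew :
    Submodule.map (Phi (X := X)).toLinearMap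
        (repHom (tauConj (permRep G X) τ hmul) (permRep G X) ⊓ skewSub ℂ (X → ℂ)) =
      Winv G (X := X) τ ⊓ Wsk := by
  apply le_antisymm
  · rintro L hL
    obtain ⟨A, hA, rfl⟩ := Submodule.mem_map.mp hL
    obtain ⟨h1, h2⟩ := Submodule.mem_inf.mp hA
    exact Submodule.mem_inf.mpr
      ⟨(mem_repHom_iff τ hmul A).mp h1, (mem_skewSub_iff_s8 A).mp h2⟩
  · intro L hL
    obtain ⟨h1, h2⟩ := Submodule.mem_inf.mp hL
    refine Submodule.mem_map.mpr ⟨Phi.symm L, ?_, Phi.apply_symm_apply L⟩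
    have hPhi : Phi ((Phi (X := X)).symm L) = L := Phi.apply_symm_apply L
    refine Submodule.mem_inf.mpr ⟨?_, ?_⟩
    · rw [mem_repHom_iff τ hmul, hPhi]; exact h1
    · rw [mem_skewSub_iff_s8, hPhi]; exact h2

end Submods

section Descend

variable [Fintype X] [DecidableEq X]
variable (τ : G → G) (hmul : ∀ a b : G, τ (a * b) = τ b * τ a)
  (hinv : ∀ g : G, τ (τ g) = g)

/-- Functions on the quotient invariant under an involution. -/
noncomputable def symFix {Q : Type*} (σ : Q → Q) : Submodule ℂ (Q → ℂ) where
  carrier := {h | ∀ c, h (σ c) = h c}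
  zero_mem' := fun c => rfl
  add_mem' := by
    intro a b ha hb c
    simp [ha c, hb c]
  smul_mem' := by
    intro r a ha c
    simp [ha c]

/-- Functions on the quotient anti-invariant under an involution. -/
noncomputable def skewFix {Q : Type*} (σ : Q → Q) : Submodule ℂ (Q → ℂ) where
  carrier := {h | ∀ c, h (σ c) = -h c}
  zero_mem' := fun c => by simp
  add_mem' := by
    intro a b ha hb c
    simp [ha c, hb c]
    ring
  smul_mem' := by
    intro r a ha c
    simp [ha c]

lemma const_of_mem_Winv {L : (X × X) → ℂ} (hL : L ∈ Winv G (X := X) τ) {p q : X × X}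
    (h : Quotient.mk (tsetoid τ hmul) p = Quotient.mk (tsetoid τ hmul) q) : L p = L q := by
  obtain ⟨g, rfl⟩ := Quotient.exact h
  exact (hL g p).symm

/-- Descent of symmetric invariant kernels to the quotient. -/
noncomputable def E2sym :
    ↥(Winv G (X := X) τ ⊓ Wsw) ≃ₗ[ℂ] ↥(symFix (sbar (X := X) τ hmul hinv)) where
  toFun L := ⟨fun c => L.1 (Quotient.out c), by
    intro c
    obtain ⟨hLi, hLs⟩ := Submodule.mem_inf.mp L.2
    have h1 : Quotient.mk (tsetoid τ hmul) (Quotient.out (sbar τ hmul hinv c)) =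
        Quotient.mk (tsetoid τ hmul) (Prod.swap (Quotient.out c)) := by
      rw [Quotient.out_eq, ← sbar_mk τ hmul hinv, Quotient.out_eq]
    show (L : (X × X) → ℂ) (Quotient.out (sbar τ hmul hinv c)) =
      (L : (X × X) → ℂ) (Quotient.out c)
    rw [const_of_mem_Winv τ hmul hLi h1]
    exact hLs (Quotient.out c)⟩
  map_add' L M := rfl
  map_smul' c L := rfl
  invFun h := (⟨fun p => h.1 (Quotient.mk (tsetoid τ hmul) p), by
    refine Submodule.mem_inf.mpr ⟨?_, ?_⟩
    · intro g p
      show h.1 (Quotient.mk (tsetoid τ hmul) (twistAct τ g p)) = _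
      have hr : (tsetoid (X := X) τ hmul).r p (twistAct τ g p) := ⟨g, rfl⟩
      exact congrArg h.1 (Quotient.sound hr).symm
    · intro p
      show h.1 (Quotient.mk (tsetoid τ hmul) p.swap) = _
      rw [← sbar_mk τ hmul hinv]
      exact h.2 (Quotient.mk (tsetoid τ hmul) p)⟩ : ↥(Winv G (X := X) τ ⊓ Wsw))
  left_inv L := by
    apply Subtype.ext
    funext p
    exact const_of_mem_Winv τ hmul (Submodule.mem_inf.mp L.2).1 (Quotient.out_eq _)
  right_inv h := by
    apply Subtype.ext
    funext c
    show h.1 (Quotient.mk (tsetoid τ hmul) (Quotient.out c)) = h.1 c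
    rw [Quotient.out_eq]

/-- Descent of antisymmetric invariant kernels to the quotient. -/
noncomputable def E2skew :
    ↥(Winv G (X := X) τ ⊓ Wsk) ≃ₗ[ℂ] ↥(skewFix (sbar (X := X) τ hmul hinv)) where
  toFun L := ⟨fun c => L.1 (Quotient.out c), by
    intro c
    obtain ⟨hLi, hLs⟩ := Submodule.mem_inf.mp L.2
    have h1 : Quotient.mk (tsetoid τ hmul) (Quotient.out (sbar τ hmul hinv c)) =
        Quotient.mk (tsetoid τ hmul) (Prod.swap (Quotient.out c)) := by
      rw [Quotient.out_eq, ← sbar_mk τ hmul hinv, Quotient.out_eq]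
    show (L : (X × X) → ℂ) (Quotient.out (sbar τ hmul hinv c)) =
      -(L : (X × X) → ℂ) (Quotient.out c)
    rw [const_of_mem_Winv τ hmul hLi h1]
    exact hLs (Quotient.out c)⟩
  map_add' L M := rfl
  map_smul' c L := rfl
  invFun h := (⟨fun p => h.1 (Quotient.mk (tsetoid τ hmul) p), by
    refine Submodule.mem_inf.mpr ⟨?_, ?_⟩
    · intro g p
      show h.1 (Quotient.mk (tsetoid τ hmul) (twistAct τ g p)) = _
      have hr : (tsetoid (X := X) τ hmul).r p (twistAct τ g p) := ⟨g, rfl⟩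
      exact congrArg h.1 (Quotient.sound hr).symm
    · intro p
      show h.1 (Quotient.mk (tsetoid τ hmul) p.swap) = _
      rw [← sbar_mk τ hmul hinv]
      exact h.2 (Quotient.mk (tsetoid τ hmul) p)⟩ : ↥(Winv G (X := X) τ ⊓ Wsk))
  left_inv L := by
    apply Subtype.ext
    funext p
    exact const_of_mem_Winv τ hmul (Submodule.mem_inf.mp L.2).1 (Quotient.out_eq _)
  right_inv h := by
    apply Subtype.ext
    funext c
    show h.1 (Quotient.mk (tsetoid τ hmul) (Quotient.out c)) = h.1 c
    rw [Quotient.out_eq]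

set_option synthInstance.maxHeartbeats 1000000 in
lemma rank_sym :
    Module.finrank ℂ
        ↥(repHom (tauConj (permRep G X) τ hmul) (permRep G X) ⊓ symSub ℂ (X → ℂ)) =
      Module.finrank ℂ ↥(symFix (sbar (X := X) τ hmul hinv)) := by
  have e1 :=
    (Phi (X := X)).submoduleMap
      (repHom (tauConj (permRep G X) τ hmul) (permRep G X) ⊓ symSub ℂ (X → ℂ))
  rw [map_inf_sym τ hmul] at e1
  exact (e1.trans (E2sym τ hmul hinv)).finrank_eq

set_option synthInstance.maxHeartbeats 1000000 in
lemma rank_skew :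
    Module.finrank ℂ
        ↥(repHom (tauConj (permRep G X) τ hmul) (permRep G X) ⊓ skewSub ℂ (X → ℂ)) =
      Module.finrank ℂ ↥(skewFix (sbar (X := X) τ hmul hinv)) := by
  have e1 :=
    (Phi (X := X)).submoduleMap
      (repHom (tauConj (permRep G X) τ hmul) (permRep G X) ⊓ skewSub ℂ (X → ℂ))
  rw [map_inf_skew τ hmul] at e1
  exact (e1.trans (E2skew τ hmul hinv)).finrank_eq

end Descend

section Invol

variable {Q : Type*} [Finite Q] (σ : Q → Q)

lemma sigma_inj (hσ : ∀ c, σ (σ c) = c) : Function.Injective σ :=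
  Function.LeftInverse.injective hσ

lemma invol_finrank (hσ : ∀ c, σ (σ c) = c) :
    2 * Module.finrank ℂ ↥(symFix σ) =
        2 * {c : Q | σ c = c}.ncard + {c : Q | σ c ≠ c}.ncard ∧
      2 * Module.finrank ℂ ↥(skewFix σ) = {c : Q | σ c ≠ c}.ncard := by
  classical
  cases nonempty_fintype Q
  set e : Q → ℕ := fun c => ((Fintype.equivFin Q) c : ℕ) with he
  have einj : Function.Injective e := fun a b h =>
    (Fintype.equivFin Q).injective (Fin.val_injective h)
  set Fs : Set Q := {c | σ c = c} with hFs
  set Rs : Set Q := {c | e c < e (σ c)} with hRs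
  set Ds : Set Q := {c | σ c = c ∨ e c < e (σ c)} with hDs
  -- basic facts
  have hRne : ∀ c ∈ Rs, σ c ≠ c := by
    intro c hc h
    have hc' : e c < e (σ c) := hc
    rw [h] at hc'
    exact lt_irrefl _ hc'
  have hnotD : ∀ c, c ∉ Ds → σ c ∈ Ds ∧ σ c ≠ c ∧ e (σ c) < e c := by
    intro c hc
    have hc' : ¬(σ c = c ∨ e c < e (σ c)) := hc
    push_neg at hc'
    obtain ⟨h1, h2⟩ := hc'
    have hne : e (σ c) ≠ e c := fun h => h1 (einj h)
    have hlt : e (σ c) < e c := lt_of_le_of_ne h2 hne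
    refine ⟨Or.inr ?_, h1, hlt⟩
    rw [hσ]
    exact hlt
  have hRmem : ∀ c, σ c ≠ c → c ∉ Rs → σ c ∈ Rs := by
    intro c h1 hc
    have hne : e c ≠ e (σ c) := fun h => h1 (einj h).symm
    have hlt : e (σ c) < e c := lt_of_le_of_ne (le_of_not_gt hc) fun h => hne h.symm
    show e (σ c) < e (σ (σ c))
    rw [hσ]
    exact hlt
  -- dimension of the symmetric part
  have hsymrank : Module.finrank ℂ ↥(symFix σ) = Nat.card ↥Ds := by
    have hmemS : ∀ h : Q → ℂ, h ∈ symFix σ ↔ ∀ c, h (σ c) = h c := fun h => Iff.rfl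
    let restr : ↥(symFix σ) →ₗ[ℂ] (↥Ds → ℂ) :=
      { toFun := fun h d => h.1 d.1
        map_add' := fun a b => rfl
        map_smul' := fun a b => rfl }
    have hinj : Function.Injective restr := by
      intro a b hab
      apply Subtype.ext
      funext c
      by_cases hc : c ∈ Ds
      · exact congr_fun hab ⟨c, hc⟩
      · obtain ⟨hD, -, -⟩ := hnotD c hc
        have h1 : a.1 c = a.1 (σ c) := (a.2 c).symm
        have h2 : b.1 c = b.1 (σ c) := (b.2 c).symm
        rw [h1, h2]
        exact congr_fun hab ⟨σ c, hD⟩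
    have hsurj : Function.Surjective restr := by
      intro f
      have hmem : (fun c => if hc : c ∈ Ds then f ⟨c, hc⟩ else f ⟨σ c, (hnotD c hc).1⟩) ∈
          symFix σ := by
        intro c
        by_cases h1 : σ c = c
        · rw [h1]
        · by_cases hc : c ∈ Ds
          · have hcR : e c < e (σ c) := by
              rcases hc with h | h
              · exact absurd h h1
              · exact h
            have hσc : σ c ∉ Ds := by
              intro h
              rcases h with h | h
              · exact h1 (by rw [← hσ c, h, h])
              · rw [hσ] at h
                exact lt_asymm hcR h
            simp only [dif_neg hσc, dif_pos hc]
            have : (⟨σ (σ c), (hnotD (σ c) hσc).1⟩ : ↥Ds) = ⟨c, hc⟩ := Subtype.ext (hσ c)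
            rw [this]
          · have hσc : σ c ∈ Ds := (hnotD c hc).1
            simp only [dif_pos hσc, dif_neg hc]
      refine ⟨⟨_, hmem⟩, ?_⟩
      funext d
      show (if hc : d.1 ∈ Ds then f ⟨d.1, hc⟩ else _) = f d
      rw [dif_pos d.2]
    rw [LinearEquiv.finrank_eq (LinearEquiv.ofBijective restr ⟨hinj, hsurj⟩),
      Module.finrank_fintype_fun_eq_card, Nat.card_eq_fintype_card]
  -- dimension of the antisymmetric part
  have hskewrank : Module.finrank ℂ ↥(skewFix σ) = Nat.card ↥Rs := by
    let restr : ↥(skewFix σ) →ₗ[ℂ] (↥Rs → ℂ) :=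
      { toFun := fun h d => h.1 d.1
        map_add' := fun a b => rfl
        map_smul' := fun a b => rfl }
    have hinj : Function.Injective restr := by
      intro a b hab
      apply Subtype.ext
      funext c
      by_cases h1 : σ c = c
      · have ha : a.1 c = 0 := by
          have := a.2 c
          rw [h1] at this
          have h2 : (2 : ℂ) * a.1 c = 0 := by
            rw [two_mul]
            nth_rewrite 1 [this]
            ring
          exact (mul_eq_zero.mp h2).resolve_left two_ne_zero
        have hb : b.1 c = 0 := by
          have := b.2 c
          rw [h1] at this
          have h2 : (2 : ℂ) * b.1 c = 0 := by
            rw [two_mul]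
            nth_rewrite 1 [this]
            ring
          exact (mul_eq_zero.mp h2).resolve_left two_ne_zero
        rw [ha, hb]
      · by_cases hc : c ∈ Rs
        · exact congr_fun hab ⟨c, hc⟩
        · have hσc : σ c ∈ Rs := hRmem c h1 hc
          have ha : a.1 (σ c) = -a.1 c := a.2 c
          have hb : b.1 (σ c) = -b.1 c := b.2 c
          have hab2 : a.1 (σ c) = b.1 (σ c) := congr_fun hab ⟨σ c, hσc⟩
          rw [ha, hb] at hab2
          exact neg_injective hab2
    have hsurj : Function.Surjective restr := by
      intro f
      have hmem : (fun c => if hc : c ∈ Rs then f ⟨c, hc⟩ else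
          if h1 : σ c = c then 0 else -f ⟨σ c, hRmem c h1 hc⟩) ∈ skewFix σ := by
        intro c
        by_cases h1 : σ c = c
        · by_cases hc : c ∈ Rs
          · exact absurd h1 (hRne c hc)
          · rw [h1]
            simp only [dif_neg hc, dif_pos h1]
            ring
        · by_cases hc : c ∈ Rs
          · have hσc : σ c ∉ Rs := by
              intro h
              show False
              have := h
              rw [show ∀ x, (x ∈ Rs) = (e x < e (σ x)) from fun x => rfl] at this
              rw [hσ] at this
              exact lt_asymm hc this
            have hσ1 : σ (σ c) ≠ σ c := by
              rw [hσ]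
              exact fun h => h1 h.symm
            simp only [dif_neg hσc, dif_neg hσ1, dif_pos hc]
            have : (⟨σ (σ c), hRmem (σ c) hσ1 hσc⟩ : ↥Rs) = ⟨c, hc⟩ := Subtype.ext (hσ c)
            rw [this]
          · have hσc : σ c ∈ Rs := hRmem c h1 hc
            simp only [dif_pos hσc, dif_neg hc, dif_neg h1]
            ring
      refine ⟨⟨_, hmem⟩, ?_⟩
      funext d
      show (if hc : d.1 ∈ Rs then f ⟨d.1, hc⟩ else _) = f d
      rw [dif_pos d.2]
    rw [LinearEquiv.finrank_eq (LinearEquiv.ofBijective restr ⟨hinj, hsurj⟩),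
      Module.finrank_fintype_fun_eq_card, Nat.card_eq_fintype_card]
  -- counting
  have hDcard : Nat.card ↥Ds = Fs.ncard + Rs.ncard := by
    have hunion : Ds = Fs ∪ Rs := rfl
    have hdisj : Disjoint Fs Rs := by
      rw [Set.disjoint_left]
      intro c hcF hcR
      exact hRne c hcR hcF
    rw [Nat.card_coe_set_eq, hunion, Set.ncard_union_eq hdisj (Set.toFinite _) (Set.toFinite _)]
  have hMcard : {c : Q | σ c ≠ c}.ncard = 2 * Rs.ncard := by
    have himg : Set.ncard (σ '' Rs) = Rs.ncard :=
      Set.ncard_image_of_injective Rs (sigma_inj σ hσ)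
    have hunion : {c : Q | σ c ≠ c} = Rs ∪ σ '' Rs := by
      ext c
      simp only [Set.mem_setOf_eq, Set.mem_union, Set.mem_image]
      constructor
      · intro h1
        by_cases hc : c ∈ Rs
        · exact Or.inl hc
        · refine Or.inr ⟨σ c, hRmem c h1 hc, hσ c⟩
      · rintro (h | ⟨d, hd, rfl⟩)
        · exact hRne c h
        · rw [hσ]
          exact fun h => hRne d hd h.symm
    have hdisj : Disjoint Rs (σ '' Rs) := by
      rw [Set.disjoint_left]
      rintro c hcR ⟨d, hd, rfl⟩
      have h1 : e d < e (σ d) := hd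
      have h2 : e (σ d) < e (σ (σ d)) := hcR
      rw [hσ] at h2
      exact lt_asymm h1 h2
    rw [hunion, Set.ncard_union_eq hdisj (Set.toFinite _) (Set.toFinite _), himg, two_mul]
  refine ⟨?_, ?_⟩
  · rw [hsymrank, hDcard, hMcard]
    ring
  · rw [hskewrank, hMcard, Nat.card_coe_set_eq]

end Invol

end CSTAux

/-- For a transitive action of a finite group `G` on a finite set `X`
and an involutory anti-automorphism `τ`, with `m₁` (resp. `m₂`) the number of
`τ`-symmetric (resp. `τ`-antisymmetric) orbits of the action `(π^τ × π)` on `X × X`, we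
have `dim Hom_G^Sym(λ_π^τ, λ_π) = m₁ + m₂/2` and `dim Hom_G^Skew(λ_π^τ, λ_π) = m₂/2`
(stated multiplied by 2 to avoid division). -/
theorem sym_skew_dims_of_permutation
    {G X : Type*} [Group G] [Fintype G] [Fintype X] [MulAction G X]
    [MulAction.IsPretransitive G X]
    (τ : G → G) (hmul : ∀ a b : G, τ (a * b) = τ b * τ a)
    (hinv : ∀ g : G, τ (τ g) = g) :
    2 * Module.finrank ℂ
        ↥(CST.repHom (CST.tauConj (CST.permRep G X) τ hmul) (CST.permRep G X) ⊓
            CST.symSub ℂ (X → ℂ)) =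
      2 * Set.ncard {O : Set (X × X) | CST.IsTwistOrbit τ O ∧ Prod.swap '' O = O} +
        Set.ncard {O : Set (X × X) | CST.IsTwistOrbit τ O ∧ Prod.swap '' O ≠ O} ∧
    2 * Module.finrank ℂ
        ↥(CST.repHom (CST.tauConj (CST.permRep G X) τ hmul) (CST.permRep G X) ⊓
            CST.skewSub ℂ (X → ℂ)) =
      Set.ncard {O : Set (X × X) | CST.IsTwistOrbit τ O ∧ Prod.swap '' O ≠ O} := by
  classical
  have hQfin : Finite (Quotient (CSTAux.tsetoid (X := X) τ hmul)) := Quotient.finite _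
  -- rank identifications
  have hr_sym := CSTAux.rank_sym (G := G) (X := X) τ hmul hinv
  have hr_skew := CSTAux.rank_skew (G := G) (X := X) τ hmul hinv
  -- orbit counting identifications
  have hm1 : {O : Set (X × X) | CST.IsTwistOrbit τ O ∧ Prod.swap '' O = O}.ncard =
      {c | CSTAux.sbar (X := X) τ hmul hinv c = c}.ncard := by
    rw [CSTAux.set_sym_orbits τ hmul hinv,
      Set.ncard_image_of_injective _ (CSTAux.orb_inj τ hmul)]
  have hm2 : {O : Set (X × X) | CST.IsTwistOrbit τ O ∧ Prod.swap '' O ≠ O}.ncard =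
      {c | CSTAux.sbar (X := X) τ hmul hinv c ≠ c}.ncard := by
    rw [CSTAux.set_skew_orbits τ hmul hinv,
      Set.ncard_image_of_injective _ (CSTAux.orb_inj τ hmul)]
  obtain ⟨h1, h2⟩ :=
    CSTAux.invol_finrank (CSTAux.sbar (X := X) τ hmul hinv) (CSTAux.sbar_sbar τ hmul hinv)
  constructor
  · rw [hr_sym, hm1, hm2]
    exact h1
  · rw [hr_skew, hm2]
    exact h2
end

section
/- (Mackey–Gelfand criterion) Let G be a finite group acting transitively on a finite set X via π with point stabilizer K, and let τ be an involutory anti-automorphism of G. Suppose the τ-conjugate permutation representation λ_π^τ is equivalent to λ_π. Then the following are equivalent: (a) dim Hom_G^Skew(λ_π^τ, λ_π) = 0; (b) every orbit of G on X × X under the action (π^τ × π)(g)(x₁,x₂) = (π(τ(g⁻¹))x₁, π(g)x₂) is invariant under the flip (x₁,x₂) ↦ (x₂,x₁); (c) every double coset τ(K)sK in G is τ-invariant; (d) (G,K) is a Gelfand pair and C_τ(σ) = 1 for every irreducible representation σ contained in λ_π. -/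
open Module

namespace MG

open CST Module

section TauBasics

variable {G : Type*} [Group G] (τ : G → G)
variable (hmul : ∀ a b : G, τ (a * b) = τ b * τ a)
variable (hinv : ∀ g : G, τ (τ g) = g)

include hmul in
lemma tau_one : τ 1 = 1 := by
  have h0 : τ 1 = τ 1 * τ 1 := by simpa using hmul 1 1
  have h2 : τ 1 * 1 = τ 1 * τ 1 := by rw [mul_one]; exact h0
  exact (mul_left_cancel h2).symm

include hmul in
lemma tau_inv (g : G) : τ g⁻¹ = (τ g)⁻¹ := by
  have : τ g * τ g⁻¹ = 1 := by
    rw [← hmul g⁻¹ g]; simp [tau_one τ hmul]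
  exact eq_inv_of_mul_eq_one_right this

include hmul hinv in
lemma tau_bijective : Function.Bijective τ :=
  Function.bijective_iff_has_inverse.2 ⟨τ, hinv, hinv⟩

end TauBasics

section Twist

variable {G X : Type*} [Group G] [MulAction G X] (τ : G → G)
variable (hmul : ∀ a b : G, τ (a * b) = τ b * τ a)
variable (hinv : ∀ g : G, τ (τ g) = g)

/-- The twist orbit of a point. -/
def tOrb (p : X × X) : Set (X × X) := {q | ∃ g : G, q = twistAct τ g p}

lemma isTwistOrbit_tOrb (p : X × X) : IsTwistOrbit τ (tOrb τ p) := ⟨p, rfl⟩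

include hmul in
lemma twist_comp (g h : G) (p : X × X) :
    twistAct τ g (twistAct τ h p) = twistAct τ (g * h) p := by
  unfold twistAct
  simp only [Prod.mk.injEq]
  constructor
  · rw [← mul_smul, ← hmul, mul_inv_rev]
  · rw [← mul_smul]

include hmul in
lemma twist_one (p : X × X) : twistAct τ 1 p = p := by
  unfold twistAct
  simp [tau_one τ hmul]

include hmul in
lemma mem_tOrb_self' (p : X × X) : p ∈ tOrb τ p :=
  ⟨1, (twist_one τ hmul p).symm⟩

include hmul in
lemma twist_mem_tOrb (g : G) {q p : X × X} (h : q ∈ tOrb τ p) :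
    twistAct τ g q ∈ tOrb τ p := by
  obtain ⟨h', rfl⟩ := h
  exact ⟨g * h', twist_comp τ hmul g h' p⟩

include hmul in
lemma twist_mem_tOrb_iff (g : G) (q p : X × X) :
    twistAct τ g q ∈ tOrb τ p ↔ q ∈ tOrb τ p := by
  constructor
  · intro h
    have := twist_mem_tOrb τ hmul g⁻¹ h
    rwa [twist_comp τ hmul, inv_mul_cancel, twist_one τ hmul] at this
  · exact twist_mem_tOrb τ hmul g

include hmul in
lemma mem_tOrb_symm {q p : X × X} (h : q ∈ tOrb τ p) : p ∈ tOrb τ q := by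
  obtain ⟨g, rfl⟩ := h
  refine ⟨g⁻¹, ?_⟩
  rw [twist_comp τ hmul, inv_mul_cancel, twist_one τ hmul]

include hmul in
lemma tOrb_eq_of_mem {q p : X × X} (h : q ∈ tOrb τ p) : tOrb τ q = tOrb τ p := by
  ext r
  constructor
  · rintro ⟨g, rfl⟩
    exact twist_mem_tOrb τ hmul g h
  · rintro ⟨g, rfl⟩
    exact twist_mem_tOrb τ hmul g (mem_tOrb_symm τ hmul h)

include hmul hinv in
lemma swap_twist (g : G) (p : X × X) :
    Prod.swap (twistAct τ g p) = twistAct τ (τ g⁻¹) (Prod.swap p) := by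
  have h1 : τ ((τ g⁻¹)⁻¹) = g := by rw [tau_inv τ hmul g, inv_inv, hinv]
  show (g • p.2, τ g⁻¹ • p.1) = (τ ((τ g⁻¹)⁻¹) • p.2, τ g⁻¹ • p.1)
  rw [h1]

include hmul hinv in
lemma swap_tOrb (p : X × X) :
    Prod.swap '' tOrb τ p = tOrb τ (Prod.swap p : X × X) := by
  ext q
  constructor
  · rintro ⟨r, ⟨g, rfl⟩, rfl⟩
    rw [swap_twist τ hmul hinv]
    exact ⟨τ g⁻¹, rfl⟩
  · rintro ⟨g, rfl⟩
    refine ⟨twistAct τ (τ g)⁻¹ p, ⟨(τ g)⁻¹, rfl⟩, ?_⟩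
    have h2 : τ ((τ g)⁻¹)⁻¹ = g := by rw [inv_inv, hinv]
    rw [swap_twist τ hmul hinv, h2]

include hmul hinv in
lemma swap_mem_tOrb_iff (q p : X × X) :
    Prod.swap q ∈ tOrb τ p ↔ q ∈ tOrb τ (Prod.swap p : X × X) := by
  rw [← swap_tOrb τ hmul hinv]
  constructor
  · intro h
    exact ⟨Prod.swap q, h, Prod.swap_swap q⟩
  · rintro ⟨r, hr, rfl⟩
    rwa [Prod.swap_swap]

include hmul hinv in
lemma orbit_symm_iff_pointwise :
    (∀ O : Set (X × X), IsTwistOrbit τ O → Prod.swap '' O = O) ↔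
      ∀ p : X × X, Prod.swap p ∈ tOrb τ p := by
  constructor
  · intro h p
    have := h (tOrb τ p) (isTwistOrbit_tOrb τ p)
    rw [← this]
    exact ⟨p, mem_tOrb_self' τ hmul p, rfl⟩
  · rintro h O ⟨p, rfl⟩
    show Prod.swap '' tOrb τ p = tOrb τ p
    rw [swap_tOrb τ hmul hinv, tOrb_eq_of_mem τ hmul (h p)]

end Twist


section Kernel

variable {X : Type*} [Fintype X] [DecidableEq X]

/-- Evaluation functional. -/
def evl (x : X) : Module.Dual ℂ (X → ℂ) := LinearMap.proj x

@[simp] lemma evl_apply (x : X) (f : X → ℂ) : evl x f = f x := rfl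

lemma single_eq_smul (y : X) (c : ℂ) : Pi.single y c = c • (Pi.single y 1 : X → ℂ) := by
  funext z
  by_cases h : z = y <;> simp [Pi.single_apply, h]

lemma dual_eq_sum (φ : Module.Dual ℂ (X → ℂ)) :
    φ = ∑ y : X, φ (Pi.single y 1) • evl y := by
  apply LinearMap.ext
  intro f
  have hf : f = ∑ y : X, Pi.single y (f y) := (Finset.univ_sum_single f).symm
  calc φ f = φ (∑ y : X, Pi.single y (f y)) := by rw [← hf]
  _ = ∑ y : X, φ (Pi.single y (f y)) := map_sum φ _ _
  _ = ∑ y : X, f y * φ (Pi.single y 1) := by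
      refine Finset.sum_congr rfl fun y _ => ?_
      rw [single_eq_smul, map_smul, smul_eq_mul]
  _ = (∑ y : X, φ (Pi.single y 1) • evl y) f := by
      rw [LinearMap.sum_apply]
      refine Finset.sum_congr rfl fun y _ => ?_
      rw [LinearMap.smul_apply, evl_apply, smul_eq_mul, mul_comm]

lemma dual_apply_eq_sum (φ : Module.Dual ℂ (X → ℂ)) (f : X → ℂ) :
    φ f = ∑ x : X, φ (Pi.single x 1) * f x := by
  conv_lhs => rw [dual_eq_sum φ]
  rw [LinearMap.sum_apply]
  exact Finset.sum_congr rfl fun x _ => by rw [LinearMap.smul_apply, evl_apply, smul_eq_mul]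

lemma op_eq_zero_of_evl (A : Module.Dual ℂ (X → ℂ) →ₗ[ℂ] (X → ℂ))
    (h : ∀ y : X, A (evl y) = 0) : A = 0 := by
  apply LinearMap.ext
  intro φ
  rw [dual_eq_sum φ, map_sum]
  simp [h]

/-- The linear operator with kernel `a`. -/
noncomputable def kerOp (a : X → X → ℂ) : Module.Dual ℂ (X → ℂ) →ₗ[ℂ] (X → ℂ) where
  toFun φ := fun x => ∑ y : X, a x y * φ (Pi.single y 1)
  map_add' φ ψ := by
    funext x
    simp [mul_add, Finset.sum_add_distrib]
  map_smul' c φ := by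
    funext x
    simp only [LinearMap.smul_apply, smul_eq_mul, RingHom.id_apply, Pi.smul_apply]
    rw [Finset.mul_sum]
    exact Finset.sum_congr rfl fun y _ => by ring

lemma kerOp_apply (a : X → X → ℂ) (φ : Module.Dual ℂ (X → ℂ)) (x : X) :
    kerOp a φ x = ∑ y : X, a x y * φ (Pi.single y 1) := rfl

lemma kerOp_evl (a : X → X → ℂ) (y₀ x : X) : kerOp a (evl y₀) x = a x y₀ := by
  rw [kerOp_apply, Finset.sum_eq_single y₀]
  · simp
  · intro b _ hb
    simp [Pi.single_apply, Ne.symm hb]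
  · intro h
    exact absurd (Finset.mem_univ y₀) h

end Kernel

section PermKernel

variable {G X : Type*} [Group G] [MulAction G X] [Fintype X] [DecidableEq X]
variable (τ : G → G)
variable (hmul : ∀ a b : G, τ (a * b) = τ b * τ a)
variable (hinv : ∀ g : G, τ (τ g) = g)

lemma permRep_apply (g : G) (f : X → ℂ) (x : X) : permRep G X g f x = f (g⁻¹ • x) := rfl

lemma tauConj_permRep_evl (g : G) (y : X) :
    tauConj (permRep G X) τ hmul g (evl y) = evl ((τ g)⁻¹ • y) := rfl

lemma permRep_single (g : G) (y : X) :
    permRep G X g (Pi.single y (1 : ℂ)) = Pi.single (g • y) (1 : ℂ) := by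
  funext z
  rw [permRep_apply]
  simp [Pi.single_apply, inv_smul_eq_iff]

lemma hom_kernel_prop {A : Module.Dual ℂ (X → ℂ) →ₗ[ℂ] (X → ℂ)}
    (hA : A ∈ repHom (tauConj (permRep G X) τ hmul) (permRep G X)) (g : G) (x y : X) :
    A (evl ((τ g)⁻¹ • y)) x = A (evl y) (g⁻¹ • x) := by
  have h1 := LinearMap.congr_fun (hA g) (evl y)
  simp only [LinearMap.comp_apply] at h1
  rw [tauConj_permRep_evl] at h1
  exact congrFun congr($h1) x

include hmul in
lemma skew_eq_bot_of_symm (hsym : ∀ p : X × X, Prod.swap p ∈ tOrb τ p) :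
    repHom (tauConj (permRep G X) τ hmul) (permRep G X) ⊓ skewSub ℂ (X → ℂ) = ⊥ := by
  rw [eq_bot_iff]
  rintro A hA
  obtain ⟨hhom, hskew⟩ := Submodule.mem_inf.mp hA
  rw [Submodule.mem_bot]
  apply op_eq_zero_of_evl
  intro y
  funext x
  show A (evl y) x = (0 : X → ℂ) x
  obtain ⟨g, hg⟩ := hsym (x, y)
  have h1 : y = τ g⁻¹ • x := congrArg Prod.fst hg
  have h2 : x = g • y := congrArg Prod.snd hg
  have key : A (evl ((τ g)⁻¹ • x)) (g • y) = A (evl x) y := by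
    have := hom_kernel_prop τ hmul hhom g (g • y) x
    rwa [inv_smul_smul] at this
  have e1 : (τ g)⁻¹ • x = y := by rw [← tau_inv τ hmul g, ← h1]
  have hsymm : A (evl y) x = A (evl x) y := by
    rw [← key, e1, ← h2]
  have hsk : A (evl y) x = - A (evl x) y := by
    have := hskew (evl x) (evl y)
    simpa using this
  have hneg : A (evl y) x = - A (evl y) x := by
    nth_rewrite 1 [hsk]
    rw [← hsymm]
  have h0 : A (evl y) x = 0 := by
    have h2 : (2 : ℂ) * A (evl y) x = 0 := by linear_combination hneg
    exact (mul_eq_zero.mp h2).resolve_left two_ne_zero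
  simpa using h0

include hmul hinv in
lemma exists_skew_of_not_symm (p : X × X) (hp : Prod.swap p ∉ tOrb τ p) :
    ∃ A, A ∈ repHom (tauConj (permRep G X) τ hmul) (permRep G X) ⊓ skewSub ℂ (X → ℂ) ∧
      A ≠ 0 := by
  classical
  set ind : X × X → ℂ := fun q =>
    (if q ∈ tOrb τ p then (1 : ℂ) else 0) -
      (if q ∈ tOrb τ (Prod.swap p : X × X) then (1 : ℂ) else 0) with hind
  have ind_twist : ∀ (g : G) (q : X × X), ind (twistAct τ g q) = ind q := by
    intro g q
    simp only [hind, twist_mem_tOrb_iff τ hmul]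
  have ind_swap : ∀ q : X × X, ind (Prod.swap q) = - ind q := by
    intro q
    have h1 : Prod.swap q ∈ tOrb τ p ↔ q ∈ tOrb τ (Prod.swap p : X × X) :=
      swap_mem_tOrb_iff τ hmul hinv q p
    have h2 : Prod.swap q ∈ tOrb τ (Prod.swap p : X × X) ↔ q ∈ tOrb τ p := by
      rw [swap_mem_tOrb_iff τ hmul hinv, Prod.swap_swap]
    simp only [hind]
    rw [if_congr h1 rfl rfl, if_congr h2 rfl rfl]
    ring
  set a : X → X → ℂ := fun x y => ind (y, x) with ha
  refine ⟨kerOp a, Submodule.mem_inf.mpr ⟨?_, ?_⟩, ?_⟩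
  · -- intertwiner
    intro g
    apply LinearMap.ext
    intro φ
    funext x
    show kerOp a (tauConj (permRep G X) τ hmul g φ) x = permRep G X g (kerOp a φ) x
    rw [kerOp_apply, permRep_apply, kerOp_apply]
    have hstep : ∀ y : X,
        (tauConj (permRep G X) τ hmul g φ) (Pi.single y 1) = φ (Pi.single (τ g • y) 1) := by
      intro y
      show φ (permRep G X (τ g) (Pi.single y 1)) = φ (Pi.single (τ g • y) 1)
      rw [permRep_single]
    calc (∑ y : X, a x y * (tauConj (permRep G X) τ hmul g φ) (Pi.single y 1))
        = ∑ y : X, a x y * φ (Pi.single (τ g • y) 1) := by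
          exact Finset.sum_congr rfl fun y _ => by rw [hstep]
    _ = ∑ z : X, a x ((τ g)⁻¹ • z) * φ (Pi.single z 1) := by
          refine Fintype.sum_equiv (MulAction.toPerm (τ g)) _ _ fun y => ?_
          simp [MulAction.toPerm, inv_smul_smul]
    _ = ∑ y : X, a (g⁻¹ • x) y * φ (Pi.single y 1) := by
          refine Finset.sum_congr rfl fun z _ => ?_
          congr 1
          have hq : twistAct τ g (z, g⁻¹ • x) = ((τ g)⁻¹ • z, x) := by
            show (τ g⁻¹ • z, g • g⁻¹ • x) = ((τ g)⁻¹ • z, x)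
            rw [tau_inv τ hmul, smul_inv_smul]
          calc a x ((τ g)⁻¹ • z) = ind ((τ g)⁻¹ • z, x) := rfl
          _ = ind (twistAct τ g (z, g⁻¹ • x)) := by rw [hq]
          _ = ind (z, g⁻¹ • x) := ind_twist g _
          _ = a (g⁻¹ • x) z := rfl
  · -- skew
    intro φ ψ
    have expand : ∀ (φ ψ : Module.Dual ℂ (X → ℂ)),
        φ (kerOp a ψ) = ∑ x : X, ∑ y : X,
          φ (Pi.single x 1) * (a x y * ψ (Pi.single y 1)) := by
      intro φ ψ
      rw [dual_apply_eq_sum]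
      refine Finset.sum_congr rfl fun x _ => ?_
      rw [kerOp_apply, Finset.mul_sum]
    rw [expand φ ψ, expand ψ φ]
    have h2 : (∑ x : X, ∑ y : X, ψ (Pi.single x 1) * (a x y * φ (Pi.single y 1)))
        = ∑ x : X, ∑ y : X, ψ (Pi.single y 1) * (a y x * φ (Pi.single x 1)) :=
      Finset.sum_comm
    rw [h2]
    apply eq_neg_of_add_eq_zero_left
    rw [← Finset.sum_add_distrib]
    refine Finset.sum_eq_zero fun u _ => ?_
    rw [← Finset.sum_add_distrib]
    refine Finset.sum_eq_zero fun v _ => ?_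
    have hauv : a v u = - a u v := by
      show ind (u, v) = - ind (v, u)
      have : (u, v) = Prod.swap (v, u) := rfl
      rw [this, ind_swap]
    rw [hauv]
    ring
  · -- nonzero
    intro h0
    have h1 : kerOp a (evl p.1) p.2 = a p.2 p.1 := kerOp_evl a p.1 p.2
    rw [h0] at h1
    have h2 : a p.2 p.1 = ind p := by
      show ind (p.1, p.2) = ind p
      rfl
    have h3 : ind p = 1 := by
      have hm : p ∈ tOrb τ p := mem_tOrb_self' τ hmul p
      have hn : p ∉ tOrb τ (Prod.swap p : X × X) := by
        intro hc
        exact hp (mem_tOrb_symm τ hmul hc)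
      simp only [hind]
      rw [if_pos hm, if_neg hn]
      ring
    rw [h2, h3] at h1
    simp at h1

end PermKernel

section AB

variable {G X : Type*} [Group G] [MulAction G X] [Fintype X] [DecidableEq X]
variable (τ : G → G)
variable (hmul : ∀ a b : G, τ (a * b) = τ b * τ a)
variable (hinv : ∀ g : G, τ (τ g) = g)

include hmul hinv in
lemma finrank_skew_zero_iff_pointwise :
    Module.finrank ℂ
        ↥(repHom (tauConj (permRep G X) τ hmul) (permRep G X) ⊓ skewSub ℂ (X → ℂ)) = 0
      ↔ ∀ p : X × X, Prod.swap p ∈ tOrb τ p := by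
  rw [Submodule.finrank_eq_zero]
  constructor
  · intro h p
    by_contra hp
    obtain ⟨A, hA, hA0⟩ := exists_skew_of_not_symm τ hmul hinv p hp
    rw [h, Submodule.mem_bot] at hA
    exact hA0 hA
  · exact skew_eq_bot_of_symm τ hmul

end AB

section BC

variable {G X : Type*} [Group G] [MulAction G X] [MulAction.IsPretransitive G X]
variable (τ : G → G) (x₀ : X)
variable (hmul : ∀ a b : G, τ (a * b) = τ b * τ a)
variable (hinv : ∀ g : G, τ (τ g) = g)

/-- The double coset `τ(K) s K`. -/
def Dset (s : G) : Set G :=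
  {x : G | ∃ a ∈ MulAction.stabilizer G x₀, ∃ b ∈ MulAction.stabilizer G x₀,
      x = τ a * s * b}

include hmul hinv in
lemma tau_image_Dset (s : G) : τ '' Dset τ x₀ s = Dset τ x₀ (τ s) := by
  ext x
  constructor
  · rintro ⟨y, ⟨a, ha, b, hb, rfl⟩, rfl⟩
    refine ⟨b, hb, a, ha, ?_⟩
    rw [hmul, hmul, hinv, mul_assoc]
  · rintro ⟨a, ha, b, hb, rfl⟩
    refine ⟨τ b * s * a, ⟨b, hb, a, ha, rfl⟩, ?_⟩
    rw [hmul, hmul, hinv, mul_assoc]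

include hmul hinv in
lemma Dset_tau_eq_iff (s : G) :
    Dset τ x₀ (τ s) = Dset τ x₀ s ↔ τ s ∈ Dset τ x₀ s := by
  constructor
  · intro h
    rw [← h]
    exact ⟨1, one_mem _, 1, one_mem _, by rw [tau_one τ hmul, one_mul, mul_one]⟩
  · rintro ⟨a, ha, b, hb, hs⟩
    ext x
    constructor
    · rintro ⟨a', ha', b', hb', rfl⟩
      refine ⟨a * a', mul_mem ha ha', b * b', mul_mem hb hb', ?_⟩
      rw [hs, hmul]
      group
    · rintro ⟨a', ha', b', hb', rfl⟩
      refine ⟨a⁻¹ * a', mul_mem (inv_mem ha) ha', b⁻¹ * b', mul_mem (inv_mem hb) hb', ?_⟩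
      have hs' : s = (τ a)⁻¹ * τ s * b⁻¹ := by rw [hs]; group
      rw [hmul, tau_inv τ hmul a]
      calc τ a' * s * b' = τ a' * ((τ a)⁻¹ * τ s * b⁻¹) * b' := by rw [← hs']
      _ = τ a' * (τ a)⁻¹ * τ s * (b⁻¹ * b') := by group
      _ = τ a' * (τ a)⁻¹ * τ s * (b⁻¹ * b') := rfl

include hmul hinv in
lemma pointwise_iff_coset :
    (∀ p : X × X, Prod.swap p ∈ tOrb τ p) ↔ ∀ s : G, τ s ∈ Dset τ x₀ s := by
  constructor
  · intro h s
    -- let u := τ s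
    obtain ⟨u, hu⟩ : ∃ u : G, u = τ s := ⟨τ s, rfl⟩
    obtain ⟨g, hg⟩ := h (u • x₀, x₀)
    have h1 : x₀ = (τ g⁻¹ * u) • x₀ := by
      have := congrArg Prod.fst hg
      simpa [twistAct, mul_smul] using this
    have h2 : u • x₀ = g • x₀ := congrArg Prod.snd hg
    have hbK : u⁻¹ * g ∈ MulAction.stabilizer G x₀ := by
      rw [MulAction.mem_stabilizer_iff, mul_smul, ← h2, inv_smul_smul]
    have haK : τ g⁻¹ * u ∈ MulAction.stabilizer G x₀ := by
      rw [MulAction.mem_stabilizer_iff, ← h1]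
    set a : G := τ g⁻¹ * u with hadef
    set b : G := u⁻¹ * g with hbdef
    refine ⟨b, hbK, a, haK, ?_⟩
    -- goal : τ s = τ b * s * a
    have hgu : g = u * b := by rw [hbdef]; group
    have hstep : a = τ u⁻¹ * τ b⁻¹ * u := by
      rw [hadef]
      have : g⁻¹ = b⁻¹ * u⁻¹ := by rw [hgu]; group
      rw [this, hmul]
    have hu2 : u = τ b * τ u * a := by
      rw [hstep, tau_inv τ hmul b, tau_inv τ hmul u]
      group
    have hsu : s = τ u := by rw [hu, hinv]
    rw [hsu, hinv]
    exact hu2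
  · intro h p
    obtain ⟨w, hw⟩ := MulAction.exists_smul_eq G p.2 x₀
    obtain ⟨u, hu⟩ := MulAction.exists_smul_eq G x₀ (τ w⁻¹ • p.1)
    -- q := twistAct τ w p = (u • x₀, x₀)
    have hq : twistAct τ w p = (u • x₀, x₀) := by
      unfold twistAct
      rw [hw, hu]
    obtain ⟨a, ha, b, hb, hrel⟩ := h (τ u)
    -- hrel : τ (τ u) = τ a * τ u * b, i.e. u = τ a * τ u * b
    rw [hinv] at hrel
    obtain ⟨g, hgdef⟩ : ∃ g : G, g = τ a * τ u := ⟨_, rfl⟩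
    have hg1 : g = u * b⁻¹ := by
      rw [hgdef]
      conv_rhs => rw [hrel]
      group
    have hg2 : τ g⁻¹ = a⁻¹ * u⁻¹ := by
      have h3 : g = τ (u * a) := by rw [hmul, hgdef]
      rw [h3, ← tau_inv τ hmul (u * a), hinv, mul_inv_rev]
    have hswapq : Prod.swap (u • x₀, x₀) ∈ tOrb τ ((u • x₀, x₀) : X × X) := by
      refine ⟨g, ?_⟩
      show ((x₀ : X), u • x₀) = (τ g⁻¹ • (u • x₀), g • x₀)
      have e1 : τ g⁻¹ • (u • x₀) = x₀ := by
        rw [hg2, mul_smul, inv_smul_smul, MulAction.mem_stabilizer_iff.mp (inv_mem ha)]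
      have e2 : g • x₀ = u • x₀ := by
        rw [hg1, mul_smul, MulAction.mem_stabilizer_iff.mp (inv_mem hb)]
      rw [e1, e2]
    -- transport back to p
    have hqmem : (u • x₀, x₀) ∈ tOrb τ p := by
      rw [← hq]; exact ⟨w, rfl⟩
    have horb : tOrb τ ((u • x₀, x₀) : X × X) = tOrb τ p := tOrb_eq_of_mem τ hmul hqmem
    rw [horb] at hswapq
    have : Prod.swap (twistAct τ w p) ∈ tOrb τ p := by rw [hq]; exact hswapq
    rw [swap_twist τ hmul hinv, twist_mem_tOrb_iff τ hmul] at this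
    exact this

end BC

section RepGeneral

variable {G : Type*} [Group G]
variable {V : Type*} [AddCommGroup V] [Module ℂ V]

lemma dual_sep [FiniteDimensional ℂ V] {v w : V}
    (h : ∀ φ : Module.Dual ℂ V, φ v = φ w) : v = w := by
  have h0 : ∀ φ : Module.Dual ℂ V, φ (v - w) = 0 := fun φ => by
    rw [map_sub, h φ, sub_self]
  exact sub_eq_zero.mp ((Module.forall_dual_apply_eq_zero_iff ℂ (v - w)).mp h0)

/-- The "transpose" of an operator `Dual V → V`. -/
noncomputable def flipOp [FiniteDimensional ℂ V] (B : Module.Dual ℂ V →ₗ[ℂ] V) :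
    Module.Dual ℂ V →ₗ[ℂ] V :=
  ((Module.evalEquiv ℂ V).symm.toLinearMap) ∘ₗ B.dualMap

lemma flipOp_apply [FiniteDimensional ℂ V] (B : Module.Dual ℂ V →ₗ[ℂ] V)
    (φ ψ : Module.Dual ℂ V) : φ (flipOp B ψ) = ψ (B φ) := by
  have h1 : Module.evalEquiv ℂ V ((Module.evalEquiv ℂ V).symm (B.dualMap ψ)) = B.dualMap ψ :=
    (Module.evalEquiv ℂ V).apply_symm_apply _
  have h2 : φ ((Module.evalEquiv ℂ V).symm (B.dualMap ψ))
      = (Module.evalEquiv ℂ V ((Module.evalEquiv ℂ V).symm (B.dualMap ψ))) φ := by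
    rw [Module.evalEquiv_apply, Module.Dual.eval_apply]
  calc φ (flipOp B ψ) = φ ((Module.evalEquiv ℂ V).symm (B.dualMap ψ)) := rfl
  _ = (B.dualMap ψ) φ := by rw [h2, h1]
  _ = ψ (B φ) := rfl

variable (ρ : Representation ℂ G V) (τ : G → G)
variable (hmul : ∀ a b : G, τ (a * b) = τ b * τ a)
variable (hinv : ∀ g : G, τ (τ g) = g)

lemma tauConj_apply (g : G) (φ : Module.Dual ℂ V) (v : V) :
    tauConj ρ τ hmul g φ v = φ (ρ (τ g) v) := rfl

lemma mem_repHom_iff {W : Type*} [AddCommGroup W] [Module ℂ W]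
    (σ₁ : Representation ℂ G V) (σ₂ : Representation ℂ G W) (A : V →ₗ[ℂ] W) :
    A ∈ repHom σ₁ σ₂ ↔ ∀ (g : G) (v : V), A (σ₁ g v) = σ₂ g (A v) := by
  constructor
  · intro hA g v
    exact LinearMap.congr_fun (hA g) v
  · intro h g
    apply LinearMap.ext
    intro v
    exact h g v

include hinv in
lemma flipOp_mem_repHom [FiniteDimensional ℂ V] {B : Module.Dual ℂ V →ₗ[ℂ] V}
    (hB : B ∈ repHom (tauConj ρ τ hmul) ρ) :
    flipOp B ∈ repHom (tauConj ρ τ hmul) ρ := by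
  rw [mem_repHom_iff] at hB ⊢
  intro g ψ
  apply dual_sep
  intro φ
  calc φ (flipOp B (tauConj ρ τ hmul g ψ))
      = (tauConj ρ τ hmul g ψ) (B φ) := flipOp_apply B φ _
  _ = ψ (ρ (τ g) (B φ)) := rfl
  _ = ψ (B (tauConj ρ τ hmul (τ g) φ)) := by rw [hB (τ g) φ]
  _ = (tauConj ρ τ hmul (τ g) φ) (flipOp B ψ) := (flipOp_apply B _ ψ).symm
  _ = φ (ρ (τ (τ g)) (flipOp B ψ)) := rfl
  _ = φ (ρ g (flipOp B ψ)) := by rw [hinv]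

lemma mem_symSub_iff [FiniteDimensional ℂ V] (B : Module.Dual ℂ V →ₗ[ℂ] V) :
    B ∈ symSub ℂ V ↔ flipOp B = B := by
  constructor
  · intro h
    apply LinearMap.ext
    intro ψ
    apply dual_sep
    intro φ
    rw [flipOp_apply]
    exact h ψ φ
  · intro h φ ψ
    conv_lhs => rw [← h]
    rw [flipOp_apply]

lemma mem_skewSub_iff [FiniteDimensional ℂ V] (B : Module.Dual ℂ V →ₗ[ℂ] V) :
    B ∈ skewSub ℂ V ↔ flipOp B = -B := by
  constructor
  · intro h
    apply LinearMap.ext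
    intro ψ
    apply dual_sep
    intro φ
    rw [flipOp_apply]
    simp only [LinearMap.neg_apply, map_neg]
    linear_combination h φ ψ
  · intro h φ ψ
    have := LinearMap.congr_fun h ψ
    have h2 : φ (flipOp B ψ) = φ ((-B) ψ) := by rw [this]
    rw [flipOp_apply] at h2
    rw [LinearMap.neg_apply, map_neg] at h2
    rw [← neg_eq_iff_eq_neg] at h2
    rw [← h2]

include hinv in
/-- Any intertwiner decomposes into a symmetric and a skew part. -/
lemma hom_split [FiniteDimensional ℂ V] {B : Module.Dual ℂ V →ₗ[ℂ] V}
    (hB : B ∈ repHom (tauConj ρ τ hmul) ρ) :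
    ∃ B₁ B₂, B₁ ∈ repHom (tauConj ρ τ hmul) ρ ⊓ symSub ℂ V ∧
      B₂ ∈ repHom (tauConj ρ τ hmul) ρ ⊓ skewSub ℂ V ∧ B = B₁ + B₂ := by
  have hflip := flipOp_mem_repHom ρ τ hmul hinv hB
  have hflipadd : ∀ (C D : Module.Dual ℂ V →ₗ[ℂ] V), flipOp (C + D) = flipOp C + flipOp D := by
    intro C D
    apply LinearMap.ext
    intro ψ
    apply dual_sep
    intro φ
    rw [flipOp_apply]
    simp only [LinearMap.add_apply, map_add]
    rw [flipOp_apply, flipOp_apply]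
  have hflipsmul : ∀ (c : ℂ) (C : Module.Dual ℂ V →ₗ[ℂ] V), flipOp (c • C) = c • flipOp C := by
    intro c C
    apply LinearMap.ext
    intro ψ
    apply dual_sep
    intro φ
    rw [flipOp_apply]
    simp only [LinearMap.smul_apply, map_smul, smul_eq_mul]
    rw [flipOp_apply]
  have hflipflip : ∀ (C : Module.Dual ℂ V →ₗ[ℂ] V), flipOp (flipOp C) = C := by
    intro C
    apply LinearMap.ext
    intro ψ
    apply dual_sep
    intro φ
    rw [flipOp_apply, flipOp_apply]
  refine ⟨(2 : ℂ)⁻¹ • (B + flipOp B), (2 : ℂ)⁻¹ • (B - flipOp B),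
    Submodule.mem_inf.mpr ⟨?_, ?_⟩, Submodule.mem_inf.mpr ⟨?_, ?_⟩, ?_⟩
  · exact Submodule.smul_mem _ _ (Submodule.add_mem _ hB hflip)
  · rw [mem_symSub_iff, hflipsmul, hflipadd, hflipflip, add_comm]
  · have : B - flipOp B = B + (-1 : ℂ) • flipOp B := by
      rw [neg_one_smul]
      abel
    rw [this]
    exact Submodule.smul_mem _ _ (Submodule.add_mem _ hB (Submodule.smul_mem _ _ hflip))
  · rw [mem_skewSub_iff]
    have hfl : flipOp (B - flipOp B) = flipOp B - B := by
      have h1 : B - flipOp B = B + (-1 : ℂ) • flipOp B := by rw [neg_one_smul]; abel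
      rw [h1, hflipadd, hflipsmul, hflipflip, neg_one_smul]
      abel
    rw [hflipsmul, hfl]
    module
  · apply LinearMap.ext
    intro ψ
    simp only [LinearMap.add_apply, LinearMap.smul_apply, LinearMap.sub_apply]
    module

lemma sym_inf_skew [FiniteDimensional ℂ V] {B : Module.Dual ℂ V →ₗ[ℂ] V}
    (h1 : B ∈ symSub ℂ V) (h2 : B ∈ skewSub ℂ V) : B = 0 := by
  apply LinearMap.ext
  intro ψ
  have : ∀ φ : Module.Dual ℂ V, φ (B ψ) = 0 := by
    intro φ
    have ha := h1 φ ψ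
    have hb := h2 φ ψ
    have h3 : (2 : ℂ) * φ (B ψ) = 0 := by linear_combination ha + hb
    exact (mul_eq_zero.mp h3).resolve_left two_ne_zero
  rw [LinearMap.zero_apply]
  exact (Module.forall_dual_apply_eq_zero_iff ℂ (B ψ)).mp this

end RepGeneral

section Schur

variable {G : Type*} [Group G]
variable {W₁ W₂ W₃ : Type*} [AddCommGroup W₁] [Module ℂ W₁] [AddCommGroup W₂] [Module ℂ W₂]
  [AddCommGroup W₃] [Module ℂ W₃]
variable {σ₁ : Representation ℂ G W₁} {σ₂ : Representation ℂ G W₂} {σ₃ : Representation ℂ G W₃}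

lemma comp_mem_repHom {A : W₁ →ₗ[ℂ] W₂} {B : W₂ →ₗ[ℂ] W₃}
    (hA : A ∈ repHom σ₁ σ₂) (hB : B ∈ repHom σ₂ σ₃) : B ∘ₗ A ∈ repHom σ₁ σ₃ := by
  rw [mem_repHom_iff] at hA hB ⊢
  intro g v
  simp only [LinearMap.comp_apply, hA g v, hB g (A v)]

lemma equiv_symm_mem_repHom {e : W₁ ≃ₗ[ℂ] W₂}
    (he : (e : W₁ →ₗ[ℂ] W₂) ∈ repHom σ₁ σ₂) :
    (e.symm : W₂ →ₗ[ℂ] W₁) ∈ repHom σ₂ σ₁ := by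
  rw [mem_repHom_iff] at he ⊢
  intro g w
  simp only [LinearEquiv.coe_coe] at he ⊢
  apply e.injective
  rw [e.apply_symm_apply, he g (e.symm w), e.apply_symm_apply]

lemma schur_bijective (h1 : IsIrreducible σ₁) (h2 : IsIrreducible σ₂)
    {A : W₁ →ₗ[ℂ] W₂} (hA : A ∈ repHom σ₁ σ₂) (hA0 : A ≠ 0) : Function.Bijective A := by
  rw [mem_repHom_iff] at hA
  constructor
  · rw [← LinearMap.ker_eq_bot]
    have hinv : ∀ (g : G), ∀ v ∈ LinearMap.ker A, σ₁ g v ∈ LinearMap.ker A := by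
      intro g v hv
      rw [LinearMap.mem_ker] at hv ⊢
      rw [hA g v, hv, map_zero]
    rcases h1.2 (LinearMap.ker A) hinv with h | h
    · exact h
    · exact absurd (LinearMap.ker_eq_top.mp h) hA0
  · rw [← LinearMap.range_eq_top]
    have hinv : ∀ (g : G), ∀ w ∈ LinearMap.range A, σ₂ g w ∈ LinearMap.range A := by
      intro g w hw
      obtain ⟨v, rfl⟩ := LinearMap.mem_range.mp hw
      exact ⟨σ₁ g v, hA g v⟩
    rcases h2.2 (LinearMap.range A) hinv with h | h
    · exact absurd (LinearMap.range_eq_bot.mp h) hA0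
    · exact h

lemma schur_repEquiv (h1 : IsIrreducible σ₁) (h2 : IsIrreducible σ₂)
    {A : W₁ →ₗ[ℂ] W₂} (hA : A ∈ repHom σ₁ σ₂) (hA0 : A ≠ 0) : RepEquiv σ₁ σ₂ := by
  refine ⟨LinearEquiv.ofBijective A (schur_bijective h1 h2 hA hA0), fun g v => ?_⟩
  exact (mem_repHom_iff σ₁ σ₂ A).mp hA g v

lemma repHom_finrank_le_one [FiniteDimensional ℂ W₁] [FiniteDimensional ℂ W₂]
    (h1 : IsIrreducible σ₁) (h2 : IsIrreducible σ₂) :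
    Module.finrank ℂ ↥(repHom σ₁ σ₂) ≤ 1 := by
  by_cases hz : ∀ A ∈ repHom σ₁ σ₂, A = (0 : W₁ →ₗ[ℂ] W₂)
  · have hbot : repHom σ₁ σ₂ = ⊥ := by
      rw [eq_bot_iff]
      intro A hA
      rw [Submodule.mem_bot]
      exact hz A hA
    rw [hbot, finrank_bot]
    norm_num
  · push_neg at hz
    obtain ⟨A, hA, hA0⟩ := hz
    have hbij := schur_bijective h1 h2 hA hA0
    set e := LinearEquiv.ofBijective A hbij with he
    have hAe : ∀ v, e v = A v := fun v => rfl
    have claim : ∀ B ∈ repHom σ₁ σ₂, ∃ c : ℂ, B = c • A := by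
      intro B hB
      have hAhom : (e : W₁ →ₗ[ℂ] W₂) ∈ repHom σ₁ σ₂ := hA
      have hsymHom := equiv_symm_mem_repHom (σ₁ := σ₁) (σ₂ := σ₂) hAhom
      rw [mem_repHom_iff] at hB hsymHom
      simp only [LinearEquiv.coe_coe] at hsymHom
      set E : Module.End ℂ W₂ := B ∘ₗ (e.symm : W₂ →ₗ[ℂ] W₁) with hE
      have hEapp : ∀ w, E w = B (e.symm w) := fun w => rfl
      have hEeq : ∀ (g : G) (w : W₂), E (σ₂ g w) = σ₂ g (E w) := by
        intro g w
        rw [hEapp, hEapp, hsymHom g w, hB g (e.symm w)]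
      have : Nontrivial W₂ := h2.1
      obtain ⟨c, hc⟩ := Module.End.exists_eigenvalue E
      obtain ⟨w, hw⟩ := hc.exists_hasEigenvector
      set K := LinearMap.ker (E - c • (LinearMap.id : Module.End ℂ W₂)) with hK
      have hKinv : ∀ (g : G), ∀ v ∈ K, σ₂ g v ∈ K := by
        intro g v hv
        rw [hK, LinearMap.mem_ker] at hv ⊢
        simp only [LinearMap.sub_apply, LinearMap.smul_apply, LinearMap.id_apply] at hv ⊢
        rw [hEeq g v, ← map_smul, ← map_sub, hv, map_zero]
      have hwK : w ∈ K := by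
        rw [hK, LinearMap.mem_ker]
        simp only [LinearMap.sub_apply, LinearMap.smul_apply, LinearMap.id_apply]
        rw [hw.apply_eq_smul, sub_self]
      rcases h2.2 K hKinv with h | h
      · rw [h] at hwK
        exact absurd (Submodule.mem_bot _ |>.mp hwK) hw.right
      · refine ⟨c, ?_⟩
        apply LinearMap.ext
        intro v
        have hv2 : A v ∈ K := by rw [h]; trivial
        rw [hK, LinearMap.mem_ker] at hv2
        simp only [LinearMap.sub_apply, LinearMap.smul_apply, LinearMap.id_apply] at hv2
        have hEAv : E (A v) = B v := by
          show B (e.symm (e v)) = B v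
          rw [e.symm_apply_apply]
        rw [hEAv, sub_eq_zero] at hv2
        rw [hv2]
        rfl
    have hle : repHom σ₁ σ₂ ≤ Submodule.span ℂ {A} := by
      intro B hB
      obtain ⟨c, hc⟩ := claim B hB
      exact Submodule.mem_span_singleton.mpr ⟨c, hc.symm⟩
    calc Module.finrank ℂ ↥(repHom σ₁ σ₂) ≤ Module.finrank ℂ ↥(Submodule.span ℂ {A}) :=
      Submodule.finrank_mono hle
    _ = 1 := finrank_span_singleton hA0

lemma finrank_pos_of_mem_ne_zero [FiniteDimensional ℂ W₁] {P : Submodule ℂ W₁}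
    {v : W₁} (hv : v ∈ P) (hv0 : v ≠ 0) : 1 ≤ Module.finrank ℂ ↥P := by
  by_contra h
  push_neg at h
  interval_cases hP : Module.finrank ℂ ↥P
  rw [Submodule.finrank_eq_zero] at hP
  rw [hP, Submodule.mem_bot] at hv
  exact hv0 hv

end Schur

section SubAndDual

variable {G : Type*} [Group G]
variable {V : Type*} [AddCommGroup V] [Module ℂ V]
variable (ρ : Representation ℂ G V) (τ : G → G)
variable (hmul : ∀ a b : G, τ (a * b) = τ b * τ a)
variable (hinv : ∀ g : G, τ (τ g) = g)

include hinv in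
lemma tauConj_irreducible {W : Type*} [AddCommGroup W] [Module ℂ W] [FiniteDimensional ℂ W]
    (σ : Representation ℂ G W) (h : IsIrreducible σ) :
    IsIrreducible (tauConj σ τ hmul) := by
  constructor
  · have h1 : 0 < Module.finrank ℂ (Module.Dual ℂ W) := by
      rw [Subspace.dual_finrank_eq]
      exact Module.finrank_pos_iff.mpr h.1
    exact Module.finrank_pos_iff.mp h1
  · intro Z hZ
    have hCinv : ∀ (g : G), ∀ v ∈ Z.dualCoannihilator, σ g v ∈ Z.dualCoannihilator := by
      intro g v hv
      rw [Submodule.mem_dualCoannihilator] at hv ⊢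
      intro φ hφ
      have hmem : tauConj σ τ hmul (τ g) φ ∈ Z := hZ (τ g) φ hφ
      have h2 := hv _ hmem
      rw [tauConj_apply, hinv] at h2
      exact h2
    rcases h.2 Z.dualCoannihilator hCinv with hC | hC
    · right
      have hfin := Subspace.finrank_add_finrank_dualCoannihilator_eq Z
      rw [hC, finrank_bot, add_zero] at hfin
      apply Submodule.eq_top_of_finrank_eq
      rw [hfin, Subspace.dual_finrank_eq]
    · left
      rw [eq_bot_iff]
      intro φ hφ
      rw [Submodule.mem_bot]
      apply LinearMap.ext
      intro v
      rw [LinearMap.zero_apply]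
      have hv : v ∈ Z.dualCoannihilator := by rw [hC]; trivial
      rw [Submodule.mem_dualCoannihilator] at hv
      exact hv φ hφ

lemma subRep_coe {U : Submodule ℂ V} {hU : ∀ (g : G), ∀ v ∈ U, ρ g v ∈ U}
    (g : G) (u : U) : ((subRep ρ U hU g u : U) : V) = ρ g (u : V) := rfl

/-- Restriction of functionals to a submodule. -/
def resDual (U : Submodule ℂ V) : Module.Dual ℂ V →ₗ[ℂ] Module.Dual ℂ ↥U :=
  (U.subtype).dualMap

lemma resDual_apply (U : Submodule ℂ V) (φ : Module.Dual ℂ V) (u : U) :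
    resDual U φ u = φ (u : V) := rfl

lemma resDual_equivariant (U : Submodule ℂ V) (hU : ∀ (g : G), ∀ v ∈ U, ρ g v ∈ U)
    (g : G) (φ : Module.Dual ℂ V) :
    resDual U (tauConj ρ τ hmul g φ) =
      tauConj (subRep ρ U hU) τ hmul g (resDual U φ) := rfl

lemma lift_skew_mem (U : Submodule ℂ V) (hU : ∀ (g : G), ∀ v ∈ U, ρ g v ∈ U)
    {A : Module.Dual ℂ ↥U →ₗ[ℂ] ↥U}
    (hA : A ∈ repHom (tauConj (subRep ρ U hU) τ hmul) (subRep ρ U hU))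
    (hsk : A ∈ skewSub ℂ ↥U) :
    U.subtype ∘ₗ A ∘ₗ resDual U ∈
      repHom (tauConj ρ τ hmul) ρ ⊓ skewSub ℂ V := by
  rw [mem_repHom_iff] at hA
  refine Submodule.mem_inf.mpr ⟨?_, ?_⟩
  · rw [mem_repHom_iff]
    intro g φ
    show (A (resDual U (tauConj ρ τ hmul g φ)) : V) = ρ g (A (resDual U φ) : V)
    rw [resDual_equivariant ρ τ hmul U hU, hA g (resDual U φ)]
    exact subRep_coe ρ g _
  · intro φ ψ
    show φ ((A (resDual U ψ) : U) : V) = - ψ ((A (resDual U φ) : U) : V)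
    have h1 : φ ((A (resDual U ψ) : U) : V) = (resDual U φ) (A (resDual U ψ)) := rfl
    have h2 : ψ ((A (resDual U φ) : U) : V) = (resDual U ψ) (A (resDual U φ)) := rfl
    rw [h1, h2]
    exact hsk (resDual U φ) (resDual U ψ)

lemma lift_skew_ne_zero (U : Submodule ℂ V) {A : Module.Dual ℂ ↥U →ₗ[ℂ] ↥U}
    (hA0 : A ≠ 0) : U.subtype ∘ₗ A ∘ₗ resDual U ≠ 0 := by
  intro hc
  apply hA0
  apply LinearMap.ext
  intro χ
  obtain ⟨φ, hφ⟩ := LinearMap.dualMap_surjective_of_injective U.injective_subtype χ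
  have := LinearMap.congr_fun hc φ
  simp only [LinearMap.comp_apply, LinearMap.zero_apply] at this
  rw [LinearMap.zero_apply, ← hφ]
  exact Subtype.ext this

include hinv in
lemma subRep_tauConj_irreducible {U : Submodule ℂ V} [FiniteDimensional ℂ ↥U]
    {hU : ∀ (g : G), ∀ v ∈ U, ρ g v ∈ U}
    (h : IsIrreducible (subRep ρ U hU)) :
    IsIrreducible (tauConj (subRep ρ U hU) τ hmul) :=
  tauConj_irreducible τ hmul hinv _ h

lemma rho_mul_apply (a b : G) (v : V) : ρ (a * b) v = ρ a (ρ b v) := by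
  rw [map_mul]; rfl

lemma rho_inv_cancel (g : G) (v : V) : ρ g (ρ g⁻¹ v) = v := by
  rw [← rho_mul_apply, mul_inv_cancel, map_one]; rfl

lemma exists_equivariant_proj [Fintype G] (U : Submodule ℂ V)
    (hU : ∀ (g : G), ∀ v ∈ U, ρ g v ∈ U) :
    ∃ π : V →ₗ[ℂ] V, (∀ (g : G) (v : V), π (ρ g v) = ρ g (π v)) ∧
      (∀ v, π v ∈ U) ∧ (∀ v ∈ U, π v = v) := by
  obtain ⟨W, hW⟩ := Submodule.exists_isCompl U
  set p0 : V →ₗ[ℂ] V := U.subtype ∘ₗ (U.projectionOnto W hW) with hp0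
  have hp0U : ∀ v, p0 v ∈ U := fun v => (U.projectionOnto W hW v).2
  have hp0id : ∀ v ∈ U, p0 v = v := by
    intro v hv
    show ((U.projectionOnto W hW v : U) : V) = v
    have h3 : U.projectionOnto W hW v = ⟨v, hv⟩ := by
      have := Submodule.linearProjOfIsCompl_apply_left hW ⟨v, hv⟩
      simpa using this
    rw [h3]
  have hn : (Fintype.card G : ℂ) ≠ 0 := Nat.cast_ne_zero.mpr Fintype.card_ne_zero
  set π : V →ₗ[ℂ] V :=
    (Fintype.card G : ℂ)⁻¹ • ∑ g : G, (ρ g ∘ₗ p0 ∘ₗ ρ g⁻¹ : V →ₗ[ℂ] V) with hπ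
  have happ : ∀ v, π v = (Fintype.card G : ℂ)⁻¹ • ∑ g : G, ρ g (p0 (ρ g⁻¹ v)) := by
    intro v
    rw [hπ]
    simp [LinearMap.sum_apply]
  refine ⟨π, ?_, ?_, ?_⟩
  · intro h v
    rw [happ (ρ h v), happ v, map_smul]
    congr 1
    rw [map_sum]
    refine (Fintype.sum_equiv (Equiv.mulLeft h)
      (fun x => ρ h (ρ x (p0 (ρ x⁻¹ v))))
      (fun y => ρ y (p0 (ρ y⁻¹ (ρ h v)))) (fun x => ?_)).symm
    show ρ h (ρ x (p0 (ρ x⁻¹ v))) = ρ (h * x) (p0 (ρ (h * x)⁻¹ (ρ h v)))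
    rw [mul_inv_rev, rho_mul_apply ρ x⁻¹ h⁻¹, ← rho_mul_apply ρ h⁻¹ h, inv_mul_cancel,
      map_one, Module.End.one_apply, rho_mul_apply ρ h x]
  · intro v
    rw [happ v]
    refine Submodule.smul_mem _ _ (Submodule.sum_mem _ fun g _ => ?_)
    exact hU g _ (hp0U _)
  · intro v hv
    rw [happ v]
    have hterm : ∀ g : G, ρ g (p0 (ρ g⁻¹ v)) = v := by
      intro g
      rw [hp0id _ (hU g⁻¹ v hv), rho_inv_cancel]
    rw [Finset.sum_congr rfl fun g _ => hterm g, Finset.sum_const, Finset.card_univ,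
      ← Nat.cast_smul_eq_nsmul ℂ, smul_smul, inv_mul_cancel₀ hn, one_smul]

end SubAndDual

section RepEquivFacts

variable {G : Type*} [Group G]
variable {W₁ W₂ W₃ : Type*} [AddCommGroup W₁] [Module ℂ W₁] [AddCommGroup W₂] [Module ℂ W₂]
  [AddCommGroup W₃] [Module ℂ W₃]
variable {σ₁ : Representation ℂ G W₁} {σ₂ : Representation ℂ G W₂} {σ₃ : Representation ℂ G W₃}

lemma repEquiv_symm (h : RepEquiv σ₁ σ₂) : RepEquiv σ₂ σ₁ := by
  obtain ⟨e, he⟩ := h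
  refine ⟨e.symm, fun g w => ?_⟩
  apply e.injective
  rw [e.apply_symm_apply, he g (e.symm w), e.apply_symm_apply]

lemma repEquiv_trans (h12 : RepEquiv σ₁ σ₂) (h23 : RepEquiv σ₂ σ₃) : RepEquiv σ₁ σ₃ := by
  obtain ⟨e, he⟩ := h12
  obtain ⟨f, hf⟩ := h23
  exact ⟨e.trans f, fun g v => by
    show f (e (σ₁ g v)) = σ₃ g (f (e v))
    rw [he, hf]⟩

lemma repEquiv_irreducible (h : RepEquiv σ₁ σ₂) (h1 : IsIrreducible σ₁) :
    IsIrreducible σ₂ := by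
  obtain ⟨e, he⟩ := h
  constructor
  · obtain ⟨x, y, hxy⟩ := h1.1
    exact ⟨e x, e y, fun hc => hxy (e.injective hc)⟩
  · intro Z hZ
    have hZ'inv : ∀ (g : G), ∀ v ∈ Z.map (e.symm : W₂ →ₗ[ℂ] W₁), σ₁ g v ∈
        Z.map (e.symm : W₂ →ₗ[ℂ] W₁) := by
      rintro g v ⟨z, hz, rfl⟩
      refine ⟨σ₂ g z, hZ g z hz, ?_⟩
      show e.symm (σ₂ g z) = σ₁ g (e.symm z)
      apply e.injective
      rw [e.apply_symm_apply, he g (e.symm z), e.apply_symm_apply]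
    rcases h1.2 _ hZ'inv with hc | hc
    · left
      rw [eq_bot_iff]
      intro z hz
      have : e.symm z ∈ Z.map (e.symm : W₂ →ₗ[ℂ] W₁) := ⟨z, hz, rfl⟩
      rw [hc, Submodule.mem_bot] at this
      have := congrArg e this
      rw [e.apply_symm_apply, map_zero] at this
      rwa [Submodule.mem_bot]
    · right
      rw [eq_top_iff]
      intro w _
      have hmem : e.symm w ∈ Z.map (e.symm : W₂ →ₗ[ℂ] W₁) := by rw [hc]; trivial
      obtain ⟨z, hz, hez⟩ := hmem
      have hzw : z = w := e.symm.injective hez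
      rwa [← hzw]

end RepEquivFacts

section Decomp

variable {G : Type*} [Group G]
variable {V : Type*} [AddCommGroup V] [Module ℂ V]
variable (ρ : Representation ℂ G V)

lemma iSup_invariant {ι : Sort*} (U : ι → Submodule ℂ V)
    (hU : ∀ i, ∀ (g : G), ∀ v ∈ U i, ρ g v ∈ U i) :
    ∀ (g : G), ∀ v ∈ ⨆ i, U i, ρ g v ∈ ⨆ i, U i := by
  intro g v hv
  refine Submodule.iSup_induction (motive := fun x => ρ g x ∈ ⨆ i, U i) U hv (fun i x hx => ?_) ?_ ?_
  · exact Submodule.mem_iSup_of_mem i (hU i g x hx)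
  · show ρ g 0 ∈ ⨆ i, U i
    rw [map_zero]; exact zero_mem _
  · intro x y hx hy
    show ρ g (x + y) ∈ ⨆ i, U i
    rw [map_add]
    exact add_mem hx hy

lemma biSup_invariant {m : ℕ} (U : Fin m → Submodule ℂ V)
    (hU : ∀ i, ∀ (g : G), ∀ v ∈ U i, ρ g v ∈ U i) (i : Fin m) :
    ∀ (g : G), ∀ v ∈ ⨆ j, ⨆ (_ : j ≠ i), U j, ρ g v ∈ ⨆ j, ⨆ (_ : j ≠ i), U j := by
  apply iSup_invariant
  intro j
  apply iSup_invariant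
  intro _
  exact hU j

lemma linearProj_equivariant {U W : Submodule ℂ V} (h : IsCompl U W)
    (hUinv : ∀ (g : G), ∀ v ∈ U, ρ g v ∈ U) (hWinv : ∀ (g : G), ∀ v ∈ W, ρ g v ∈ W)
    (g : G) (v : V) :
    ((U.projectionOnto W h (ρ g v) : U) : V) =
      ρ g ((U.projectionOnto W h v : U) : V) := by
  set pr := U.projectionOnto W h with hpr
  set w : V := ((W.projectionOnto U h.symm v : W) : V) with hwdef
  have hwW : w ∈ W := (W.projectionOnto U h.symm v).2
  have hv : ((pr v : U) : V) + w = v := Submodule.projection_add_projection_eq_self h v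
  have h1 : ρ g v = ρ g ((pr v : U) : V) + ρ g w := by rw [← map_add, hv]
  have h2 : pr (ρ g ((pr v : U) : V)) = ⟨ρ g ((pr v : U) : V), hUinv g _ (pr v).2⟩ :=
    Submodule.linearProjOfIsCompl_apply_left h ⟨ρ g ((pr v : U) : V), hUinv g _ (pr v).2⟩
  have h3 : pr (ρ g w) = 0 :=
    Submodule.linearProjOfIsCompl_apply_right h ⟨ρ g w, hWinv g w hwW⟩
  rw [h1, map_add, h2, h3, add_zero]

lemma iSup_fin_cons {m : ℕ} (U₀ : Submodule ℂ V) (U : Fin m → Submodule ℂ V) :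
    (⨆ i, Fin.cons U₀ U i) = U₀ ⊔ ⨆ i, U i := by
  apply le_antisymm
  · apply iSup_le
    intro i
    refine Fin.cases ?_ ?_ i
    · rw [Fin.cons_zero]; exact le_sup_left
    · intro j
      rw [Fin.cons_succ]
      exact le_trans (le_iSup U j) le_sup_right
  · apply sup_le
    · simpa using le_iSup (Fin.cons U₀ U) 0
    · apply iSup_le
      intro j
      simpa using le_iSup (Fin.cons U₀ U) j.succ

lemma iSupIndep_fin_cons {m : ℕ} {U₀ : Submodule ℂ V} {U : Fin m → Submodule ℂ V}
    {Wtot : Submodule ℂ V}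
    (hind : iSupIndep U) (hsup : (⨆ i, U i) = Wtot) (hdisj : U₀ ⊓ Wtot = ⊥) :
    iSupIndep (Fin.cons U₀ U) := by
  intro i
  refine Fin.cases ?_ ?_ i
  · rw [Fin.cons_zero]
    have hle : (⨆ j, ⨆ (_ : j ≠ (0 : Fin (m+1))), Fin.cons U₀ U j) ≤ Wtot := by
      apply iSup_le
      intro j
      apply iSup_le
      intro hj
      refine Fin.cases ?_ ?_ j hj
      · intro hj0; exact absurd rfl hj0
      · intro k _
        rw [Fin.cons_succ]
        rw [← hsup]
        exact le_iSup U k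
    exact Disjoint.mono_right hle (disjoint_iff.mpr hdisj)
  · intro k
    rw [Fin.cons_succ]
    set Sk := ⨆ l, ⨆ (_ : l ≠ k), U l with hSk
    have hle : (⨆ j, ⨆ (_ : j ≠ k.succ), Fin.cons U₀ U j) ≤ U₀ ⊔ Sk := by
      apply iSup_le
      intro j
      apply iSup_le
      intro hj
      refine Fin.cases ?_ ?_ j hj
      · intro _; rw [Fin.cons_zero]; exact le_sup_left
      · intro l hl
        rw [Fin.cons_succ]
        have hlk : l ≠ k := fun hc => hl (by rw [hc])
        refine le_trans ?_ le_sup_right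
        exact le_trans (le_iSup (fun _ : l ≠ k => U l) hlk)
          (le_iSup (fun l => ⨆ (_ : l ≠ k), U l) l)
    refine Disjoint.mono_right hle ?_
    have hUkW : U k ≤ Wtot := by rw [← hsup]; exact le_iSup U k
    have hSkW : Sk ≤ Wtot := by
      rw [← hsup]
      apply iSup_le; intro l; apply iSup_le; intro _; exact le_iSup U l
    rw [disjoint_iff]
    have hkey : (U₀ ⊔ Sk) ⊓ Wtot = Sk := by
      rw [sup_comm U₀ Sk, sup_inf_assoc_of_le U₀ hSkW, hdisj, sup_bot_eq]
    calc U k ⊓ (U₀ ⊔ Sk) = U k ⊓ Wtot ⊓ (U₀ ⊔ Sk) := by rw [inf_eq_left.mpr hUkW]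
    _ = U k ⊓ ((U₀ ⊔ Sk) ⊓ Wtot) := by rw [inf_assoc, inf_comm Wtot _]
    _ = U k ⊓ Sk := by rw [hkey]
    _ = ⊥ := disjoint_iff.mp (hind k)

lemma exists_irred_decomp [Fintype G] [FiniteDimensional ℂ V] :
    ∀ (n : ℕ) (Wm : Submodule ℂ V), Module.finrank ℂ Wm ≤ n →
    (∀ (g : G), ∀ v ∈ Wm, ρ g v ∈ Wm) →
    ∃ (m : ℕ) (U : Fin m → Submodule ℂ V)
      (hU : ∀ i, ∀ (g : G), ∀ v ∈ U i, ρ g v ∈ U i),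
      iSupIndep U ∧ (⨆ i, U i) = Wm ∧ ∀ i, IsIrreducible (subRep ρ (U i) (hU i)) := by
  intro n
  induction n with
  | zero =>
    intro Wm hn hWm
    have hbot : Wm = ⊥ := Submodule.finrank_eq_zero.mp (Nat.le_zero.mp hn)
    refine ⟨0, Fin.elim0, fun i => i.elim0, fun i => i.elim0, ?_, fun i => i.elim0⟩
    rw [hbot, iSup_of_empty]
  | succ n ih =>
    intro Wm hn hWm
    by_cases hbot : Wm = ⊥
    · refine ⟨0, Fin.elim0, fun i => i.elim0, fun i => i.elim0, ?_, fun i => i.elim0⟩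
      rw [hbot, iSup_of_empty]
    · set S := {k : ℕ | ∃ U₀ : Submodule ℂ V, (∀ (g : G), ∀ v ∈ U₀, ρ g v ∈ U₀) ∧
        U₀ ≤ Wm ∧ U₀ ≠ ⊥ ∧ Module.finrank ℂ U₀ = k} with hSdef
      have hS : S.Nonempty := ⟨Module.finrank ℂ Wm, Wm, hWm, le_rfl, hbot, rfl⟩
      obtain ⟨U₀, hU₀inv, hU₀le, hU₀ne, hU₀rank⟩ := Nat.sInf_mem hS
      have hmin : ∀ U' : Submodule ℂ V, (∀ (g : G), ∀ v ∈ U', ρ g v ∈ U') → U' ≤ Wm →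
          U' ≠ ⊥ → Module.finrank ℂ U₀ ≤ Module.finrank ℂ U' := by
        intro U' h1 h2 h3
        rw [hU₀rank]
        exact Nat.sInf_le ⟨U', h1, h2, h3, rfl⟩
      have hirr : IsIrreducible (subRep ρ U₀ hU₀inv) := by
        constructor
        · exact Submodule.nontrivial_iff_ne_bot.mpr hU₀ne
        · intro Z hZ
          set Z' := Z.map U₀.subtype with hZ'def
          have hZ'le : Z' ≤ U₀ := Submodule.map_subtype_le U₀ Z
          have hZ'inv : ∀ (g : G), ∀ v ∈ Z', ρ g v ∈ Z' := by
            rintro g v ⟨z, hz, rfl⟩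
            exact ⟨subRep ρ U₀ hU₀inv g z, hZ g z hz, (subRep_coe ρ (hU := hU₀inv) g z)⟩
          by_cases hZbot : Z' = ⊥
          · left
            rw [eq_bot_iff]
            intro z hz
            have : (z : V) ∈ Z' := ⟨z, hz, rfl⟩
            rw [hZbot, Submodule.mem_bot] at this
            rw [Submodule.mem_bot]
            exact Subtype.ext this
          · right
            by_contra hZtop
            have hfr : Module.finrank ℂ Z' = Module.finrank ℂ Z :=
              (LinearEquiv.finrank_eq (Submodule.equivSubtypeMap U₀ Z)).symm
            have hlt : Module.finrank ℂ Z < Module.finrank ℂ ↥U₀ :=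
              Submodule.finrank_lt hZtop
            have hge := hmin Z' hZ'inv (le_trans hZ'le hU₀le) hZbot
            rw [hfr] at hge
            omega
      obtain ⟨π, hπeq, hπU, hπid⟩ := exists_equivariant_proj ρ U₀ hU₀inv
      set W₁ := Wm ⊓ LinearMap.ker π with hW₁def
      have hW₁inv : ∀ (g : G), ∀ v ∈ W₁, ρ g v ∈ W₁ := by
        intro g v hv
        obtain ⟨hv1, hv2⟩ := Submodule.mem_inf.mp hv
        refine Submodule.mem_inf.mpr ⟨hWm g v hv1, ?_⟩
        rw [LinearMap.mem_ker] at hv2 ⊢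
        rw [hπeq g v, hv2, map_zero]
      have hsum : U₀ ⊔ W₁ = Wm := by
        apply le_antisymm
        · exact sup_le hU₀le inf_le_left
        · intro v hv
          have hπvU : π v ∈ U₀ := hπU v
          have hsub : v - π v ∈ W₁ := by
            refine Submodule.mem_inf.mpr ⟨Submodule.sub_mem _ hv (hU₀le hπvU), ?_⟩
            rw [LinearMap.mem_ker, map_sub, hπid (π v) hπvU, sub_self]
          have : v = π v + (v - π v) := by abel
          rw [this]
          exact Submodule.add_mem_sup hπvU hsub
      have hdisj : U₀ ⊓ W₁ = ⊥ := by
        rw [eq_bot_iff]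
        intro v hv
        obtain ⟨hv1, hv2⟩ := Submodule.mem_inf.mp hv
        rw [Submodule.mem_bot]
        have := hπid v hv1
        rw [LinearMap.mem_ker.mp (Submodule.mem_inf.mp hv2).2] at this
        exact this.symm
      have hrankpos : 0 < Module.finrank ℂ ↥U₀ :=
        Module.finrank_pos_iff.mpr (Submodule.nontrivial_iff_ne_bot.mpr hU₀ne)
      have hranksum := Submodule.finrank_sup_add_finrank_inf_eq U₀ W₁
      rw [hsum, hdisj, finrank_bot, add_zero] at hranksum
      have hrank : Module.finrank ℂ W₁ ≤ n := by omega
      obtain ⟨m, U, hU, hindep, hsup, hirrs⟩ := ih W₁ hrank hW₁inv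
      refine ⟨m + 1, Fin.cons U₀ U, fun i => Fin.cases hU₀inv hU i, ?_, ?_, ?_⟩
      · exact iSupIndep_fin_cons hindep hsup hdisj
      · rw [iSup_fin_cons, hsup, hsum]
      · intro i
        refine Fin.cases ?_ ?_ i
        · exact hirr
        · intro j
          exact hirrs j

end Decomp

section MainAD

variable {G : Type*} [Group G]
variable {V : Type*} [AddCommGroup V] [Module ℂ V] [FiniteDimensional ℂ V]
variable (ρ : Representation ℂ G V) (τ : G → G)
variable (hmul : ∀ a b : G, τ (a * b) = τ b * τ a)
variable (hinv : ∀ g : G, τ (τ g) = g)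

include hinv in
lemma all_sym (hsk : repHom (tauConj ρ τ hmul) ρ ⊓ skewSub ℂ V = ⊥)
    {B : Module.Dual ℂ V →ₗ[ℂ] V} (hB : B ∈ repHom (tauConj ρ τ hmul) ρ) :
    B ∈ symSub ℂ V := by
  obtain ⟨B₁, B₂, h1, h2, heq⟩ := hom_split ρ τ hmul hinv hB
  rw [hsk, Submodule.mem_bot] at h2
  rw [heq, h2, add_zero]
  exact (Submodule.mem_inf.mp h1).2

lemma ann_invariant (W : Submodule ℂ V) (hWinv : ∀ (g : G), ∀ v ∈ W, ρ g v ∈ W) :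
    ∀ (g : G), ∀ φ ∈ W.dualAnnihilator, tauConj ρ τ hmul g φ ∈ W.dualAnnihilator := by
  intro g φ hφ
  rw [Submodule.mem_dualAnnihilator] at hφ ⊢
  intro w hw
  rw [tauConj_apply]
  exact hφ _ (hWinv (τ g) w hw)

lemma finrank_ann (U : Submodule ℂ V) :
    Module.finrank ℂ U.dualAnnihilator + Module.finrank ℂ U = Module.finrank ℂ V := by
  rw [← LinearEquiv.finrank_eq (Subspace.quotEquivAnnihilator U)]
  exact Submodule.finrank_quotient_add_finrank U

lemma sym_range_annihilator {B : Module.Dual ℂ V →ₗ[ℂ] V} (hBsym : B ∈ symSub ℂ V)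
    (U' : Submodule ℂ V) (hrange : ∀ ψ, B ψ ∈ U') :
    ∀ φ ∈ U'.dualAnnihilator, B φ = 0 := by
  intro φ hφ
  rw [Submodule.mem_dualAnnihilator] at hφ
  rw [← (Module.forall_dual_apply_eq_zero_iff ℂ (B φ))]
  intro ψ
  rw [hBsym ψ φ]
  exact hφ _ (hrange ψ)

lemma exists_compl_package [Fintype G] (U : Submodule ℂ V)
    (hU : ∀ (g : G), ∀ v ∈ U, ρ g v ∈ U) :
    ∃ W : Submodule ℂ V, IsCompl U W ∧ (∀ (g : G), ∀ v ∈ W, ρ g v ∈ W) := by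
  obtain ⟨π, hπeq, hπU, hπid⟩ := exists_equivariant_proj ρ U hU
  refine ⟨LinearMap.ker π, ⟨?_, ?_⟩, ?_⟩
  · rw [disjoint_iff, eq_bot_iff]
    intro v hv
    obtain ⟨hv1, hv2⟩ := Submodule.mem_inf.mp hv
    rw [Submodule.mem_bot]
    rw [← hπid v hv1]
    exact LinearMap.mem_ker.mp hv2
  · rw [codisjoint_iff, eq_top_iff]
    intro v _
    have h1 : π v ∈ U := hπU v
    have h2 : v - π v ∈ LinearMap.ker π := by
      rw [LinearMap.mem_ker, map_sub, hπid (π v) h1, sub_self]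
    have : v = π v + (v - π v) := by abel
    rw [this]
    exact Submodule.add_mem_sup h1 h2
  · intro g v hv
    rw [LinearMap.mem_ker] at hv ⊢
    rw [hπeq g v, hv, map_zero]

include hinv in
/-- The key consequence of "all intertwiners are symmetric": the image of the
annihilator of an invariant submodule under an equivariant isomorphism is the
invariant complement. -/
lemma map_ann_eq (hsk : repHom (tauConj ρ τ hmul) ρ ⊓ skewSub ℂ V = ⊥)
    {e : Module.Dual ℂ V ≃ₗ[ℂ] V}
    (he : ∀ (g : G) (φ : Module.Dual ℂ V), e (tauConj ρ τ hmul g φ) = ρ g (e φ))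
    {U W : Submodule ℂ V} (hC : IsCompl U W)
    (hUinv : ∀ (g : G), ∀ v ∈ U, ρ g v ∈ U) (hWinv : ∀ (g : G), ∀ v ∈ W, ρ g v ∈ W) :
    Submodule.map (e : Module.Dual ℂ V →ₗ[ℂ] V) U.dualAnnihilator = W := by
  have hehom : (e : Module.Dual ℂ V →ₗ[ℂ] V) ∈ repHom (tauConj ρ τ hmul) ρ := by
    rw [mem_repHom_iff]; intro g φ; exact he g φ
  set pr := U.projectionOnto W hC with hpr
  set q : V →ₗ[ℂ] V := U.subtype ∘ₗ pr with hq
  have hqhom : q ∈ repHom ρ ρ := by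
    rw [mem_repHom_iff]
    intro g v
    exact linearProj_equivariant ρ hC hUinv hWinv g v
  have hqrange : ∀ v, q v ∈ U := fun v => (pr v).2
  have hqker : ∀ v, q v = 0 ↔ v ∈ W := by
    intro v
    rw [hq]
    constructor
    · intro h
      have : pr v = 0 := by
        apply Subtype.ext
        exact h
      rw [← Submodule.linearProjOfIsCompl_ker hC, LinearMap.mem_ker]
      exact this
    · intro h
      have : pr v = 0 := by
        rw [← LinearMap.mem_ker, Submodule.linearProjOfIsCompl_ker hC]
        exact h
      show ((pr v : U) : V) = 0
      rw [this]
      rfl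
  have hB₃sym : q ∘ₗ (e : Module.Dual ℂ V →ₗ[ℂ] V) ∈ symSub ℂ V :=
    all_sym ρ τ hmul hinv hsk (comp_mem_repHom hehom hqhom)
  have hvanish := sym_range_annihilator (B := q ∘ₗ (e : Module.Dual ℂ V →ₗ[ℂ] V))
    hB₃sym U (fun ψ => hqrange _)
  have hle : Submodule.map (e : Module.Dual ℂ V →ₗ[ℂ] V) U.dualAnnihilator ≤ W := by
    rintro _ ⟨φ, hφ, rfl⟩
    rw [← hqker]
    exact hvanish φ hφ
  apply Submodule.eq_of_le_of_finrank_le hle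
  rw [LinearEquiv.finrank_map_eq]
  have h1 := finrank_ann U
  have h2 := Submodule.finrank_add_eq_of_isCompl hC
  omega


include hinv in
lemma multFree_of_skew_bot (hsk : repHom (tauConj ρ τ hmul) ρ ⊓ skewSub ℂ V = ⊥)
    (hequiv : RepEquiv (tauConj ρ τ hmul) ρ) : MultFree ρ := by
  intro m U hU hint hirr i j hij hequivij
  obtain ⟨e, he⟩ := hequiv
  have hehom : (e : Module.Dual ℂ V →ₗ[ℂ] V) ∈ repHom (tauConj ρ τ hmul) ρ := by
    rw [mem_repHom_iff]; intro g φ; exact he g φ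
  obtain ⟨hind, hsup⟩ :=
    (DirectSum.isInternal_submodule_iff_iSupIndep_and_iSup_eq_top U).mp hint
  obtain ⟨f, hf⟩ := hequivij
  set Wi : Submodule ℂ V := ⨆ l, ⨆ (_ : l ≠ i), U l with hWidef
  have hWiinv := biSup_invariant ρ U hU i
  have hCompl : IsCompl (U i) Wi := by
    constructor
    · exact hind i
    · rw [codisjoint_iff, ← hsup, iSup_split_single U i]
  set pr := (U i).projectionOnto Wi hCompl with hprdef
  -- first: map e (ann (U i)) = Wi
  have hmap_i : Submodule.map (e : Module.Dual ℂ V →ₗ[ℂ] V) (U i).dualAnnihilator = Wi :=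
    map_ann_eq ρ τ hmul hinv hsk he hCompl (hU i) hWiinv
  -- second: the cross operator through f
  set Bx : V →ₗ[ℂ] V := (U j).subtype ∘ₗ (f : ↥(U i) →ₗ[ℂ] ↥(U j)) ∘ₗ pr with hBx
  have hprEq : ∀ (g : G) (v : V), pr (ρ g v) = subRep ρ (U i) (hU i) g (pr v) := by
    intro g v
    apply Subtype.ext
    exact linearProj_equivariant ρ hCompl (hU i) hWiinv g v
  have hBxhom : Bx ∈ repHom ρ ρ := by
    rw [mem_repHom_iff]
    intro g v
    show ((f (pr (ρ g v)) : ↥(U j)) : V) = ρ g ((f (pr v) : ↥(U j)) : V)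
    rw [hprEq g v]
    have : f (subRep ρ (U i) (hU i) g (pr v)) = subRep ρ (U j) (hU j) g (f (pr v)) :=
      hf g (pr v)
    rw [this]
    exact subRep_coe ρ (hU := hU j) g (f (pr v))
  have hBxEsym : Bx ∘ₗ (e : Module.Dual ℂ V →ₗ[ℂ] V) ∈ symSub ℂ V :=
    all_sym ρ τ hmul hinv hsk (comp_mem_repHom hehom hBxhom)
  have hvanish := sym_range_annihilator (B := Bx ∘ₗ (e : Module.Dual ℂ V →ₗ[ℂ] V))
    hBxEsym (U j) (fun ψ => ((f (pr (e ψ))) : ↥(U j)).2)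
  have hle : Submodule.map (e : Module.Dual ℂ V →ₗ[ℂ] V) (U j).dualAnnihilator ≤ Wi := by
    rintro _ ⟨φ, hφ, rfl⟩
    have h0 : ((f (pr (e φ)) : ↥(U j)) : V) = 0 := hvanish φ hφ
    have h1 : f (pr (e φ)) = 0 := by
      apply Subtype.ext
      exact h0
    have h2 : pr (e φ) = 0 := by
      rwa [LinearEquiv.map_eq_zero_iff] at h1
    have h3 : e φ ∈ LinearMap.ker pr := LinearMap.mem_ker.mpr h2
    rwa [Submodule.linearProjOfIsCompl_ker hCompl] at h3
  have heqrank : Module.finrank ℂ ↥(U i) = Module.finrank ℂ ↥(U j) :=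
    LinearEquiv.finrank_eq f
  have hmap_j : Submodule.map (e : Module.Dual ℂ V →ₗ[ℂ] V) (U j).dualAnnihilator = Wi := by
    apply Submodule.eq_of_le_of_finrank_le hle
    rw [LinearEquiv.finrank_map_eq]
    have h1 := finrank_ann (U j)
    have h2 := Submodule.finrank_add_eq_of_isCompl hCompl
    omega
  have hanneq : (U i).dualAnnihilator = (U j).dualAnnihilator := by
    have hinj : Function.Injective ⇑(e : Module.Dual ℂ V →ₗ[ℂ] V) := e.injective
    apply Submodule.map_injective_of_injective hinj
    rw [hmap_i, hmap_j]
  have hUeq : U i = U j := by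
    apply le_antisymm
    · exact Subspace.dualAnnihilator_le_dualAnnihilator_iff.mp (le_of_eq hanneq.symm)
    · exact Subspace.dualAnnihilator_le_dualAnnihilator_iff.mp (le_of_eq hanneq)
  have hUjWi : U j ≤ Wi := by
    refine le_trans (le_iSup (fun _ : j ≠ i => U j) (Ne.symm hij))
      (le_iSup (fun l => ⨆ (_ : l ≠ i), U l) j)
  have hdisj : Disjoint (U i) (U j) := Disjoint.mono_right hUjWi (hind i)
  rw [hUeq] at hdisj
  have hbot : U j = ⊥ := disjoint_self.mp hdisj
  have : Nontrivial ↥(U j) := (hirr j).1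
  exact (Submodule.nontrivial_iff_ne_bot.mp this) hbot


include hinv in
lemma sub_skew_bot (hsk : repHom (tauConj ρ τ hmul) ρ ⊓ skewSub ℂ V = ⊥)
    (U : Submodule ℂ V) (hU : ∀ (g : G), ∀ v ∈ U, ρ g v ∈ U) :
    repHom (tauConj (subRep ρ U hU) τ hmul) (subRep ρ U hU) ⊓ skewSub ℂ ↥U = ⊥ := by
  rw [eq_bot_iff]
  intro A hA
  obtain ⟨hAhom, hAskew⟩ := Submodule.mem_inf.mp hA
  rw [Submodule.mem_bot]
  by_contra hA0
  have hmem := lift_skew_mem ρ τ hmul U hU hAhom hAskew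
  rw [hsk, Submodule.mem_bot] at hmem
  exact (lift_skew_ne_zero U hA0) hmem

include hinv in
lemma fsnum_eq_one_of_skew_bot [Fintype G]
    (hsk : repHom (tauConj ρ τ hmul) ρ ⊓ skewSub ℂ V = ⊥)
    (hequiv : RepEquiv (tauConj ρ τ hmul) ρ)
    (U : Submodule ℂ V) (hU : ∀ (g : G), ∀ v ∈ U, ρ g v ∈ U)
    (hirrU : IsIrreducible (subRep ρ U hU)) :
    FSnum (subRep ρ U hU) τ hmul = 1 := by
  obtain ⟨e, he⟩ := hequiv
  obtain ⟨W, hC, hWinv⟩ := exists_compl_package ρ U hU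
  have hannWinv := ann_invariant ρ τ hmul W hWinv
  have hanninf : U.dualAnnihilator ⊓ W.dualAnnihilator = ⊥ := by
    rw [← Submodule.dualAnnihilator_sup_eq, codisjoint_iff.mp hC.codisjoint,
      Submodule.dualAnnihilator_top]
  have hmapW : Submodule.map (e : Module.Dual ℂ V →ₗ[ℂ] V) U.dualAnnihilator = W :=
    map_ann_eq ρ τ hmul hinv hsk he hC hU hWinv
  set r₀ : ↥W.dualAnnihilator →ₗ[ℂ] Module.Dual ℂ ↥U :=
    resDual U ∘ₗ W.dualAnnihilator.subtype with hr₀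
  have hr₀inj : Function.Injective r₀ := by
    apply LinearMap.ker_eq_bot.mp
    rw [eq_bot_iff]
    intro φ hφ
    rw [LinearMap.mem_ker] at hφ
    have hφU : (φ : Module.Dual ℂ V) ∈ U.dualAnnihilator := by
      rw [Submodule.mem_dualAnnihilator]
      intro u hu
      exact LinearMap.congr_fun hφ ⟨u, hu⟩
    have hmem : (φ : Module.Dual ℂ V) ∈ U.dualAnnihilator ⊓ W.dualAnnihilator :=
      ⟨hφU, φ.2⟩
    rw [hanninf, Submodule.mem_bot] at hmem
    rw [Submodule.mem_bot]
    exact Subtype.ext hmem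
  have hfr1 : Module.finrank ℂ ↥W.dualAnnihilator =
      Module.finrank ℂ (Module.Dual ℂ ↥U) := by
    have h1 := finrank_ann W
    have h2 := Submodule.finrank_add_eq_of_isCompl hC
    rw [Subspace.dual_finrank_eq]
    omega
  have hr₀surj := (LinearMap.injective_iff_surjective_of_finrank_eq_finrank hfr1).mp hr₀inj
  have hr₀hom : r₀ ∈ repHom (subRep (tauConj ρ τ hmul) W.dualAnnihilator hannWinv)
      (tauConj (subRep ρ U hU) τ hmul) := by
    rw [mem_repHom_iff]
    intro g φ
    rfl
  set pr := U.projectionOnto W hC with hpr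
  set D : ↥W.dualAnnihilator →ₗ[ℂ] ↥U :=
    pr ∘ₗ (e : Module.Dual ℂ V →ₗ[ℂ] V) ∘ₗ W.dualAnnihilator.subtype with hD
  have hDhom : D ∈ repHom (subRep (tauConj ρ τ hmul) W.dualAnnihilator hannWinv)
      (subRep ρ U hU) := by
    rw [mem_repHom_iff]
    intro g φ
    apply Subtype.ext
    show ((pr (e (tauConj ρ τ hmul g (φ : Module.Dual ℂ V))) : ↥U) : V) =
      ρ g ((pr (e (φ : Module.Dual ℂ V)) : ↥U) : V)
    rw [he g (φ : Module.Dual ℂ V)]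
    exact linearProj_equivariant ρ hC hU hWinv g (e (φ : Module.Dual ℂ V))
  have hDinj : Function.Injective D := by
    apply LinearMap.ker_eq_bot.mp
    rw [eq_bot_iff]
    intro φ hφ
    rw [LinearMap.mem_ker] at hφ
    have h1 : pr (e (φ : Module.Dual ℂ V)) = 0 := hφ
    have h2 : e (φ : Module.Dual ℂ V) ∈ W := by
      have h2a : e (φ : Module.Dual ℂ V) ∈ LinearMap.ker (U.projectionOnto W hC) :=
        LinearMap.mem_ker.mpr h1
      rwa [Submodule.linearProjOfIsCompl_ker hC] at h2a
    have h2' : e (φ : Module.Dual ℂ V) ∈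
        Submodule.map (e : Module.Dual ℂ V →ₗ[ℂ] V) U.dualAnnihilator := by
      rw [hmapW]
      exact h2
    obtain ⟨χ, hχ, hχeq⟩ := h2'
    have hχφ : χ = (φ : Module.Dual ℂ V) := e.injective hχeq
    rw [hχφ] at hχ
    have hmem : (φ : Module.Dual ℂ V) ∈ U.dualAnnihilator ⊓ W.dualAnnihilator :=
      ⟨hχ, φ.2⟩
    rw [hanninf, Submodule.mem_bot] at hmem
    rw [Submodule.mem_bot]
    exact Subtype.ext hmem
  set e₀ := LinearEquiv.ofBijective r₀ ⟨hr₀inj, hr₀surj⟩ with he₀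
  have he₀hom : (e₀ : ↥W.dualAnnihilator →ₗ[ℂ] Module.Dual ℂ ↥U) ∈
      repHom (subRep (tauConj ρ τ hmul) W.dualAnnihilator hannWinv)
        (tauConj (subRep ρ U hU) τ hmul) := hr₀hom
  set Φ := D ∘ₗ (e₀.symm : Module.Dual ℂ ↥U →ₗ[ℂ] ↥W.dualAnnihilator) with hΦ
  have hΦhom : Φ ∈ repHom (tauConj (subRep ρ U hU) τ hmul) (subRep ρ U hU) :=
    comp_mem_repHom (equiv_symm_mem_repHom he₀hom) hDhom
  have hΦne : Φ ≠ 0 := by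
    have hnontriv : Nontrivial (Module.Dual ℂ ↥U) := by
      have hpos : 0 < Module.finrank ℂ (Module.Dual ℂ ↥U) := by
        rw [Subspace.dual_finrank_eq]
        exact Module.finrank_pos_iff.mpr hirrU.1
      exact Module.finrank_pos_iff.mp hpos
    obtain ⟨χ, hχ0⟩ := exists_ne (0 : Module.Dual ℂ ↥U)
    intro hc
    apply hχ0
    have h2 : D (e₀.symm χ) = 0 := by
      have h1 : Φ χ = 0 := by rw [hc]; rfl
      exact h1
    have h3 : e₀.symm χ = 0 := hDinj (by rw [h2, map_zero])
    rw [← e₀.apply_symm_apply χ, h3, map_zero]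
  have hirrtau := tauConj_irreducible τ hmul hinv _ hirrU
  have hle1 := repHom_finrank_le_one hirrtau hirrU
  have hge1 := finrank_pos_of_mem_ne_zero hΦhom hΦne
  have hhom1 : Module.finrank ℂ
      ↥(repHom (tauConj (subRep ρ U hU) τ hmul) (subRep ρ U hU)) = 1 :=
    le_antisymm hle1 hge1
  have hskbot := sub_skew_bot ρ τ hmul hinv hsk U hU
  have hsymall : repHom (tauConj (subRep ρ U hU) τ hmul) (subRep ρ U hU) ⊓ symSub ℂ ↥U =
      repHom (tauConj (subRep ρ U hU) τ hmul) (subRep ρ U hU) := by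
    apply le_antisymm inf_le_left
    intro B hB
    exact Submodule.mem_inf.mpr ⟨hB, all_sym (subRep ρ U hU) τ hmul hinv hskbot hB⟩
  unfold CST.FSnum
  rw [hsymall, hskbot, hhom1, finrank_bot]
  norm_num


include hinv in
lemma fs_conseq {Wsp : Type*} [AddCommGroup Wsp] [Module ℂ Wsp] [FiniteDimensional ℂ Wsp]
    (σ : Representation ℂ G Wsp) (hirr : IsIrreducible σ)
    (hfs : FSnum σ τ hmul = 1) :
    repHom (tauConj σ τ hmul) σ ⊓ skewSub ℂ Wsp = ⊥ ∧
      ∃ A, A ∈ repHom (tauConj σ τ hmul) σ ∧ A ≠ 0 := by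
  unfold CST.FSnum at hfs
  have hPQ : (repHom (tauConj σ τ hmul) σ ⊓ symSub ℂ Wsp) ⊓
      (repHom (tauConj σ τ hmul) σ ⊓ skewSub ℂ Wsp) = ⊥ := by
    rw [eq_bot_iff]
    intro B hB
    rw [Submodule.mem_bot]
    obtain ⟨h1, h2⟩ := Submodule.mem_inf.mp hB
    exact sym_inf_skew (Submodule.mem_inf.mp h1).2 (Submodule.mem_inf.mp h2).2
  have hsum := Submodule.finrank_sup_add_finrank_inf_eq
    (repHom (tauConj σ τ hmul) σ ⊓ symSub ℂ Wsp)
    (repHom (tauConj σ τ hmul) σ ⊓ skewSub ℂ Wsp)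
  rw [hPQ, finrank_bot, add_zero] at hsum
  have hsuple : (repHom (tauConj σ τ hmul) σ ⊓ symSub ℂ Wsp) ⊔
      (repHom (tauConj σ τ hmul) σ ⊓ skewSub ℂ Wsp) ≤ repHom (tauConj σ τ hmul) σ :=
    sup_le inf_le_left inf_le_left
  have hhomle := repHom_finrank_le_one (tauConj_irreducible τ hmul hinv σ hirr) hirr
  have hb : Module.finrank ℂ ↥(repHom (tauConj σ τ hmul) σ ⊓ symSub ℂ Wsp) +
      Module.finrank ℂ ↥(repHom (tauConj σ τ hmul) σ ⊓ skewSub ℂ Wsp) ≤ 1 := by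
    rw [← hsum]
    exact le_trans (Submodule.finrank_mono hsuple) hhomle
  have hP1 : Module.finrank ℂ ↥(repHom (tauConj σ τ hmul) σ ⊓ symSub ℂ Wsp) = 1 ∧
      Module.finrank ℂ ↥(repHom (tauConj σ τ hmul) σ ⊓ skewSub ℂ Wsp) = 0 := by omega
  constructor
  · exact Submodule.finrank_eq_zero.mp hP1.2
  · have hPne : repHom (tauConj σ τ hmul) σ ⊓ symSub ℂ Wsp ≠ ⊥ := by
      intro hc
      rw [hc, finrank_bot] at hP1
      exact absurd hP1.1 one_ne_zero.symm
    obtain ⟨A, hA, hA0⟩ := Submodule.ne_bot_iff _ |>.mp hPne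
    exact ⟨A, (Submodule.mem_inf.mp hA).1, hA0⟩

include hinv in
lemma skew_bot_of_multfree_fs [Fintype G]
    (hMF : MultFree ρ)
    (hFS : ∀ (U : Submodule ℂ V) (hU : ∀ (g : G), ∀ f ∈ U, ρ g f ∈ U),
      IsIrreducible (subRep ρ U hU) → FSnum (subRep ρ U hU) τ hmul = 1) :
    repHom (tauConj ρ τ hmul) ρ ⊓ skewSub ℂ V = ⊥ := by
  obtain ⟨m, U, hU, hind, hsup, hirrs⟩ :=
    exists_irred_decomp ρ (Module.finrank ℂ V) ⊤
      (le_of_eq (finrank_top ℂ V)) (fun g v _ => trivial)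
  have hint : DirectSum.IsInternal U :=
    (DirectSum.isInternal_submodule_iff_iSupIndep_and_iSup_eq_top U).mpr ⟨hind, hsup⟩
  have hMF' := hMF m U hU hint hirrs
  set Wb : Fin m → Submodule ℂ V := fun i => ⨆ l, ⨆ (_ : l ≠ i), U l with hWb
  have hWiinv : ∀ i, ∀ (g : G), ∀ v ∈ Wb i, ρ g v ∈ Wb i := fun i =>
    biSup_invariant ρ U hU i
  have hCompl : ∀ i, IsCompl (U i) (Wb i) := fun i =>
    ⟨hind i, codisjoint_iff.mpr (by rw [← hsup, iSup_split_single U i])⟩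
  set pr : ∀ i, V →ₗ[ℂ] ↥(U i) :=
    fun i => (U i).projectionOnto (Wb i) (hCompl i) with hprdef
  set q : Fin m → (V →ₗ[ℂ] V) := fun i => (U i).subtype ∘ₗ pr i with hqdef
  have hsumq : ∀ v : V, ∑ i, q i v = v := by
    intro v
    have hv : v ∈ ⨆ i, U i := by rw [hsup]; trivial
    refine Submodule.iSup_induction (motive := fun x => ∑ i, q i x = x) U hv ?_ ?_ ?_
    · intro k x hx
      rw [Finset.sum_eq_single k]
      · show ((pr k x : ↥(U k)) : V) = x
        have hl := Submodule.linearProjOfIsCompl_apply_left (hCompl k) ⟨x, hx⟩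
        calc ((pr k x : ↥(U k)) : V) = ((⟨x, hx⟩ : ↥(U k)) : V) := by rw [hl]
        _ = x := rfl
      · intro i _ hik
        show ((pr i x : ↥(U i)) : V) = 0
        have hxW : x ∈ Wb i :=
          (le_trans (le_iSup (fun _ : k ≠ i => U k) (Ne.symm hik))
            (le_iSup (fun l => ⨆ (_ : l ≠ i), U l) k)) hx
        have hr := Submodule.linearProjOfIsCompl_apply_right (hCompl i) ⟨x, hxW⟩
        calc ((pr i x : ↥(U i)) : V) = ((0 : ↥(U i)) : V) := by rw [hr]
        _ = 0 := rfl
      · intro hk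
        exact absurd (Finset.mem_univ k) hk
    · simp
    · intro x y hx hy
      show ∑ i, q i (x + y) = x + y
      simp only [map_add, Finset.sum_add_distrib]
      rw [hx, hy]
  have hannWinv : ∀ i, ∀ (g : G), ∀ φ ∈ (Wb i).dualAnnihilator,
      tauConj ρ τ hmul g φ ∈ (Wb i).dualAnnihilator := fun i =>
    ann_invariant ρ τ hmul (Wb i) (hWiinv i)
  have hanninf : ∀ i, (U i).dualAnnihilator ⊓ (Wb i).dualAnnihilator = ⊥ := fun i => by
    rw [← Submodule.dualAnnihilator_sup_eq, codisjoint_iff.mp (hCompl i).codisjoint,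
      Submodule.dualAnnihilator_top]
  set r₀ : ∀ i, ↥((Wb i).dualAnnihilator) →ₗ[ℂ] Module.Dual ℂ ↥(U i) :=
    fun i => resDual (U i) ∘ₗ (Wb i).dualAnnihilator.subtype with hr₀def
  have hr₀inj : ∀ i, Function.Injective (r₀ i) := by
    intro i
    apply LinearMap.ker_eq_bot.mp
    rw [eq_bot_iff]
    intro φ hφ
    rw [LinearMap.mem_ker] at hφ
    have hφU : (φ : Module.Dual ℂ V) ∈ (U i).dualAnnihilator := by
      rw [Submodule.mem_dualAnnihilator]
      intro u hu
      exact LinearMap.congr_fun hφ ⟨u, hu⟩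
    have hmem : (φ : Module.Dual ℂ V) ∈ (U i).dualAnnihilator ⊓ (Wb i).dualAnnihilator :=
      ⟨hφU, φ.2⟩
    rw [hanninf i, Submodule.mem_bot] at hmem
    rw [Submodule.mem_bot]
    exact Subtype.ext hmem
  have hfr : ∀ i, Module.finrank ℂ ↥((Wb i).dualAnnihilator) =
      Module.finrank ℂ (Module.Dual ℂ ↥(U i)) := by
    intro i
    have h1 := finrank_ann (Wb i)
    have h2 := Submodule.finrank_add_eq_of_isCompl (hCompl i)
    rw [Subspace.dual_finrank_eq]
    omega
  have hr₀surj : ∀ i, Function.Surjective (r₀ i) := fun i =>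
    (LinearMap.injective_iff_surjective_of_finrank_eq_finrank (hfr i)).mp (hr₀inj i)
  have hr₀hom : ∀ i, r₀ i ∈ repHom
      (subRep (tauConj ρ τ hmul) ((Wb i).dualAnnihilator) (hannWinv i))
      (tauConj (subRep ρ (U i) (hU i)) τ hmul) := by
    intro i
    rw [mem_repHom_iff]
    intro g φ
    rfl
  set e₀ : ∀ i, ↥((Wb i).dualAnnihilator) ≃ₗ[ℂ] Module.Dual ℂ ↥(U i) :=
    fun i => LinearEquiv.ofBijective (r₀ i) ⟨hr₀inj i, hr₀surj i⟩ with he₀def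
  have hAnnEquiv : ∀ i, RepEquiv
      (subRep (tauConj ρ τ hmul) ((Wb i).dualAnnihilator) (hannWinv i))
      (tauConj (subRep ρ (U i) (hU i)) τ hmul) := fun i =>
    ⟨e₀ i, fun g φ => (mem_repHom_iff _ _ _).mp (hr₀hom i) g φ⟩
  have hAnnIrr : ∀ i, IsIrreducible
      (subRep (tauConj ρ τ hmul) ((Wb i).dualAnnihilator) (hannWinv i)) := fun i =>
    repEquiv_irreducible (repEquiv_symm (hAnnEquiv i))
      (tauConj_irreducible τ hmul hinv _ (hirrs i))
  have hcons := fun i => fs_conseq τ hmul hinv (subRep ρ (U i) (hU i)) (hirrs i)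
    (hFS (U i) (hU i) (hirrs i))
  have hTauEquiv : ∀ i, RepEquiv (tauConj (subRep ρ (U i) (hU i)) τ hmul)
      (subRep ρ (U i) (hU i)) := by
    intro i
    obtain ⟨A, hA, hA0⟩ := (hcons i).2
    exact schur_repEquiv (tauConj_irreducible τ hmul hinv _ (hirrs i)) (hirrs i) hA hA0
  rw [eq_bot_iff]
  intro B hB
  obtain ⟨hBhom, hBskew⟩ := Submodule.mem_inf.mp hB
  have hBpt := (mem_repHom_iff _ _ _).mp hBhom
  rw [Submodule.mem_bot]
  set Cop : ∀ i k, ↥((Wb k).dualAnnihilator) →ₗ[ℂ] ↥(U i) :=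
    fun i k => pr i ∘ₗ B ∘ₗ (Wb k).dualAnnihilator.subtype with hCop
  have hChom : ∀ i k, Cop i k ∈ repHom
      (subRep (tauConj ρ τ hmul) ((Wb k).dualAnnihilator) (hannWinv k))
      (subRep ρ (U i) (hU i)) := by
    intro i k
    rw [mem_repHom_iff]
    intro g φ
    apply Subtype.ext
    show ((pr i (B (tauConj ρ τ hmul g (φ : Module.Dual ℂ V))) : ↥(U i)) : V) =
      ρ g ((pr i (B (φ : Module.Dual ℂ V)) : ↥(U i)) : V)
    rw [hBpt g (φ : Module.Dual ℂ V)]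
    exact linearProj_equivariant ρ (hCompl i) (hU i) (hWiinv i) g (B (φ : Module.Dual ℂ V))
  have hCzero_off : ∀ i k, i ≠ k → Cop i k = 0 := by
    intro i k hik
    by_contra hC0
    have h1 : RepEquiv (subRep (tauConj ρ τ hmul) ((Wb k).dualAnnihilator) (hannWinv k))
        (subRep ρ (U i) (hU i)) :=
      schur_repEquiv (hAnnIrr k) (hirrs i) (hChom i k) hC0
    have h2 : RepEquiv (subRep ρ (U i) (hU i)) (subRep ρ (U k) (hU k)) :=
      repEquiv_trans (repEquiv_symm h1)
        (repEquiv_trans (hAnnEquiv k) (hTauEquiv k))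
    exact hMF' i k hik h2
  have hkey : ∀ (k : Fin m) (φ ψ : ↥((Wb k).dualAnnihilator)),
      (φ : Module.Dual ℂ V) (B (ψ : Module.Dual ℂ V)) =
        (φ : Module.Dual ℂ V) (q k (B (ψ : Module.Dual ℂ V))) := by
    intro k φ ψ
    conv_lhs => rw [← hsumq (B (ψ : Module.Dual ℂ V))]
    rw [map_sum, Finset.sum_eq_single k]
    · intro i _ hik
      have hz : Cop i k ψ = 0 := by rw [hCzero_off i k hik]; rfl
      have hz2 : q i (B (ψ : Module.Dual ℂ V)) = 0 := by
        show ((pr i (B (ψ : Module.Dual ℂ V)) : ↥(U i)) : V) = 0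
        have : ((Cop i k ψ : ↥(U i)) : V) = 0 := by rw [hz]; rfl
        exact this
      rw [hz2, map_zero]
    · intro hk
      exact absurd (Finset.mem_univ k) hk
  have hCdiag : ∀ k, Cop k k = 0 := by
    intro k
    set Φk := Cop k k ∘ₗ ((e₀ k).symm : Module.Dual ℂ ↥(U k) →ₗ[ℂ] ↥((Wb k).dualAnnihilator))
      with hΦk
    have he₀hom : ((e₀ k) : ↥((Wb k).dualAnnihilator) →ₗ[ℂ] Module.Dual ℂ ↥(U k)) ∈
        repHom (subRep (tauConj ρ τ hmul) ((Wb k).dualAnnihilator) (hannWinv k))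
          (tauConj (subRep ρ (U k) (hU k)) τ hmul) := hr₀hom k
    have hΦhom : Φk ∈ repHom (tauConj (subRep ρ (U k) (hU k)) τ hmul)
        (subRep ρ (U k) (hU k)) :=
      comp_mem_repHom (equiv_symm_mem_repHom he₀hom) (hChom k k)
    have heval : ∀ χ : Module.Dual ℂ ↥(U k), ∀ η : Module.Dual ℂ ↥(U k),
        χ (Φk η) = (((e₀ k).symm χ : ↥((Wb k).dualAnnihilator)) : Module.Dual ℂ V)
          (B (((e₀ k).symm η : ↥((Wb k).dualAnnihilator)) : Module.Dual ℂ V)) := by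
      intro χ η
      have hχ : χ = r₀ k ((e₀ k).symm χ) := ((e₀ k).apply_symm_apply χ).symm
      calc χ (Φk η) = (r₀ k ((e₀ k).symm χ)) (Cop k k ((e₀ k).symm η)) := by
            rw [← hχ]; rfl
      _ = (((e₀ k).symm χ : ↥((Wb k).dualAnnihilator)) : Module.Dual ℂ V)
            (q k (B (((e₀ k).symm η : ↥((Wb k).dualAnnihilator)) : Module.Dual ℂ V))) := rfl
      _ = _ := (hkey k _ _).symm
    have hΦskew : Φk ∈ skewSub ℂ ↥(U k) := by
      intro χ η
      rw [heval χ η, heval η χ]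
      exact hBskew _ _
    have hΦmem : Φk ∈ repHom (tauConj (subRep ρ (U k) (hU k)) τ hmul)
        (subRep ρ (U k) (hU k)) ⊓ skewSub ℂ ↥(U k) := Submodule.mem_inf.mpr ⟨hΦhom, hΦskew⟩
    rw [(hcons k).1, Submodule.mem_bot] at hΦmem
    apply LinearMap.ext
    intro φ
    have h1 : Cop k k φ = Φk (e₀ k φ) := by
      rw [hΦk]
      show Cop k k φ = Cop k k ((e₀ k).symm (e₀ k φ))
      rw [(e₀ k).symm_apply_apply]
    rw [h1, hΦmem]
    rfl
  have hBann : ∀ (k : Fin m) (φ : ↥((Wb k).dualAnnihilator)),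
      B (φ : Module.Dual ℂ V) = 0 := by
    intro k φ
    rw [← hsumq (B (φ : Module.Dual ℂ V))]
    apply Finset.sum_eq_zero
    intro i _
    show ((pr i (B (φ : Module.Dual ℂ V)) : ↥(U i)) : V) = 0
    by_cases hik : i = k
    · subst hik
      have hz : Cop i i φ = 0 := by rw [hCdiag i]; rfl
      have : ((Cop i i φ : ↥(U i)) : V) = 0 := by rw [hz]; rfl
      exact this
    · have hz : Cop i k φ = 0 := by rw [hCzero_off i k hik]; rfl
      have : ((Cop i k φ : ↥(U i)) : V) = 0 := by rw [hz]; rfl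
      exact this
  apply LinearMap.ext
  intro φ
  rw [LinearMap.zero_apply]
  have hmemann : ∀ k, φ ∘ₗ q k ∈ (Wb k).dualAnnihilator := by
    intro k
    rw [Submodule.mem_dualAnnihilator]
    intro w hw
    show φ (q k w) = 0
    have hpr0 : pr k w = 0 := Submodule.linearProjOfIsCompl_apply_right (hCompl k) ⟨w, hw⟩
    have hqk : q k w = 0 := by
      show ((pr k w : ↥(U k)) : V) = 0
      rw [hpr0]
      rfl
    rw [hqk, map_zero]
  have hφdecomp : φ = ∑ k, φ ∘ₗ q k := by
    apply LinearMap.ext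
    intro v
    rw [LinearMap.sum_apply]
    calc φ v = φ (∑ i, q i v) := by rw [hsumq]
    _ = ∑ i, φ (q i v) := map_sum φ _ _
    _ = ∑ k, (φ ∘ₗ q k) v := rfl
  rw [hφdecomp, map_sum]
  apply Finset.sum_eq_zero
  intro k _
  exact hBann k ⟨φ ∘ₗ q k, hmemann k⟩

end MainAD

end MG

/-- **Mackey–Gelfand criterion.** Assuming `λ_π^τ ∼ λ_π`, the following
are equivalent: (a) `dim Hom_G^Skew(λ_π^τ, λ_π) = 0`; (b) every `(π^τ × π)`-orbit on
`X × X` is symmetric; (c) every double coset `τ(K)sK` is `τ`-invariant; (d) `(G,K)` is a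
Gelfand pair and `C_τ(σ) = 1` for every irreducible subrepresentation `σ` of `λ_π`. -/
theorem mackey_gelfand_criterion
    {G X : Type*} [Group G] [Fintype G] [Fintype X] [MulAction G X]
    [MulAction.IsPretransitive G X] (x₀ : X)
    (τ : G → G) (hmul : ∀ a b : G, τ (a * b) = τ b * τ a)
    (hinv : ∀ g : G, τ (τ g) = g)
    (hequiv : CST.RepEquiv (CST.tauConj (CST.permRep G X) τ hmul) (CST.permRep G X)) :
    (Module.finrank ℂ
        ↥(CST.repHom (CST.tauConj (CST.permRep G X) τ hmul) (CST.permRep G X) ⊓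
            CST.skewSub ℂ (X → ℂ)) = 0 ↔
      ∀ O : Set (X × X), CST.IsTwistOrbit τ O → Prod.swap '' O = O) ∧
    (Module.finrank ℂ
        ↥(CST.repHom (CST.tauConj (CST.permRep G X) τ hmul) (CST.permRep G X) ⊓
            CST.skewSub ℂ (X → ℂ)) = 0 ↔
      ∀ s : G,
        τ '' {x : G | ∃ a ∈ MulAction.stabilizer G x₀, ∃ b ∈ MulAction.stabilizer G x₀,
                x = τ a * s * b} =
          {x : G | ∃ a ∈ MulAction.stabilizer G x₀, ∃ b ∈ MulAction.stabilizer G x₀,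
                x = τ a * s * b}) ∧
    (Module.finrank ℂ
        ↥(CST.repHom (CST.tauConj (CST.permRep G X) τ hmul) (CST.permRep G X) ⊓
            CST.skewSub ℂ (X → ℂ)) = 0 ↔
      CST.MultFree (CST.permRep G X) ∧
        ∀ (U : Submodule ℂ (X → ℂ)) (hU : ∀ (g : G), ∀ f ∈ U, CST.permRep G X g f ∈ U),
          CST.IsIrreducible (CST.subRep (CST.permRep G X) U hU) →
          CST.FSnum (CST.subRep (CST.permRep G X) U hU) τ hmul = 1) := by
  classical
  have hAB : Module.finrank ℂ
      ↥(CST.repHom (CST.tauConj (CST.permRep G X) τ hmul) (CST.permRep G X) ⊓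
          CST.skewSub ℂ (X → ℂ)) = 0 ↔
      ∀ O : Set (X × X), CST.IsTwistOrbit τ O → Prod.swap '' O = O := by
    rw [MG.finrank_skew_zero_iff_pointwise τ hmul hinv]
    exact (MG.orbit_symm_iff_pointwise τ hmul hinv).symm
  refine ⟨hAB, ?_, ?_⟩
  · rw [MG.finrank_skew_zero_iff_pointwise τ hmul hinv,
      MG.pointwise_iff_coset τ x₀ hmul hinv]
    constructor
    · intro h s
      show τ '' MG.Dset τ x₀ s = MG.Dset τ x₀ s
      rw [MG.tau_image_Dset τ x₀ hmul hinv s]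
      exact (MG.Dset_tau_eq_iff τ x₀ hmul hinv s).mpr (h s)
    · intro h s
      apply (MG.Dset_tau_eq_iff τ x₀ hmul hinv s).mp
      rw [← MG.tau_image_Dset τ x₀ hmul hinv s]
      exact h s
  · constructor
    · intro h
      have hbot : CST.repHom (CST.tauConj (CST.permRep G X) τ hmul) (CST.permRep G X) ⊓
          CST.skewSub ℂ (X → ℂ) = ⊥ := Submodule.finrank_eq_zero.mp h
      exact ⟨MG.multFree_of_skew_bot (CST.permRep G X) τ hmul hinv hbot hequiv,
        fun U hU hirr =>
          MG.fsnum_eq_one_of_skew_bot (CST.permRep G X) τ hmul hinv hbot hequiv U hU hirr⟩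
    · rintro ⟨hMF, hFS⟩
      rw [Submodule.finrank_eq_zero]
      exact MG.skew_bot_of_multfree_fs (CST.permRep G X) τ hmul hinv hMF hFS
end
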